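/- arXiv:2505.09072 — 15 statements merged into one kernel-verified Lean document; each statement's English description precedes it below -/
import Mathlib

section
/- There exist constants τ₁ᵉ and τ₂ᵉ with τ₁ᵃ < τ₁ᵉ < τ₁ⁱ and τ₂ⁱ < τ₂ᵉ < τ₂ᵃ such that p'(τ₁ᵉ) = p'(τ₂ᵉ) = (2h(τ₁ᵉ) − 2h(τ₂ᵉ))/((τ₁ᵉ)² − (τ₂ᵉ)²) (existence of a double-sonic pair, Proposition 1.1, existence part). -/
open Set

lemma contOn_of_strictMonoOn_surjOn {f : ℝ → ℝ} {a b : ℝ}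
    (hm : StrictMonoOn f (Icc a b))
    (hs : SurjOn f (Icc a b) (Icc (f a) (f b))) :
    ContinuousOn f (Icc a b) := by
  intro x hx
  obtain ⟨hax, hxb⟩ := hx
  have hab : a ≤ b := hax.trans hxb
  have hr : x < b → ContinuousWithinAt f (Ici x) x := by
    intro hlt
    refine hm.continuousWithinAt_right_of_exists_between
      (Icc_mem_nhdsGE_of_mem ⟨hax, hlt⟩) ?_
    intro c hc
    have hfxb : f x < f b := hm ⟨hax, hxb⟩ (right_mem_Icc.2 hab) hlt
    have hfax : f a ≤ f x := hm.monotoneOn (left_mem_Icc.2 hab) ⟨hax, hxb⟩ hax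
    obtain ⟨y, hy, hfy⟩ := hs (⟨le_min (hfax.trans hc.le) (hfax.trans hfxb.le),
      min_le_right _ _⟩ : min c (f b) ∈ Icc (f a) (f b))
    exact ⟨y, hy, hfy ▸ ⟨lt_min hc hfxb, min_le_left _ _⟩⟩
  have hl : a < x → ContinuousWithinAt f (Iic x) x := by
    intro hlt
    refine hm.continuousWithinAt_left_of_exists_between
      (Icc_mem_nhdsLE_of_mem ⟨hlt, hxb⟩) ?_
    intro c hc
    have hfax : f a < f x := hm (left_mem_Icc.2 hab) ⟨hax, hxb⟩ hlt
    have hfxb : f x ≤ f b := hm.monotoneOn ⟨hax, hxb⟩ (right_mem_Icc.2 hab) hxb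
    obtain ⟨y, hy, hfy⟩ := hs (⟨le_max_right _ _,
      max_le (hc.le.trans hfxb) (hfax.le.trans hfxb)⟩ :
      max c (f a) ∈ Icc (f a) (f b))
    exact ⟨y, hy, hfy ▸ ⟨le_max_left _ _, max_lt hc hfax⟩⟩
  rcases eq_or_lt_of_le hax with h1 | h1
  · rcases eq_or_lt_of_le hxb with h2 | h2
    · subst h1; subst h2
      rw [Icc_self]
      exact continuousWithinAt_singleton
    · exact (hr h2).mono (fun y hy => h1 ▸ hy.1)
  · rcases eq_or_lt_of_le hxb with h2 | h2
    · exact (hl h1).mono (fun y hy => h2 ▸ hy.2)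
    · exact ((hl h1).union (hr h2)).mono (fun y _ => le_total y x)

theorem statement_0
    (p p' p'' h : ℝ → ℝ)
    (hderiv1 : ∀ τ : ℝ, 1 < τ → HasDerivAt p (p' τ) τ)
    (hderiv2 : ∀ τ : ℝ, 1 < τ → HasDerivAt p' (p'' τ) τ)
    (hcont : ContinuousOn p'' (Set.Ioi 1))
    (hderivh : ∀ τ : ℝ, 1 < τ → HasDerivAt h (τ * p' τ) τ)
    (τ1i τ2i : ℝ) (hτ1i : 1 < τ1i) (hτi : τ1i < τ2i)
    (hp'neg : ∀ τ : ℝ, 1 < τ → p' τ < 0)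
    (hpp1 : ∀ τ ∈ Set.Ioo 1 τ1i, 0 < p'' τ)
    (hpp2 : ∀ τ : ℝ, τ2i < τ → 0 < p'' τ)
    (hpp3 : ∀ τ ∈ Set.Ioo τ1i τ2i, p'' τ < 0)
    (τ1a τ2a : ℝ) (hτ1a : τ1a ∈ Set.Ioo 1 τ1i) (hτ2a : τ2i < τ2a)
    (hpa1 : p' τ1a = p' τ2i) (hpa2 : p' τ2a = p' τ1i) :
    ∃ τ1e τ2e : ℝ, τ1a < τ1e ∧ τ1e < τ1i ∧ τ2i < τ2e ∧ τ2e < τ2a ∧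
      p' τ1e = p' τ2e ∧
      p' τ1e = (2 * h τ1e - 2 * h τ2e) / (τ1e ^ 2 - τ2e ^ 2) := by
  obtain ⟨h1τ1a, hτ1aτ1i⟩ := hτ1a
  have h1τ2i : 1 < τ2i := hτ1i.trans hτi
  have h1τ2a : 1 < τ2a := h1τ2i.trans hτ2a
  have hcp' : ∀ x : ℝ, 1 < x → ContinuousAt p' x := fun x hx => (hderiv2 x hx).continuousAt
  have hch : ∀ x : ℝ, 1 < x → ContinuousAt h x := fun x hx => (hderivh x hx).continuousAt
  have M1 : StrictMonoOn p' (Set.Icc τ1a τ1i) := by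
    apply strictMonoOn_of_deriv_pos (convex_Icc _ _)
    · exact fun x hx => (hcp' x (h1τ1a.trans_le hx.1)).continuousWithinAt
    · intro x hx
      rw [interior_Icc] at hx
      rw [(hderiv2 x (h1τ1a.trans hx.1)).deriv]
      exact hpp1 x ⟨h1τ1a.trans hx.1, hx.2⟩
  have M2 : StrictAntiOn p' (Set.Icc τ1i τ2i) := by
    apply strictAntiOn_of_deriv_neg (convex_Icc _ _)
    · exact fun x hx => (hcp' x (hτ1i.trans_le hx.1)).continuousWithinAt
    · intro x hx
      rw [interior_Icc] at hx
      rw [(hderiv2 x (hτ1i.trans hx.1)).deriv]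
      exact hpp3 x hx
  have M3 : StrictMonoOn p' (Set.Icc τ2i τ2a) := by
    apply strictMonoOn_of_deriv_pos (convex_Icc _ _)
    · exact fun x hx => (hcp' x (h1τ2i.trans_le hx.1)).continuousWithinAt
    · intro x hx
      rw [interior_Icc] at hx
      rw [(hderiv2 x (h1τ2i.trans hx.1)).deriv]
      exact hpp2 x hx.1
  have hs01 : p' τ1a < p' τ1i :=
    M1 (Set.left_mem_Icc.2 hτ1aτ1i.le) (Set.right_mem_Icc.2 hτ1aτ1i.le) hτ1aτ1i
  have cont1 : ContinuousOn p' (Set.Icc τ1a τ1i) :=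
    fun x hx => (hcp' x (h1τ1a.trans_le hx.1)).continuousWithinAt
  have SurjA : Set.SurjOn p' (Set.Icc τ1a τ1i) (Set.Icc (p' τ1a) (p' τ1i)) :=
    intermediate_value_Icc hτ1aτ1i.le cont1
  set A := Function.invFunOn p' (Set.Icc τ1a τ1i) with hA
  have hAmem : ∀ s ∈ Set.Icc (p' τ1a) (p' τ1i), A s ∈ Set.Icc τ1a τ1i := by
    intro s hs
    obtain ⟨y, hy, hfy⟩ := SurjA hs
    exact Function.invFunOn_mem ⟨y, hy, hfy⟩
  have hAval : ∀ s ∈ Set.Icc (p' τ1a) (p' τ1i), p' (A s) = s := by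
    intro s hs
    obtain ⟨y, hy, hfy⟩ := SurjA hs
    exact Function.invFunOn_eq ⟨y, hy, hfy⟩
  have hinj := M1.injOn
  have hmems0 : p' τ1a ∈ Set.Icc (p' τ1a) (p' τ1i) := Set.left_mem_Icc.2 hs01.le
  have hmems1 : p' τ1i ∈ Set.Icc (p' τ1a) (p' τ1i) := Set.right_mem_Icc.2 hs01.le
  have hAs0 : A (p' τ1a) = τ1a :=
    hinj (hAmem _ hmems0) (Set.left_mem_Icc.2 hτ1aτ1i.le) (hAval _ hmems0)
  have hAs1 : A (p' τ1i) = τ1i :=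
    hinj (hAmem _ hmems1) (Set.right_mem_Icc.2 hτ1aτ1i.le) (hAval _ hmems1)
  have AM : StrictMonoOn A (Set.Icc (p' τ1a) (p' τ1i)) := by
    intro s hs t ht hst
    by_contra hc
    push_neg at hc
    have hle := M1.monotoneOn (hAmem t ht) (hAmem s hs) hc
    rw [hAval s hs, hAval t ht] at hle
    exact absurd hst (not_lt.2 hle)
  have SurjA' : Set.SurjOn A (Set.Icc (p' τ1a) (p' τ1i)) (Set.Icc τ1a τ1i) := by
    intro t ht
    have hpt : p' t ∈ Set.Icc (p' τ1a) (p' τ1i) :=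
      ⟨M1.monotoneOn (Set.left_mem_Icc.2 hτ1aτ1i.le) ht ht.1,
       M1.monotoneOn ht (Set.right_mem_Icc.2 hτ1aτ1i.le) ht.2⟩
    exact ⟨p' t, hpt, hinj (hAmem _ hpt) ht (hAval _ hpt)⟩
  have hAcont : ContinuousOn A (Set.Icc (p' τ1a) (p' τ1i)) :=
    contOn_of_strictMonoOn_surjOn AM (by rw [hAs0, hAs1]; exact SurjA')
  have mapsTo3 : ∀ t ∈ Set.Icc τ2i τ2a, p' t ∈ Set.Icc (p' τ1a) (p' τ1i) := by
    intro t ht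
    constructor
    · rw [hpa1]
      exact M3.monotoneOn (Set.left_mem_Icc.2 hτ2a.le) ht ht.1
    · rw [← hpa2]
      exact M3.monotoneOn ht (Set.right_mem_Icc.2 hτ2a.le) ht.2
  set G : ℝ → ℝ := fun t => 2 * h (A (p' t)) - 2 * h t - p' t * ((A (p' t)) ^ 2 - t ^ 2)
    with hGdef
  have cont3 : ContinuousOn p' (Set.Icc τ2i τ2a) :=
    fun x hx => (hcp' x (h1τ2i.trans_le hx.1)).continuousWithinAt
  have contAp : ContinuousOn (fun t => A (p' t)) (Set.Icc τ2i τ2a) :=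
    hAcont.comp cont3 mapsTo3
  have conth1 : ContinuousOn h (Set.Icc τ1a τ1i) :=
    fun x hx => (hch x (h1τ1a.trans_le hx.1)).continuousWithinAt
  have conth2 : ContinuousOn h (Set.Icc τ2i τ2a) :=
    fun x hx => (hch x (h1τ2i.trans_le hx.1)).continuousWithinAt
  have conthAp : ContinuousOn (fun t => h (A (p' t))) (Set.Icc τ2i τ2a) :=
    conth1.comp contAp (fun t ht => hAmem _ (mapsTo3 t ht))
  have hGcont : ContinuousOn G (Set.Icc τ2i τ2a) := by
    apply ContinuousOn.sub
    · exact (continuousOn_const.mul conthAp).sub (continuousOn_const.mul conth2)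
    · exact cont3.mul ((contAp.pow 2).sub (continuous_id.continuousOn.pow 2))
  have hd : ∀ s : ℝ, ∀ x : ℝ, 1 < x →
      HasDerivAt (fun τ => 2 * h τ - s * τ ^ 2) (2 * (x * p' x) - s * (2 * x)) x := by
    intro s x hx
    have h1 := (hderivh x hx).const_mul 2
    have h2 := (hasDerivAt_pow 2 x).const_mul s
    have h3 := h1.sub h2
    exact h3.congr_deriv (by norm_num)
  have hτ1aτ2i : τ1a < τ2i := hτ1aτ1i.trans hτi
  have hτ1iτ2a : τ1i < τ2a := hτi.trans hτ2a
  have gmono : StrictMonoOn (fun τ => 2 * h τ - (p' τ1a) * τ ^ 2) (Set.Icc τ1a τ2i) := by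
    apply strictMonoOn_of_deriv_pos (convex_Icc _ _)
    · intro x hx
      exact ((hd (p' τ1a) x (h1τ1a.trans_le hx.1)).continuousAt).continuousWithinAt
    · intro x hx
      rw [interior_Icc] at hx
      have h1x : 1 < x := h1τ1a.trans hx.1
      rw [(hd (p' τ1a) x h1x).deriv]
      have hps : p' τ1a < p' x := by
        rcases le_or_gt x τ1i with hle | hlt
        · exact M1 (Set.left_mem_Icc.2 hτ1aτ1i.le) ⟨hx.1.le, hle⟩ hx.1
        · have h2 := M2 ⟨hlt.le, hx.2.le⟩ (Set.right_mem_Icc.2 hτi.le) hx.2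
          rw [hpa1]
          exact h2
      nlinarith [mul_pos (show (0:ℝ) < x by linarith) (sub_pos.2 hps)]
  have ganti : StrictAntiOn (fun τ => 2 * h τ - (p' τ1i) * τ ^ 2) (Set.Icc τ1i τ2a) := by
    apply strictAntiOn_of_deriv_neg (convex_Icc _ _)
    · intro x hx
      exact ((hd (p' τ1i) x (hτ1i.trans_le hx.1)).continuousAt).continuousWithinAt
    · intro x hx
      rw [interior_Icc] at hx
      have h1x : 1 < x := hτ1i.trans hx.1
      rw [(hd (p' τ1i) x h1x).deriv]
      have hps : p' x < p' τ1i := by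
        rcases le_or_gt x τ2i with hle | hlt
        · exact M2 (Set.left_mem_Icc.2 hτi.le) ⟨hx.1.le, hle⟩ hx.1
        · rw [← hpa2]
          exact M3 ⟨hlt.le, hx.2.le⟩ (Set.right_mem_Icc.2 hτ2a.le) hx.2
      nlinarith [mul_pos (show (0:ℝ) < x by linarith) (sub_pos.2 hps)]
  have hGτ2i : G τ2i < 0 := by
    have hg : 2 * h τ1a - (p' τ1a) * τ1a ^ 2 < 2 * h τ2i - (p' τ1a) * τ2i ^ 2 :=
      gmono (Set.left_mem_Icc.2 hτ1aτ2i.le) (Set.right_mem_Icc.2 hτ1aτ2i.le) hτ1aτ2i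
    have e2 : A (p' τ2i) = τ1a := by rw [← hpa1]; exact hAs0
    show 2 * h (A (p' τ2i)) - 2 * h τ2i - p' τ2i * ((A (p' τ2i)) ^ 2 - τ2i ^ 2) < 0
    rw [e2, ← hpa1]
    nlinarith [hg]
  have hGτ2a : 0 < G τ2a := by
    have hg : 2 * h τ2a - (p' τ1i) * τ2a ^ 2 < 2 * h τ1i - (p' τ1i) * τ1i ^ 2 :=
      ganti (Set.left_mem_Icc.2 hτ1iτ2a.le) (Set.right_mem_Icc.2 hτ1iτ2a.le) hτ1iτ2a
    have e2 : A (p' τ2a) = τ1i := by rw [hpa2]; exact hAs1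
    show 0 < 2 * h (A (p' τ2a)) - 2 * h τ2a - p' τ2a * ((A (p' τ2a)) ^ 2 - τ2a ^ 2)
    rw [e2, hpa2]
    nlinarith [hg]
  obtain ⟨t, ht, hGt⟩ :=
    intermediate_value_Ioo hτ2a.le hGcont (⟨hGτ2i, hGτ2a⟩ : (0:ℝ) ∈ Set.Ioo (G τ2i) (G τ2a))
  have htmem : t ∈ Set.Icc τ2i τ2a := ⟨ht.1.le, ht.2.le⟩
  have hpt : p' t ∈ Set.Icc (p' τ1a) (p' τ1i) := mapsTo3 t htmem
  have hptlt1 : p' τ1a < p' t := by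
    rw [hpa1]
    exact M3 (Set.left_mem_Icc.2 hτ2a.le) htmem ht.1
  have hptlt2 : p' t < p' τ1i := by
    rw [← hpa2]
    exact M3 htmem (Set.right_mem_Icc.2 hτ2a.le) ht.2
  have hAt0 : τ1a < A (p' t) := by rw [← hAs0]; exact AM hmems0 hpt hptlt1
  have hAt1 : A (p' t) < τ1i := by rw [← hAs1]; exact AM hpt hmems1 hptlt2
  refine ⟨A (p' t), t, hAt0, hAt1, ht.1, ht.2, hAval _ hpt, ?_⟩
  have hexp : 2 * h (A (p' t)) - 2 * h t - p' t * ((A (p' t)) ^ 2 - t ^ 2) = 0 := hGt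
  have hposA : 0 < A (p' t) := by linarith
  have hltAt : A (p' t) < t := by linarith [hτi.trans ht.1]
  have hsq : (A (p' t)) ^ 2 < t ^ 2 := by nlinarith
  have hden : (A (p' t)) ^ 2 - t ^ 2 ≠ 0 := sub_ne_zero.2 (ne_of_lt hsq)
  rw [hAval _ hpt, eq_div_iff hden]
  linarith [hexp]
end

section
/- If σ₁ and σ₂ are constants with 1 < σ₁ < σ₂ satisfying p'(σ₁) = p'(σ₂) = (2h(σ₁) − 2h(σ₂))/(σ₁² − σ₂²), then σ₁ ∈ (τ₁ᵃ, τ₁ⁱ), σ₂ ∈ (τ₂ⁱ, τ₂ᵃ), and (σ₁, σ₂) = (τ₁ᵉ, τ₂ᵉ); that is, the double-sonic pair is unique (Proposition 1.1, uniqueness and location part). -/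
private lemma aux_lt {f f' : ℝ → ℝ} {a b : ℝ} (hab : a < b)
    (hd : ∀ x ∈ Set.Icc a b, HasDerivAt f (f' x) x)
    (h0 : ∀ x ∈ Set.Ioo a b, 0 < f' x) : f a < f b := by
  have hm : StrictMonoOn f (Set.Icc a b) := by
    apply strictMonoOn_of_deriv_pos (convex_Icc a b)
    · exact fun x hx => (hd x hx).continuousAt.continuousWithinAt
    · intro x hx
      rw [interior_Icc] at hx
      rw [(hd x (Set.mem_Icc_of_Ioo hx)).deriv]
      exact h0 x hx
  exact hm (Set.left_mem_Icc.2 hab.le) (Set.right_mem_Icc.2 hab.le) hab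

private lemma aux_le {f f' : ℝ → ℝ} {a b : ℝ} (hab : a ≤ b)
    (hd : ∀ x ∈ Set.Icc a b, HasDerivAt f (f' x) x)
    (h0 : ∀ x ∈ Set.Ioo a b, 0 ≤ f' x) : f a ≤ f b := by
  have hm : MonotoneOn f (Set.Icc a b) := by
    apply monotoneOn_of_deriv_nonneg (convex_Icc a b)
    · exact fun x hx => (hd x hx).continuousAt.continuousWithinAt
    · intro x hx
      rw [interior_Icc] at hx
      exact (hd x (Set.mem_Icc_of_Ioo hx)).differentiableAt.differentiableWithinAt
    · intro x hx
      rw [interior_Icc] at hx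
      rw [(hd x (Set.mem_Icc_of_Ioo hx)).deriv]
      exact h0 x hx
  exact hm (Set.left_mem_Icc.2 hab) (Set.right_mem_Icc.2 hab) hab

set_option maxHeartbeats 1000000 in
theorem statement_1
    (p p' p'' h : ℝ → ℝ)
    (hderiv1 : ∀ τ : ℝ, 1 < τ → HasDerivAt p (p' τ) τ)
    (hderiv2 : ∀ τ : ℝ, 1 < τ → HasDerivAt p' (p'' τ) τ)
    (hcont : ContinuousOn p'' (Set.Ioi 1))
    (hderivh : ∀ τ : ℝ, 1 < τ → HasDerivAt h (τ * p' τ) τ)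
    (τ1i τ2i : ℝ) (hτ1i : 1 < τ1i) (hτi : τ1i < τ2i)
    (hp'neg : ∀ τ : ℝ, 1 < τ → p' τ < 0)
    (hpp1 : ∀ τ ∈ Set.Ioo 1 τ1i, 0 < p'' τ)
    (hpp2 : ∀ τ : ℝ, τ2i < τ → 0 < p'' τ)
    (hpp3 : ∀ τ ∈ Set.Ioo τ1i τ2i, p'' τ < 0)
    (τ1a τ2a : ℝ) (hτ1a : τ1a ∈ Set.Ioo 1 τ1i) (hτ2a : τ2i < τ2a)
    (hpa1 : p' τ1a = p' τ2i) (hpa2 : p' τ2a = p' τ1i)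
    (τ1e τ2e : ℝ) (hτ1e : τ1e ∈ Set.Ioo τ1a τ1i) (hτ2e : τ2e ∈ Set.Ioo τ2i τ2a)
    (he1 : p' τ1e = p' τ2e)
    (he2 : p' τ1e = (2 * h τ1e - 2 * h τ2e) / (τ1e ^ 2 - τ2e ^ 2)) :
    ∀ σ1 σ2 : ℝ, 1 < σ1 → σ1 < σ2 →
      p' σ1 = p' σ2 →
      p' σ1 = (2 * h σ1 - 2 * h σ2) / (σ1 ^ 2 - σ2 ^ 2) →
      σ1 ∈ Set.Ioo τ1a τ1i ∧ σ2 ∈ Set.Ioo τ2i τ2a ∧ σ1 = τ1e ∧ σ2 = τ2e := by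
  obtain ⟨hτ1a1, hτ1a2⟩ := hτ1a
  obtain ⟨hτ1e1, hτ1e2⟩ := hτ1e
  obtain ⟨hτ2e1, hτ2e2⟩ := hτ2e
  -- monotonicity helpers for p'
  have incr_lt : ∀ a b : ℝ, 1 < a → a < b → (∀ x ∈ Set.Ioo a b, 0 < p'' x) →
      p' a < p' b := by
    intro a b ha hab hpos
    exact aux_lt hab (fun x hx => hderiv2 x (lt_of_lt_of_le ha hx.1)) hpos
  have incr_le : ∀ a b : ℝ, 1 < a → a ≤ b → (∀ x ∈ Set.Ioo a b, 0 < p'' x) →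
      p' a ≤ p' b := by
    intro a b ha hab hpos
    exact aux_le hab (fun x hx => hderiv2 x (lt_of_lt_of_le ha hx.1))
      (fun x hx => (hpos x hx).le)
  have decr_lt : ∀ a b : ℝ, 1 < a → a < b → (∀ x ∈ Set.Ioo a b, p'' x < 0) →
      p' b < p' a := by
    intro a b ha hab hneg
    have h2 : -p' a < -p' b :=
      aux_lt (f := fun x => -p' x) (f' := fun x => -p'' x) hab
        (fun x hx => (hderiv2 x (lt_of_lt_of_le ha hx.1)).neg)
        (fun x hx => by simpa using hneg x hx)
    linarith
  -- derivative of τ ↦ 2 h τ - k τ²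
  have hFderiv : ∀ (k x : ℝ), 1 < x →
      HasDerivAt (fun τ => 2 * h τ - k * τ ^ 2) (2 * x * (p' x - k)) x := by
    intro k x hx
    have h1 := ((hderivh x hx).const_mul 2).sub ((hasDerivAt_pow 2 x).const_mul k)
    refine h1.congr_deriv ?_
    push_cast
    ring
  have Fincr : ∀ (k a b : ℝ), 1 < a → a < b → (∀ x ∈ Set.Ioo a b, k < p' x) →
      2 * h a - k * a ^ 2 < 2 * h b - k * b ^ 2 := by
    intro k a b ha hab hpos
    exact aux_lt hab (fun x hx => hFderiv k x (lt_of_lt_of_le ha hx.1))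
      (fun x hx => by
        have h1 : (1:ℝ) < x := lt_of_lt_of_le ha hx.1.le
        have h2 := hpos x hx
        nlinarith)
  have Fincr_le : ∀ (k a b : ℝ), 1 < a → a ≤ b → (∀ x ∈ Set.Ioo a b, k ≤ p' x) →
      2 * h a - k * a ^ 2 ≤ 2 * h b - k * b ^ 2 := by
    intro k a b ha hab hpos
    exact aux_le hab (fun x hx => hFderiv k x (lt_of_lt_of_le ha hx.1))
      (fun x hx => by
        have h1 : (1:ℝ) < x := lt_of_lt_of_le ha hx.1.le
        have h2 := hpos x hx
        nlinarith)
  have Fdecr : ∀ (k a b : ℝ), 1 < a → a < b → (∀ x ∈ Set.Ioo a b, p' x < k) →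
      2 * h b - k * b ^ 2 < 2 * h a - k * a ^ 2 := by
    intro k a b ha hab hneg
    have h2 : -(2 * h a - k * a ^ 2) < -(2 * h b - k * b ^ 2) :=
      aux_lt (f := fun τ => -(2 * h τ - k * τ ^ 2))
        (f' := fun x => -(2 * x * (p' x - k))) hab
        (fun x hx => (hFderiv k x (lt_of_lt_of_le ha hx.1)).neg)
        (fun x hx => by
          show 0 < -(2 * x * (p' x - k))
          have h1 : (1:ℝ) < x := lt_of_lt_of_le ha hx.1.le
          have h2 := hneg x hx
          nlinarith)
    linarith
  have Fdecr_le : ∀ (k a b : ℝ), 1 < a → a ≤ b → (∀ x ∈ Set.Ioo a b, p' x ≤ k) →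
      2 * h b - k * b ^ 2 ≤ 2 * h a - k * a ^ 2 := by
    intro k a b ha hab hneg
    have h2 : -(2 * h a - k * a ^ 2) ≤ -(2 * h b - k * b ^ 2) :=
      aux_le (f := fun τ => -(2 * h τ - k * τ ^ 2))
        (f' := fun x => -(2 * x * (p' x - k))) hab
        (fun x hx => (hFderiv k x (lt_of_lt_of_le ha hx.1)).neg)
        (fun x hx => by
          show 0 ≤ -(2 * x * (p' x - k))
          have h1 : (1:ℝ) < x := lt_of_lt_of_le ha hx.1.le
          have h2 := hneg x hx
          nlinarith)
    linarith
  -- equation normalization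
  have hEq : ∀ a b : ℝ, 0 < a → a < b → p' a = (2 * h a - 2 * h b) / (a ^ 2 - b ^ 2) →
      2 * h b - 2 * h a = p' a * (b ^ 2 - a ^ 2) := by
    intro a b ha hab heq
    have hne : a ^ 2 - b ^ 2 ≠ 0 := by nlinarith
    field_simp at heq
    linarith
  have Ee : 2 * h τ2e - 2 * h τ1e = p' τ1e * (τ2e ^ 2 - τ1e ^ 2) :=
    hEq τ1e τ2e (by linarith) (by linarith) he2
  intro σ1 σ2 hσ1 hσ12 heq1 heq2
  have E : 2 * h σ2 - 2 * h σ1 = p' σ1 * (σ2 ^ 2 - σ1 ^ 2) :=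
    hEq σ1 σ2 (by linarith) hσ12 heq2
  have key_pos : ¬ (∀ τ ∈ Set.Ioo σ1 σ2, p' σ1 < p' τ) := by
    intro hall
    have := Fincr (p' σ1) σ1 σ2 hσ1 hσ12 hall
    linarith [E]
  have key_neg : ¬ (∀ τ ∈ Set.Ioo σ1 σ2, p' τ < p' σ1) := by
    intro hall
    have := Fdecr (p' σ1) σ1 σ2 hσ1 hσ12 hall
    linarith [E]
  -- σ1 < τ1i
  have hσ1lt : σ1 < τ1i := by
    by_contra hge
    push_neg at hge
    by_cases h2 : τ2i ≤ σ1
    · have := incr_lt σ1 σ2 hσ1 hσ12 (fun x hx => hpp2 x (lt_of_le_of_lt h2 hx.1))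
      linarith [heq1.ge]
    · push_neg at h2
      apply key_neg
      intro τ hτ
      by_cases h3 : τ ≤ τ2i
      · exact decr_lt σ1 τ hσ1 hτ.1
          (fun x hx => hpp3 x ⟨lt_of_le_of_lt hge hx.1, lt_of_lt_of_le hx.2 h3⟩)
      · push_neg at h3
        have := incr_lt τ σ2 (by linarith) hτ.2 (fun x hx => hpp2 x (h3.trans hx.1))
        rw [heq1]
        exact this
  -- τ2i < σ2
  have hσ2gt : τ2i < σ2 := by
    by_contra hle
    push_neg at hle
    apply key_pos
    intro τ hτ
    by_cases h3 : τ ≤ τ1i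
    · exact incr_lt σ1 τ hσ1 hτ.1
        (fun x hx => hpp1 x ⟨hσ1.trans hx.1, lt_of_lt_of_le hx.2 h3⟩)
    · push_neg at h3
      have := decr_lt τ σ2 (by linarith) hτ.2
        (fun x hx => hpp3 x ⟨h3.trans hx.1, lt_of_lt_of_le hx.2 hle⟩)
      rw [heq1]
      exact this
  -- τ1a < σ1
  have hσ1gt : τ1a < σ1 := by
    have h1 : p' τ2i < p' σ2 := incr_lt τ2i σ2 (by linarith) hσ2gt
      (fun x hx => hpp2 x hx.1)
    by_contra hle
    push_neg at hle
    have h2 : p' σ1 ≤ p' τ1a := incr_le σ1 τ1a hσ1 hle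
      (fun x hx => hpp1 x ⟨hσ1.trans hx.1, hx.2.trans hτ1a2⟩)
    rw [hpa1] at h2
    linarith [heq1.le]
  -- σ2 < τ2a
  have hσ2lt : σ2 < τ2a := by
    have h1 : p' σ1 < p' τ1i := incr_lt σ1 τ1i hσ1 hσ1lt
      (fun x hx => hpp1 x ⟨hσ1.trans hx.1, hx.2⟩)
    by_contra hle
    push_neg at hle
    have h2 : p' τ2a ≤ p' σ2 := incr_le τ2a σ2 (by linarith) hle
      (fun x hx => hpp2 x (hτ2a.trans hx.1))
    rw [hpa2] at h2
    linarith [heq1.ge]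
  -- uniqueness: two pairs cannot have different pressure-derivative values
  have main : ∀ a1 a2 b1 b2 : ℝ, τ1a < a1 → a1 < τ1i → τ2i < a2 → a2 < τ2a →
      τ1a < b1 → b1 < τ1i → τ2i < b2 → b2 < τ2a →
      p' a1 = p' a2 → p' b1 = p' b2 →
      2 * h a2 - 2 * h a1 = p' a1 * (a2 ^ 2 - a1 ^ 2) →
      2 * h b2 - 2 * h b1 = p' b1 * (b2 ^ 2 - b1 ^ 2) →
      ¬ p' a1 < p' b1 := by
    intro a1 a2 b1 b2 ha1 ha1' ha2 ha2' hb1 hb1' hb2 hb2' heqa heqb Ea Eb hc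
    have h1a1 : (1:ℝ) < a1 := hτ1a1.trans ha1
    have h1b1 : (1:ℝ) < b1 := hτ1a1.trans hb1
    have hab1 : a1 < b1 := by
      by_contra hle
      push_neg at hle
      have := incr_le b1 a1 h1b1 hle
        (fun x hx => hpp1 x ⟨h1b1.trans hx.1, hx.2.trans ha1'⟩)
      linarith
    have hab2 : a2 < b2 := by
      by_contra hle
      push_neg at hle
      have := incr_le b2 a2 (by linarith) hle (fun x hx => hpp2 x (hb2.trans hx.1))
      rw [heqa, heqb] at hc
      linarith
    have I1 : 2 * h a1 - p' a1 * a1 ^ 2 ≤ 2 * h b1 - p' a1 * b1 ^ 2 := by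
      apply Fincr_le (p' a1) a1 b1 h1a1 hab1.le
      intro x hx
      exact incr_le a1 x h1a1 hx.1.le
        (fun y hy => hpp1 y ⟨h1a1.trans hy.1, (hy.2.trans hx.2).trans hb1'⟩)
    have I2 : 2 * h b2 - p' b1 * b2 ^ 2 ≤ 2 * h a2 - p' b1 * a2 ^ 2 := by
      apply Fdecr_le (p' b1) a2 b2 (by linarith) hab2.le
      intro x hx
      rw [heqb]
      exact incr_le x b2 (by linarith [hx.1]) hx.2.le
        (fun y hy => hpp2 y (lt_trans (ha2.trans hx.1) hy.1))
    have hb1a2 : b1 < a2 := by linarith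
    have hsq : 0 < a2 ^ 2 - b1 ^ 2 := by nlinarith
    have hprod : 0 < (p' b1 - p' a1) * (a2 ^ 2 - b1 ^ 2) := mul_pos (sub_pos.2 hc) hsq
    linarith [hprod, I1, I2, Ea, Eb]
  have hce : p' σ1 = p' τ1e := by
    rcases lt_trichotomy (p' σ1) (p' τ1e) with hlt | heqc | hgt
    · exact absurd hlt (main σ1 σ2 τ1e τ2e hσ1gt hσ1lt hσ2gt hσ2lt
        hτ1e1 hτ1e2 hτ2e1 hτ2e2 heq1 he1 E Ee)
    · exact heqc
    · exact absurd hgt (main τ1e τ2e σ1 σ2 hτ1e1 hτ1e2 hτ2e1 hτ2e2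
        hσ1gt hσ1lt hσ2gt hσ2lt he1 heq1 Ee E)
  have hs1 : σ1 = τ1e := by
    rcases lt_trichotomy σ1 τ1e with hlt | heqc | hgt
    · have := incr_lt σ1 τ1e hσ1 hlt
        (fun x hx => hpp1 x ⟨hσ1.trans hx.1, hx.2.trans hτ1e2⟩)
      linarith
    · exact heqc
    · have := incr_lt τ1e σ1 (by linarith) hgt
        (fun x hx => hpp1 x ⟨(hτ1a1.trans hτ1e1).trans hx.1, hx.2.trans hσ1lt⟩)
      linarith
  have hce2 : p' σ2 = p' τ2e := by
    rw [← heq1, ← he1, hce]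
  have hs2 : σ2 = τ2e := by
    rcases lt_trichotomy σ2 τ2e with hlt | heqc | hgt
    · have := incr_lt σ2 τ2e (by linarith) hlt
        (fun x hx => hpp2 x (hσ2gt.trans hx.1))
      linarith
    · exact heqc
    · have := incr_lt τ2e σ2 (by linarith) hgt
        (fun x hx => hpp2 x (hτ2e1.trans hx.1))
      linarith
  exact ⟨⟨hσ1gt, hσ1lt⟩, ⟨hσ2gt, hσ2lt⟩, hs1, hs2⟩
end

section
/- For every τ ∈ (τ₁ᵉ, τ₂ᵉ) one has the strict Liu entropy inequality −(2h(τ₁ᵉ) − 2h(τ₂ᵉ))/((τ₁ᵉ)² − (τ₂ᵉ)²) > −(2h(τ₁ᵉ) − 2h(τ))/((τ₁ᵉ)² − τ²) (Proposition 1.1, entropy inequality for the double-sonic pair). -/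
theorem statement_2
    (p p' p'' h : ℝ → ℝ)
    (hderiv1 : ∀ τ : ℝ, 1 < τ → HasDerivAt p (p' τ) τ)
    (hderiv2 : ∀ τ : ℝ, 1 < τ → HasDerivAt p' (p'' τ) τ)
    (hcont : ContinuousOn p'' (Set.Ioi 1))
    (hderivh : ∀ τ : ℝ, 1 < τ → HasDerivAt h (τ * p' τ) τ)
    (τ1i τ2i : ℝ) (hτ1i : 1 < τ1i) (hτi : τ1i < τ2i)
    (hp'neg : ∀ τ : ℝ, 1 < τ → p' τ < 0)
    (hpp1 : ∀ τ ∈ Set.Ioo 1 τ1i, 0 < p'' τ)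
    (hpp2 : ∀ τ : ℝ, τ2i < τ → 0 < p'' τ)
    (hpp3 : ∀ τ ∈ Set.Ioo τ1i τ2i, p'' τ < 0)
    (τ1a τ2a : ℝ) (hτ1a : τ1a ∈ Set.Ioo 1 τ1i) (hτ2a : τ2i < τ2a)
    (hpa1 : p' τ1a = p' τ2i) (hpa2 : p' τ2a = p' τ1i)
    (τ1e τ2e : ℝ) (hτ1e : τ1e ∈ Set.Ioo τ1a τ1i) (hτ2e : τ2e ∈ Set.Ioo τ2i τ2a)
    (he1 : p' τ1e = p' τ2e)
    (he2 : p' τ1e = (2 * h τ1e - 2 * h τ2e) / (τ1e ^ 2 - τ2e ^ 2)) :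
    ∀ τ ∈ Set.Ioo τ1e τ2e,
      -(2 * h τ1e - 2 * h τ2e) / (τ1e ^ 2 - τ2e ^ 2) >
        -(2 * h τ1e - 2 * h τ) / (τ1e ^ 2 - τ ^ 2) := by
  obtain ⟨hτ1a1, hτ1a2⟩ := hτ1a
  obtain ⟨hτ1e1, hτ1e2⟩ := hτ1e
  obtain ⟨hτ2e1, hτ2e2⟩ := hτ2e
  have h1τ1e : 1 < τ1e := hτ1a1.trans hτ1e1
  have h1τ2i : 1 < τ2i := hτ1i.trans hτi
  have h1τ2e : 1 < τ2e := h1τ2i.trans hτ2e1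
  have hττ : τ1e < τ2e := hτ1e2.trans (hτi.trans hτ2e1)
  set s := p' τ1e with hs
  have hcp' : ContinuousOn p' (Set.Ioi 1) := fun x hx =>
    ((hderiv2 x hx).continuousAt).continuousWithinAt
  -- p' strictly monotone on [τ1e, τ1i]
  have hA : StrictMonoOn p' (Set.Icc τ1e τ1i) := by
    apply strictMonoOn_of_deriv_pos (convex_Icc _ _)
    · exact hcp'.mono (fun x hx => lt_of_lt_of_le h1τ1e hx.1)
    · intro x hx
      rw [interior_Icc] at hx
      rw [(hderiv2 x (h1τ1e.trans hx.1)).deriv]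
      exact hpp1 x ⟨h1τ1e.trans hx.1, hx.2⟩
  -- p' strictly antitone on [τ1i, τ2i]
  have hB : StrictAntiOn p' (Set.Icc τ1i τ2i) := by
    apply strictAntiOn_of_deriv_neg (convex_Icc _ _)
    · exact hcp'.mono (fun x hx => lt_of_lt_of_le hτ1i hx.1)
    · intro x hx
      rw [interior_Icc] at hx
      rw [(hderiv2 x (hτ1i.trans hx.1)).deriv]
      exact hpp3 x hx
  -- p' strictly monotone on [τ2i, τ2e]
  have hC : StrictMonoOn p' (Set.Icc τ2i τ2e) := by
    apply strictMonoOn_of_deriv_pos (convex_Icc _ _)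
    · exact hcp'.mono (fun x hx => lt_of_lt_of_le h1τ2i hx.1)
    · intro x hx
      rw [interior_Icc] at hx
      rw [(hderiv2 x (h1τ2i.trans hx.1)).deriv]
      exact hpp2 x hx.1
  have hg1i : s < p' τ1i :=
    hA ⟨le_refl _, hτ1e2.le⟩ ⟨hτ1e2.le, le_refl _⟩ hτ1e2
  have hg2i : p' τ2i < s := by
    rw [he1]
    exact hC ⟨le_refl _, hτ2e1.le⟩ ⟨hτ2e1.le, le_refl _⟩ hτ2e1
  -- crossing point c
  obtain ⟨c, hcmem, hcval⟩ := intermediate_value_Icc' hτi.le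
    (hcp'.mono (fun x hx => lt_of_lt_of_le hτ1i hx.1)) ⟨hg2i.le, hg1i.le⟩
  have hc1 : τ1i < c := by
    rcases lt_or_eq_of_le hcmem.1 with hlt | heq
    · exact hlt
    · exfalso; rw [← heq] at hcval; rw [hcval] at hg1i; exact lt_irrefl _ hg1i
  have hc2 : c < τ2i := by
    rcases lt_or_eq_of_le hcmem.2 with hlt | heq
    · exact hlt
    · exfalso; rw [heq] at hcval; rw [hcval] at hg2i; exact lt_irrefl _ hg2i
  have hgpos : ∀ x, τ1e < x → x < c → s < p' x := by
    intro x hx1 hx2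
    rcases le_or_gt x τ1i with hle | hlt
    · exact hA ⟨le_refl _, hτ1e2.le⟩ ⟨hx1.le, hle⟩ hx1
    · rw [← hcval]
      exact hB ⟨hlt.le, (hx2.trans hc2).le⟩ hcmem hx2
  have hgneg : ∀ x, c < x → x < τ2e → p' x < s := by
    intro x hx1 hx2
    rcases lt_or_ge x τ2i with hlt | hle
    · rw [← hcval]
      exact hB hcmem ⟨(hc1.trans hx1).le, hlt.le⟩ hx1
    · rw [he1]
      exact hC ⟨hle, hx2.le⟩ ⟨hτ2e1.le, le_refl _⟩ hx2
  -- the function F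
  set F : ℝ → ℝ := fun x => 2 * h x - 2 * h τ1e - s * (x ^ 2 - τ1e ^ 2) with hF
  have hFd : ∀ x ∈ Set.Ioi (1:ℝ), HasDerivAt F (2 * x * (p' x - s)) x := by
    intro x hx
    have h1 : HasDerivAt F (2 * (x * p' x) - s * ((2 : ℕ) * x ^ (2 - 1))) x :=
      (((hderivh x hx).const_mul 2).sub_const _).sub
        (((hasDerivAt_pow 2 x).sub_const _).const_mul s)
    convert h1 using 1
    push_cast
    ring
  have hFmono : StrictMonoOn F (Set.Icc τ1e c) := by
    apply strictMonoOn_of_deriv_pos (convex_Icc _ _)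
    · intro x hx
      exact ((hFd x (lt_of_lt_of_le h1τ1e hx.1)).continuousAt).continuousWithinAt
    · intro x hx
      rw [interior_Icc] at hx
      have hx1 : 1 < x := h1τ1e.trans hx.1
      rw [(hFd x hx1).deriv]
      have := hgpos x hx.1 hx.2
      nlinarith
  have hFanti : StrictAntiOn F (Set.Icc c τ2e) := by
    apply strictAntiOn_of_deriv_neg (convex_Icc _ _)
    · intro x hx
      have : 1 < x := lt_of_lt_of_le (hτ1i.trans hc1) hx.1
      exact ((hFd x this).continuousAt).continuousWithinAt
    · intro x hx
      rw [interior_Icc] at hx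
      have hx1 : 1 < x := (hτ1i.trans hc1).trans hx.1
      rw [(hFd x hx1).deriv]
      have := hgneg x hx.1 hx.2
      nlinarith
  have hFτ1e : F τ1e = 0 := by simp only [hF]; ring
  have hne : τ1e ^ 2 - τ2e ^ 2 ≠ 0 := by nlinarith
  have hkey : s * (τ1e ^ 2 - τ2e ^ 2) = 2 * h τ1e - 2 * h τ2e := by
    rw [he2, div_mul_cancel₀ _ hne]
  have hFτ2e : F τ2e = 0 := by
    simp only [hF]; linear_combination hkey
  intro τ hτmem
  obtain ⟨ht1, ht2⟩ := hτmem
  have hFpos : 0 < F τ := by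
    rcases le_or_gt τ c with hle | hlt
    · calc (0:ℝ) = F τ1e := hFτ1e.symm
        _ < F τ := hFmono ⟨le_refl _, (hτ1e2.trans hc1).le⟩ ⟨ht1.le, hle⟩ ht1
    · calc (0:ℝ) = F τ2e := hFτ2e.symm
        _ < F τ := hFanti ⟨hlt.le, ht2.le⟩ ⟨(hc2.trans hτ2e1).le, le_refl _⟩ ht2
  have hd : 0 < τ ^ 2 - τ1e ^ 2 := by nlinarith
  have hLHS : -(2 * h τ1e - 2 * h τ2e) / (τ1e ^ 2 - τ2e ^ 2) = -s := by
    rw [neg_div, ← he2]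
  have hRHS : -(2 * h τ1e - 2 * h τ) / (τ1e ^ 2 - τ ^ 2)
      = (2 * h τ1e - 2 * h τ) / (τ ^ 2 - τ1e ^ 2) := by
    rw [neg_div, show τ1e ^ 2 - τ ^ 2 = -(τ ^ 2 - τ1e ^ 2) by ring, div_neg, neg_neg]
  rw [hLHS, hRHS, gt_iff_lt, div_lt_iff₀ hd]
  simp only [hF] at hFpos
  nlinarith [hFpos]
end

section
/- For every τ ∈ (τ₁ᵉ, τ₂ⁱ) there exists exactly one s ∈ (τ, ∞) such that p'(s) = (2h(s) − 2h(τ))/(s² − τ²) and p'(s) < p'(τ); moreover this s lies in the open interval (τ₂ⁱ, τ₂ᵉ) (Proposition 1.2, existence and uniqueness of the post-sonic state s_po(τ)). -/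
section Aux

variable (p' p'' h : ℝ → ℝ)

/-- derivative of the secant-comparison function K. -/
lemma aux_Kderiv (hderivh : ∀ τ : ℝ, 1 < τ → HasDerivAt h (τ * p' τ) τ)
    (C b s : ℝ) (hs : 1 < s) :
    HasDerivAt (fun x => (x ^ 2 - b ^ 2) * C - 2 * h x + 2 * h b)
      (2 * s * (C - p' s)) s := by
  have h1 : HasDerivAt (fun x : ℝ => (x ^ 2 - b ^ 2) * C) (2 * s * C) s := by
    have := ((hasDerivAt_pow 2 s).sub_const (b ^ 2)).mul_const C
    refine this.congr_deriv ?_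
    push_cast
    ring
  have h2 := (hderivh s hs).const_mul 2
  have h3 := (h1.sub h2).add_const (2 * h b)
  refine h3.congr_deriv ?_
  ring

lemma aux_Kmono (hderivh : ∀ τ : ℝ, 1 < τ → HasDerivAt h (τ * p' τ) τ)
    (C b a₀ a₁ : ℝ) (ha : 1 < a₀)
    (hlt : ∀ x ∈ Set.Ioo a₀ a₁, p' x < C) :
    StrictMonoOn (fun x => (x ^ 2 - b ^ 2) * C - 2 * h x + 2 * h b) (Set.Icc a₀ a₁) := by
  apply strictMonoOn_of_deriv_pos (convex_Icc _ _)
  · intro x hx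
    exact ((aux_Kderiv p' h hderivh C b x (lt_of_lt_of_le ha hx.1)).continuousAt).continuousWithinAt
  · intro x hx
    rw [interior_Icc] at hx
    have hx1 : 1 < x := lt_trans ha hx.1
    rw [(aux_Kderiv p' h hderivh C b x hx1).deriv]
    have h1 := hlt x hx
    have h2 : (0:ℝ) < 2 * x := by linarith
    have h3 : 0 < C - p' x := by linarith
    exact mul_pos h2 h3

lemma aux_Kanti (hderivh : ∀ τ : ℝ, 1 < τ → HasDerivAt h (τ * p' τ) τ)
    (C b a₀ a₁ : ℝ) (ha : 1 < a₀)
    (hlt : ∀ x ∈ Set.Ioo a₀ a₁, C < p' x) :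
    StrictAntiOn (fun x => (x ^ 2 - b ^ 2) * C - 2 * h x + 2 * h b) (Set.Icc a₀ a₁) := by
  apply strictAntiOn_of_deriv_neg (convex_Icc _ _)
  · intro x hx
    exact ((aux_Kderiv p' h hderivh C b x (lt_of_lt_of_le ha hx.1)).continuousAt).continuousWithinAt
  · intro x hx
    rw [interior_Icc] at hx
    have hx1 : 1 < x := lt_trans ha hx.1
    rw [(aux_Kderiv p' h hderivh C b x hx1).deriv]
    have h1 := hlt x hx
    have h2 : (0:ℝ) < 2 * x := by linarith
    have h3 : C - p' x < 0 := by linarith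
    exact mul_neg_of_pos_of_neg h2 h3

/-- derivative of the key function E b (s) = (s²-b²)p'(s) - 2h(s) + 2h(b). -/
lemma aux_Ederiv (hderiv2 : ∀ τ : ℝ, 1 < τ → HasDerivAt p' (p'' τ) τ)
    (hderivh : ∀ τ : ℝ, 1 < τ → HasDerivAt h (τ * p' τ) τ)
    (b s : ℝ) (hs : 1 < s) :
    HasDerivAt (fun x => (x ^ 2 - b ^ 2) * p' x - 2 * h x + 2 * h b)
      ((s ^ 2 - b ^ 2) * p'' s) s := by
  have h1 := ((hasDerivAt_pow 2 s).sub_const (b ^ 2)).mul (hderiv2 s hs)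
  have h2 := (hderivh s hs).const_mul 2
  have h3 := (h1.sub h2).add_const (2 * h b)
  refine h3.congr_deriv ?_
  push_cast
  ring

lemma aux_Emono (hderiv2 : ∀ τ : ℝ, 1 < τ → HasDerivAt p' (p'' τ) τ)
    (hderivh : ∀ τ : ℝ, 1 < τ → HasDerivAt h (τ * p' τ) τ)
    (τ2i : ℝ) (hτ2i : 1 < τ2i)
    (hpp2 : ∀ τ : ℝ, τ2i < τ → 0 < p'' τ)
    (b : ℝ) (hb0 : 0 ≤ b) (hb : b ≤ τ2i) :
    StrictMonoOn (fun x => (x ^ 2 - b ^ 2) * p' x - 2 * h x + 2 * h b) (Set.Ici τ2i) := by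
  apply strictMonoOn_of_deriv_pos (convex_Ici _)
  · intro x hx
    exact ((aux_Ederiv p' p'' h hderiv2 hderivh b x
      (lt_of_lt_of_le hτ2i hx)).continuousAt).continuousWithinAt
  · intro x hx
    rw [interior_Ici] at hx
    have hx1 : 1 < x := lt_trans hτ2i hx
    rw [(aux_Ederiv p' p'' h hderiv2 hderivh b x hx1).deriv]
    have hpp := hpp2 x hx
    have hbx : b < x := lt_of_le_of_lt hb hx
    have hsq : 0 < x ^ 2 - b ^ 2 := by nlinarith
    exact mul_pos hsq hpp

end Aux

set_option maxHeartbeats 2000000 in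
theorem statement_3
    (p p' p'' h : ℝ → ℝ)
    (hderiv1 : ∀ τ : ℝ, 1 < τ → HasDerivAt p (p' τ) τ)
    (hderiv2 : ∀ τ : ℝ, 1 < τ → HasDerivAt p' (p'' τ) τ)
    (hcont : ContinuousOn p'' (Set.Ioi 1))
    (hderivh : ∀ τ : ℝ, 1 < τ → HasDerivAt h (τ * p' τ) τ)
    (τ1i τ2i : ℝ) (hτ1i : 1 < τ1i) (hτi : τ1i < τ2i)
    (hp'neg : ∀ τ : ℝ, 1 < τ → p' τ < 0)
    (hpp1 : ∀ τ ∈ Set.Ioo 1 τ1i, 0 < p'' τ)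
    (hpp2 : ∀ τ : ℝ, τ2i < τ → 0 < p'' τ)
    (hpp3 : ∀ τ ∈ Set.Ioo τ1i τ2i, p'' τ < 0)
    (τ1a τ2a : ℝ) (hτ1a : τ1a ∈ Set.Ioo 1 τ1i) (hτ2a : τ2i < τ2a)
    (hpa1 : p' τ1a = p' τ2i) (hpa2 : p' τ2a = p' τ1i)
    (τ1e τ2e : ℝ) (hτ1e : τ1e ∈ Set.Ioo τ1a τ1i) (hτ2e : τ2e ∈ Set.Ioo τ2i τ2a)
    (he1 : p' τ1e = p' τ2e)
    (he2 : p' τ1e = (2 * h τ1e - 2 * h τ2e) / (τ1e ^ 2 - τ2e ^ 2)) :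
    ∀ τ ∈ Set.Ioo τ1e τ2i,
      (∃! s : ℝ, τ < s ∧ p' s = (2 * h s - 2 * h τ) / (s ^ 2 - τ ^ 2) ∧ p' s < p' τ) ∧
      ∀ s : ℝ, τ < s → p' s = (2 * h s - 2 * h τ) / (s ^ 2 - τ ^ 2) → p' s < p' τ →
        s ∈ Set.Ioo τ2i τ2e := by
  -- global monotonicity facts about p'
  have h1τ1a : (1:ℝ) < τ1a := hτ1a.1
  have h1τ1e : (1:ℝ) < τ1e := lt_trans h1τ1a hτ1e.1
  have h1τ2i : (1:ℝ) < τ2i := lt_trans hτ1i hτi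
  have h1τ2e : (1:ℝ) < τ2e := lt_trans h1τ2i hτ2e.1
  have pmono1 : StrictMonoOn p' (Set.Icc τ1a τ1i) := by
    apply strictMonoOn_of_deriv_pos (convex_Icc _ _)
    · intro x hx
      exact ((hderiv2 x (lt_of_lt_of_le h1τ1a hx.1)).continuousAt).continuousWithinAt
    · intro x hx
      rw [interior_Icc] at hx
      have hx1 : 1 < x := lt_trans h1τ1a hx.1
      rw [(hderiv2 x hx1).deriv]
      exact hpp1 x ⟨hx1, hx.2⟩
  have panti : StrictAntiOn p' (Set.Icc τ1i τ2i) := by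
    apply strictAntiOn_of_deriv_neg (convex_Icc _ _)
    · intro x hx
      exact ((hderiv2 x (lt_of_lt_of_le hτ1i hx.1)).continuousAt).continuousWithinAt
    · intro x hx
      rw [interior_Icc] at hx
      have hx1 : 1 < x := lt_trans hτ1i hx.1
      rw [(hderiv2 x hx1).deriv]
      exact hpp3 x hx
  have pmono2 : StrictMonoOn p' (Set.Ici τ2i) := by
    apply strictMonoOn_of_deriv_pos (convex_Ici _)
    · intro x hx
      exact ((hderiv2 x (lt_of_lt_of_le h1τ2i hx)).continuousAt).continuousWithinAt
    · intro x hx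
      rw [interior_Ici] at hx
      have hx1 : 1 < x := lt_trans h1τ2i hx
      rw [(hderiv2 x hx1).deriv]
      exact hpp2 x hx
  intro τ hτ
  obtain ⟨hτl, hτu⟩ := hτ
  have h1τ : (1:ℝ) < τ := lt_trans h1τ1e hτl
  have hτpos : (0:ℝ) < τ := lt_trans one_pos h1τ
  -- the key function F
  have hFmono : StrictMonoOn (fun x => (x ^ 2 - τ ^ 2) * p' x - 2 * h x + 2 * h τ)
      (Set.Ici τ2i) :=
    aux_Emono p' p'' h hderiv2 hderivh τ2i h1τ2i hpp2 τ hτpos.le hτu.le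
  -- Claim 2 : F τ2i < 0
  have hFτ2i : (τ2i ^ 2 - τ ^ 2) * p' τ2i - 2 * h τ2i + 2 * h τ < 0 := by
    have hanti : StrictAntiOn (fun x => (x ^ 2 - τ2i ^ 2) * p' τ2i - 2 * h x + 2 * h τ2i)
        (Set.Icc τ τ2i) := by
      apply aux_Kanti p' h hderivh _ _ _ _ h1τ
      intro x hx
      rcases le_or_gt x τ1i with hxi | hxi
      · have h1 : p' τ1a < p' x :=
          pmono1 ⟨le_refl τ1a, hτ1a.2.le⟩
            ⟨le_of_lt (lt_trans (lt_trans hτ1e.1 hτl) hx.1), hxi⟩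
            (lt_trans (lt_trans hτ1e.1 hτl) hx.1)
        rw [hpa1] at h1
        exact h1
      · exact panti ⟨hxi.le, hx.2.le⟩ ⟨hτi.le, le_refl τ2i⟩ hx.2
    have hK : (τ2i ^ 2 - τ2i ^ 2) * p' τ2i - 2 * h τ2i + 2 * h τ2i <
        (τ ^ 2 - τ2i ^ 2) * p' τ2i - 2 * h τ + 2 * h τ2i :=
      hanti ⟨le_refl τ, hτu.le⟩ ⟨hτu.le, le_refl τ2i⟩ hτu
    nlinarith [hK]
  -- Claim 3 : 0 < F τ2e
  have hFτ2e : 0 < (τ2e ^ 2 - τ ^ 2) * p' τ2e - 2 * h τ2e + 2 * h τ := by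
    have hne : τ1e ^ 2 - τ2e ^ 2 ≠ 0 := by
      have h12 : τ1e < τ2e := lt_trans (lt_trans hτ1e.2 hτi) hτ2e.1
      nlinarith [h1τ1e]
    have he2' : p' τ1e * (τ1e ^ 2 - τ2e ^ 2) = 2 * h τ1e - 2 * h τ2e := by
      rw [he2]
      field_simp
    have hK2τ1e : (τ1e ^ 2 - τ2e ^ 2) * p' τ2e - 2 * h τ1e + 2 * h τ2e = 0 := by
      rw [← he1]
      nlinarith [he2']
    have hK2τ2i : (τ2i ^ 2 - τ2e ^ 2) * p' τ2e - 2 * h τ2i + 2 * h τ2e < 0 := by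
      have hmono := aux_Emono p' p'' h hderiv2 hderivh τ2i h1τ2i hpp2 τ2i
        (le_of_lt (lt_trans one_pos h1τ2i)) (le_refl τ2i)
      have hE : (τ2i ^ 2 - τ2i ^ 2) * p' τ2i - 2 * h τ2i + 2 * h τ2i <
          (τ2e ^ 2 - τ2i ^ 2) * p' τ2e - 2 * h τ2e + 2 * h τ2i :=
        hmono (Set.self_mem_Ici) (Set.mem_Ici.mpr hτ2e.1.le) hτ2e.1
      nlinarith [hE]
    have key : (τ ^ 2 - τ2e ^ 2) * p' τ2e - 2 * h τ + 2 * h τ2e < 0 := by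
      rcases lt_or_ge (p' τ1e) (p' τ) with hcase | hcase
      · -- case A
        have hanti : StrictAntiOn (fun x => (x ^ 2 - τ2e ^ 2) * p' τ2e - 2 * h x + 2 * h τ2e)
            (Set.Icc τ1e τ) := by
          apply aux_Kanti p' h hderivh _ _ _ _ h1τ1e
          intro x hx
          rw [← he1]
          rcases le_or_gt x τ1i with hxi | hxi
          · exact pmono1 ⟨hτ1e.1.le, hτ1e.2.le⟩ ⟨le_of_lt (lt_trans hτ1e.1 hx.1), hxi⟩ hx.1
          · have h1 : p' τ < p' x :=
              panti ⟨hxi.le, le_of_lt (lt_trans hx.2 hτu)⟩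
                ⟨le_of_lt (lt_trans hxi hx.2), hτu.le⟩ hx.2
            linarith
        have hK : (τ ^ 2 - τ2e ^ 2) * p' τ2e - 2 * h τ + 2 * h τ2e <
            (τ1e ^ 2 - τ2e ^ 2) * p' τ2e - 2 * h τ1e + 2 * h τ2e :=
          hanti ⟨le_refl τ1e, hτl.le⟩ ⟨hτl.le, le_refl τ⟩ hτl
        linarith [hK2τ1e]
      · -- case B
        have hτgt : τ1i < τ := by
          by_contra hle
          push_neg at hle
          have := pmono1 ⟨hτ1e.1.le, hτ1e.2.le⟩ ⟨le_of_lt (lt_trans hτ1e.1 hτl), hle⟩ hτl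
          linarith
        have hmono : StrictMonoOn (fun x => (x ^ 2 - τ2e ^ 2) * p' τ2e - 2 * h x + 2 * h τ2e)
            (Set.Icc τ τ2i) := by
          apply aux_Kmono p' h hderivh _ _ _ _ h1τ
          intro x hx
          rw [← he1]
          have h1 : p' x < p' τ :=
            panti ⟨hτgt.le, hτu.le⟩ ⟨le_of_lt (lt_trans hτgt hx.1), hx.2.le⟩ hx.1
          linarith
        have hK : (τ ^ 2 - τ2e ^ 2) * p' τ2e - 2 * h τ + 2 * h τ2e <
            (τ2i ^ 2 - τ2e ^ 2) * p' τ2e - 2 * h τ2i + 2 * h τ2e :=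
          hmono ⟨le_refl τ, hτu.le⟩ ⟨hτu.le, le_refl τ2i⟩ hτu
        linarith [hK2τ2i]
    linarith [key]
  -- existence of a root of F in (τ2i, τ2e)
  have hFcont : ContinuousOn (fun x => (x ^ 2 - τ ^ 2) * p' x - 2 * h x + 2 * h τ)
      (Set.Icc τ2i τ2e) := by
    intro x hx
    exact ((aux_Ederiv p' p'' h hderiv2 hderivh τ x
      (lt_of_lt_of_le h1τ2i hx.1)).continuousAt).continuousWithinAt
  obtain ⟨s, hsmem, hFs⟩ : ∃ s ∈ Set.Ioo τ2i τ2e,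
      (s ^ 2 - τ ^ 2) * p' s - 2 * h s + 2 * h τ = 0 := by
    have hsub := intermediate_value_Ioo hτ2e.1.le hFcont
    have h0 : (0:ℝ) ∈ Set.Ioo ((τ2i ^ 2 - τ ^ 2) * p' τ2i - 2 * h τ2i + 2 * h τ)
        ((τ2e ^ 2 - τ ^ 2) * p' τ2e - 2 * h τ2e + 2 * h τ) := ⟨hFτ2i, hFτ2e⟩
    obtain ⟨s, hs, hFs⟩ := hsub h0
    exact ⟨s, hs, hFs⟩
  -- any root of F in (τ2i, τ2e) satisfies p' s < p' τ
  have hroot_lt : ∀ s ∈ Set.Ioo τ2i τ2e,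
      (s ^ 2 - τ ^ 2) * p' s - 2 * h s + 2 * h τ = 0 → p' s < p' τ := by
    intro s hs hFs0
    rcases lt_or_ge (p' τ1e) (p' τ) with hcase | hcase
    · have h1 : p' s < p' τ2e :=
        pmono2 (Set.mem_Ici.mpr hs.1.le) (Set.mem_Ici.mpr hτ2e.1.le) hs.2
      rw [← he1] at h1
      linarith
    · have hτgt : τ1i < τ := by
        by_contra hle
        push_neg at hle
        have := pmono1 ⟨hτ1e.1.le, hτ1e.2.le⟩ ⟨le_of_lt (lt_trans hτ1e.1 hτl), hle⟩ hτl
        linarith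
      by_contra hns
      push_neg at hns
      have hmono : StrictMonoOn (fun x => (x ^ 2 - τ ^ 2) * p' s - 2 * h x + 2 * h τ)
          (Set.Icc τ s) := by
        apply aux_Kmono p' h hderivh _ _ _ _ h1τ
        intro x hx
        rcases le_or_gt x τ2i with hxi | hxi
        · have h1 : p' x < p' τ :=
            panti ⟨hτgt.le, hτu.le⟩ ⟨le_of_lt (lt_trans hτgt hx.1), hxi⟩ hx.1
          linarith
        · exact pmono2 (Set.mem_Ici.mpr hxi.le) (Set.mem_Ici.mpr hs.1.le) hx.2
      have hτs : τ < s := lt_trans hτu hs.1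
      have hK : (τ ^ 2 - τ ^ 2) * p' s - 2 * h τ + 2 * h τ <
          (s ^ 2 - τ ^ 2) * p' s - 2 * h s + 2 * h τ :=
        hmono ⟨le_refl τ, hτs.le⟩ ⟨hτs.le, le_refl s⟩ hτs
      nlinarith [hK]
  -- part 2 : every admissible s lies in (τ2i, τ2e)
  have hpart2 : ∀ s : ℝ, τ < s → p' s = (2 * h s - 2 * h τ) / (s ^ 2 - τ ^ 2) →
      p' s < p' τ → s ∈ Set.Ioo τ2i τ2e := by
    intro s hτs heq hlt
    have h1s : 1 < s := lt_trans h1τ hτs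
    have hs2 : τ ^ 2 < s ^ 2 := by nlinarith
    have hne : s ^ 2 - τ ^ 2 ≠ 0 := by linarith
    rw [eq_div_iff hne] at heq
    have hFs0 : (s ^ 2 - τ ^ 2) * p' s - 2 * h s + 2 * h τ = 0 := by linarith [heq]
    constructor
    · by_contra hle
      push_neg at hle
      have hanti : StrictAntiOn (fun x => (x ^ 2 - τ ^ 2) * p' s - 2 * h x + 2 * h τ)
          (Set.Icc τ s) := by
        apply aux_Kanti p' h hderivh _ _ _ _ h1τ
        intro x hx
        rcases le_or_gt x τ1i with hxi | hxi
        · have hττ1i : τ < τ1i := lt_of_lt_of_le hx.1 hxi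
          have h1 : p' τ < p' x :=
            pmono1 ⟨le_of_lt (lt_trans hτ1e.1 hτl), hττ1i.le⟩
              ⟨le_of_lt (lt_trans hτ1e.1 (lt_trans hτl hx.1)), hxi⟩ hx.1
          linarith
        · exact panti ⟨hxi.le, le_of_lt (lt_of_lt_of_le hx.2 hle)⟩
            ⟨le_of_lt (lt_trans hxi hx.2), hle⟩ hx.2
      have hK : (s ^ 2 - τ ^ 2) * p' s - 2 * h s + 2 * h τ <
          (τ ^ 2 - τ ^ 2) * p' s - 2 * h τ + 2 * h τ :=
        hanti ⟨le_refl τ, hτs.le⟩ ⟨hτs.le, le_refl s⟩ hτs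
      nlinarith [hK]
    · by_contra hge
      push_neg at hge
      have h1 : (τ2e ^ 2 - τ ^ 2) * p' τ2e - 2 * h τ2e + 2 * h τ ≤
          (s ^ 2 - τ ^ 2) * p' s - 2 * h s + 2 * h τ :=
        hFmono.monotoneOn (Set.mem_Ici.mpr hτ2e.1.le)
          (Set.mem_Ici.mpr (le_trans hτ2e.1.le hge)) hge
      linarith
  -- assemble
  have hτs : τ < s := lt_trans hτu hsmem.1
  have hs2 : τ ^ 2 < s ^ 2 := by nlinarith [lt_trans h1τ hτs]
  have hne : s ^ 2 - τ ^ 2 ≠ 0 := by linarith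
  have heq_s : p' s = (2 * h s - 2 * h τ) / (s ^ 2 - τ ^ 2) := by
    rw [eq_div_iff hne]
    linarith [hFs]
  have hlt_s : p' s < p' τ := hroot_lt s hsmem hFs
  refine ⟨⟨s, ⟨hτs, heq_s, hlt_s⟩, ?_⟩, hpart2⟩
  rintro s' ⟨hτs', heq', hlt'⟩
  have hmem' := hpart2 s' hτs' heq' hlt'
  have h1s' : 1 < s' := lt_trans h1τ hτs'
  have hs2' : τ ^ 2 < s' ^ 2 := by nlinarith
  have hne' : s' ^ 2 - τ ^ 2 ≠ 0 := by linarith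
  rw [eq_div_iff hne'] at heq'
  have hFs' : (s' ^ 2 - τ ^ 2) * p' s' - 2 * h s' + 2 * h τ = 0 := by linarith [heq']
  have hFeq : (s' ^ 2 - τ ^ 2) * p' s' - 2 * h s' + 2 * h τ =
      (s ^ 2 - τ ^ 2) * p' s - 2 * h s + 2 * h τ := by rw [hFs', hFs]
  exact hFmono.injOn (Set.mem_Ici.mpr hmem'.1.le) (Set.mem_Ici.mpr hsmem.1.le) hFeq
end

section
/- For every τ ∈ (τ₁ᵉ, τ₂ⁱ) and every s ∈ (τ, s_po(τ)) one has the strict Liu entropy inequality −(2h(s_po(τ)) − 2h(τ))/(s_po(τ)² − τ²) > −(2h(s) − 2h(τ))/(s² − τ²) (Proposition 1.2, entropy inequality for post-sonic shocks). -/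
theorem statement_4
    (p p' p'' h : ℝ → ℝ)
    (hderiv1 : ∀ τ : ℝ, 1 < τ → HasDerivAt p (p' τ) τ)
    (hderiv2 : ∀ τ : ℝ, 1 < τ → HasDerivAt p' (p'' τ) τ)
    (hcont : ContinuousOn p'' (Set.Ioi 1))
    (hderivh : ∀ τ : ℝ, 1 < τ → HasDerivAt h (τ * p' τ) τ)
    (τ1i τ2i : ℝ) (hτ1i : 1 < τ1i) (hτi : τ1i < τ2i)
    (hp'neg : ∀ τ : ℝ, 1 < τ → p' τ < 0)
    (hpp1 : ∀ τ ∈ Set.Ioo 1 τ1i, 0 < p'' τ)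
    (hpp2 : ∀ τ : ℝ, τ2i < τ → 0 < p'' τ)
    (hpp3 : ∀ τ ∈ Set.Ioo τ1i τ2i, p'' τ < 0)
    (τ1a τ2a : ℝ) (hτ1a : τ1a ∈ Set.Ioo 1 τ1i) (hτ2a : τ2i < τ2a)
    (hpa1 : p' τ1a = p' τ2i) (hpa2 : p' τ2a = p' τ1i)
    (τ1e τ2e : ℝ) (hτ1e : τ1e ∈ Set.Ioo τ1a τ1i) (hτ2e : τ2e ∈ Set.Ioo τ2i τ2a)
    (he1 : p' τ1e = p' τ2e)
    (he2 : p' τ1e = (2 * h τ1e - 2 * h τ2e) / (τ1e ^ 2 - τ2e ^ 2))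
    (spo : ℝ → ℝ)
    (hspo : ∀ τ ∈ Set.Ioo τ1e τ2i, τ < spo τ ∧
      p' (spo τ) = (2 * h (spo τ) - 2 * h τ) / ((spo τ) ^ 2 - τ ^ 2) ∧ p' (spo τ) < p' τ)
    (hspo_uniq : ∀ τ ∈ Set.Ioo τ1e τ2i, ∀ s : ℝ, τ < s →
      p' s = (2 * h s - 2 * h τ) / (s ^ 2 - τ ^ 2) → p' s < p' τ → s = spo τ) :
    ∀ τ ∈ Set.Ioo τ1e τ2i, ∀ s ∈ Set.Ioo τ (spo τ),
      -(2 * h (spo τ) - 2 * h τ) / ((spo τ) ^ 2 - τ ^ 2) >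
        -(2 * h s - 2 * h τ) / (s ^ 2 - τ ^ 2) := by
  intro τ hτm s hsm
  obtain ⟨hτ1, hτ2⟩ := hτm
  have h1τ : 1 < τ := lt_trans (lt_trans hτ1a.1 hτ1e.1) hτ1
  obtain ⟨hτσ, heqσ, hpσ⟩ := hspo τ ⟨hτ1, hτ2⟩
  set σ := spo τ with hσdef
  obtain ⟨hs1, hs2⟩ := hsm
  set g : ℝ → ℝ := fun x => (2 * h x - 2 * h τ) / (x ^ 2 - τ ^ 2) with hg
  have hposden : ∀ x : ℝ, τ < x → 0 < x ^ 2 - τ ^ 2 := by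
    intro x hx
    nlinarith
  -- derivative of g at points x > τ
  have hgderiv : ∀ x : ℝ, τ < x → HasDerivAt g
      ((2 * (x * p' x) * (x ^ 2 - τ ^ 2) - (2 * h x - 2 * h τ) * (2 * x)) /
        (x ^ 2 - τ ^ 2) ^ 2) x := by
    intro x hx
    have h1x : 1 < x := lt_trans h1τ hx
    have hnum : HasDerivAt (fun y => 2 * h y - 2 * h τ) (2 * (x * p' x)) x :=
      ((hderivh x h1x).const_mul 2).sub_const (2 * h τ)
    have hden : HasDerivAt (fun y : ℝ => y ^ 2 - τ ^ 2) (2 * x) x := by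
      simpa using (hasDerivAt_pow 2 x).sub_const (τ ^ 2)
    rw [hg]
    exact hnum.div hden (ne_of_gt (hposden x hx))
  -- Cauchy MVT: g b is a value of p' on (τ, b)
  have hmvt : ∀ b : ℝ, τ < b → ∃ c ∈ Set.Ioo τ b, p' c = g b := by
    intro b hb
    have hcontf : ContinuousOn (fun y => 2 * h y) (Set.Icc τ b) := fun x hx =>
      (((hderivh x (lt_of_lt_of_le h1τ hx.1)).const_mul 2).continuousAt).continuousWithinAt
    have hcontg : ContinuousOn (fun y : ℝ => y ^ 2) (Set.Icc τ b) :=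
      (continuous_pow 2).continuousOn
    obtain ⟨c, hc, hceq⟩ := exists_ratio_hasDerivAt_eq_ratio_slope (fun y => 2 * h y)
      (fun y => 2 * (y * p' y)) hb hcontf
      (fun x hx => (hderivh x (lt_trans h1τ hx.1)).const_mul 2)
      (fun y : ℝ => y ^ 2) (fun y => 2 * y) hcontg
      (fun x hx => by simpa using hasDerivAt_pow 2 x)
    refine ⟨c, hc, ?_⟩
    have hc0 : (0 : ℝ) < c := by linarith [hc.1]
    have hdpos : 0 < b ^ 2 - τ ^ 2 := hposden b hb
    rw [hg]
    rw [eq_div_iff (ne_of_gt hdpos)]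
    -- hceq : (b^2 - τ^2) * (2*(c*p' c)) = (2*h b - 2*h τ) * (2*c)
    have key : (p' c * (b ^ 2 - τ ^ 2) - (2 * h b - 2 * h τ)) * (2 * c) = 0 := by
      linear_combination hceq
    rcases mul_eq_zero.mp key with h0 | h0
    · linarith
    · linarith
  have hgσ : g σ = p' σ := heqσ.symm
  -- main claim
  have main : ∀ x ∈ Set.Ioo τ σ, g σ < g x := by
    by_contra hcon
    push_neg at hcon
    obtain ⟨s0, hs0, hs0le⟩ := hcon
    have hcp' : ContinuousAt p' τ := (hderiv2 τ h1τ).continuousAt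
    have hev : ∀ᶠ x in nhds τ, p' σ < p' x := hcp'.eventually (eventually_gt_nhds hpσ)
    rw [Metric.eventually_nhds_iff] at hev
    obtain ⟨δ, hδ, hball⟩ := hev
    have hms : 0 < min δ (s0 - τ) := lt_min hδ (by linarith [hs0.1])
    set a := τ + min δ (s0 - τ) / 2 with ha
    have haτ : τ < a := by rw [ha]; linarith
    have has0 : a < s0 := by
      have := min_le_right δ (s0 - τ)
      rw [ha]; linarith
    have haδ : a < τ + δ := by
      have := min_le_left δ (s0 - τ)
      rw [ha]; linarith
    have haσ : a < σ := lt_trans has0 hs0.2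
    have hga : p' σ < g a := by
      obtain ⟨c, hc, hceq⟩ := hmvt a haτ
      rw [← hceq]
      apply hball
      rw [Real.dist_eq, abs_of_pos (by linarith [hc.1] : (0:ℝ) < c - τ)]
      linarith [hc.2]
    have hconts : ContinuousOn g (Set.Icc a σ) := fun x hx =>
      ((hgderiv x (lt_of_lt_of_le haτ hx.1)).continuousAt).continuousWithinAt
    obtain ⟨x0, hx0mem, hx0min⟩ := isCompact_Icc.exists_isMinOn
      (Set.nonempty_Icc.mpr (le_of_lt haσ)) hconts
    have hs0mem : s0 ∈ Set.Icc a σ := ⟨le_of_lt has0, le_of_lt hs0.2⟩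
    have hx0le : g x0 ≤ g σ := le_trans (isMinOn_iff.mp hx0min s0 hs0mem) hs0le
    have hx0a : x0 ≠ a := by
      intro hcontra
      rw [hcontra] at hx0le
      linarith [hgσ ▸ hx0le]
    obtain ⟨t, htmem, htmin⟩ : ∃ t ∈ Set.Ioo a σ, IsMinOn g (Set.Icc a σ) t := by
      rcases lt_or_eq_of_le hx0mem.2 with hlt | heqσ'
      · exact ⟨x0, ⟨lt_of_le_of_ne hx0mem.1 (Ne.symm hx0a), hlt⟩, hx0min⟩
      · refine ⟨s0, ⟨has0, hs0.2⟩, ?_⟩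
        intro y hy
        have h1 : g x0 ≤ g s0 := isMinOn_iff.mp hx0min s0 hs0mem
        have h2 : g s0 ≤ g x0 := by rw [heqσ']; exact hs0le
        have : g s0 = g x0 := le_antisymm h2 h1
        calc g s0 = g x0 := this
          _ ≤ g y := isMinOn_iff.mp hx0min y hy
    have hloc : IsLocalMin g t := htmin.isLocalMin (Icc_mem_nhds htmem.1 htmem.2)
    have hτt : τ < t := lt_trans haτ htmem.1
    have hdz := hloc.hasDerivAt_eq_zero (hgderiv t hτt)
    have hdt : 0 < t ^ 2 - τ ^ 2 := hposden t hτt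
    have ht0 : (0 : ℝ) < t := by linarith
    have hnum0 : 2 * (t * p' t) * (t ^ 2 - τ ^ 2) - (2 * h t - 2 * h τ) * (2 * t) = 0 := by
      rcases div_eq_zero_iff.mp hdz with h0 | h0
      · exact h0
      · exact absurd h0 (pow_ne_zero 2 (ne_of_gt hdt))
    have hpt : p' t = (2 * h t - 2 * h τ) / (t ^ 2 - τ ^ 2) := by
      rw [eq_div_iff (ne_of_gt hdt)]
      have key : (p' t * (t ^ 2 - τ ^ 2) - (2 * h t - 2 * h τ)) * (2 * t) = 0 := by
        linear_combination hnum0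
      rcases mul_eq_zero.mp key with h0 | h0
      · linarith
      · linarith
    have hgt : p' t = g t := hpt
    have hptτ : p' t < p' τ := by
      have h1 : g t ≤ g s0 := isMinOn_iff.mp htmin s0 hs0mem
      linarith [hgσ, hs0le, hpσ, hgt]
    have huniq := hspo_uniq τ ⟨hτ1, hτ2⟩ t hτt hpt hptτ
    rw [← hσdef] at huniq
    exact absurd (huniq ▸ htmem.2) (lt_irrefl σ)
  have hfin : g σ < g s := main s ⟨hs1, hs2⟩
  rw [hg] at hfin
  rw [neg_div, neg_div]
  exact neg_lt_neg hfin
end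

section
/- The function τ ↦ s_po(τ) is strictly decreasing on (τ₁ᵉ, τ₂ⁱ); moreover s_po(τ) → τ₂ⁱ as τ → τ₂ⁱ from the left, and s_po(τ) → τ₂ᵉ as τ → τ₁ᵉ from the right (Proposition 1.2, monotonicity and limits of the post-sonic state). -/
open Set Filter

lemma statement5_aux_mono {f f' : ℝ → ℝ} (hd : ∀ t : ℝ, 1 < t → HasDerivAt f (f' t) t)
    {x y : ℝ} (hx : 1 < x) (hpos : ∀ t ∈ Set.Ioo x y, 0 < f' t) :
    StrictMonoOn f (Set.Icc x y) := by
  apply strictMonoOn_of_deriv_pos (convex_Icc x y)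
  · intro t ht
    exact (hd t (lt_of_lt_of_le hx ht.1)).continuousAt.continuousWithinAt
  · intro t ht
    rw [interior_Icc] at ht
    rw [(hd t (hx.trans ht.1)).deriv]
    exact hpos t ht

lemma statement5_aux_anti {f f' : ℝ → ℝ} (hd : ∀ t : ℝ, 1 < t → HasDerivAt f (f' t) t)
    {x y : ℝ} (hx : 1 < x) (hneg : ∀ t ∈ Set.Ioo x y, f' t < 0) :
    StrictAntiOn f (Set.Icc x y) := by
  apply strictAntiOn_of_deriv_neg (convex_Icc x y)
  · intro t ht
    exact (hd t (lt_of_lt_of_le hx ht.1)).continuousAt.continuousWithinAt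
  · intro t ht
    rw [interior_Icc] at ht
    rw [(hd t (hx.trans ht.1)).deriv]
    exact hneg t ht

lemma statement5_Fderiv {h p' : ℝ → ℝ}
    (hderivh : ∀ τ : ℝ, 1 < τ → HasDerivAt h (τ * p' τ) τ) (K : ℝ) {t : ℝ} (ht : 1 < t) :
    HasDerivAt (fun t => 2 * h t - K * t ^ 2) (2 * t * (p' t - K)) t := by
  have h1 := (hderivh t ht).const_mul 2
  have h2 := (hasDerivAt_pow 2 t).const_mul K
  refine (h1.sub h2).congr_deriv ?_
  push_cast
  ring

lemma statement5_Gderiv {h p' p'' : ℝ → ℝ}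
    (hderivh : ∀ τ : ℝ, 1 < τ → HasDerivAt h (τ * p' τ) τ)
    (hderiv2 : ∀ τ : ℝ, 1 < τ → HasDerivAt p' (p'' τ) τ) (b : ℝ) {t : ℝ} (ht : 1 < t) :
    HasDerivAt (fun t => 2 * h t - 2 * h b - p' t * (t ^ 2 - b ^ 2))
      (-(p'' t * (t ^ 2 - b ^ 2))) t := by
  have h1 := ((hderivh t ht).const_mul 2).sub_const (2 * h b)
  have h3 := (hderiv2 t ht).mul ((hasDerivAt_pow 2 t).sub_const (b ^ 2))
  refine (h1.sub h3).congr_deriv ?_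
  push_cast
  ring

lemma statement5_bump {p' p'' h : ℝ → ℝ}
    (hderiv2 : ∀ τ : ℝ, 1 < τ → HasDerivAt p' (p'' τ) τ)
    (hderivh : ∀ τ : ℝ, 1 < τ → HasDerivAt h (τ * p' τ) τ)
    {τ1i τ2i : ℝ} (h1τ1i : 1 < τ1i) (hτi : τ1i < τ2i)
    (hpp1 : ∀ τ ∈ Set.Ioo 1 τ1i, 0 < p'' τ)
    (hpp2 : ∀ τ : ℝ, τ2i < τ → 0 < p'' τ)
    (hpp3 : ∀ τ ∈ Set.Ioo τ1i τ2i, p'' τ < 0)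
    {x y K : ℝ} (hx1 : 1 < x) (hxτ2i : x < τ2i) (hyτ2i : τ2i < y)
    (hKx : K ≤ p' x) (hK1i : K < p' τ1i) (hK2i : p' τ2i < K) (hKy : p' y = K)
    (hFxy : 2 * h x - K * x ^ 2 = 2 * h y - K * y ^ 2) :
    ∀ b ∈ Set.Ioo x y, 2 * h y - K * y ^ 2 < 2 * h b - K * b ^ 2 := by
  have Sa : StrictAntiOn p' (Set.Icc τ1i τ2i) :=
    statement5_aux_anti hderiv2 h1τ1i (fun t ht => hpp3 t ht)
  have Sm2 : StrictMonoOn p' (Set.Icc τ2i y) :=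
    statement5_aux_mono hderiv2 (h1τ1i.trans hτi) (fun t ht => hpp2 t ht.1)
  -- the crossing point c
  have contp' : ContinuousOn p' (Set.Icc τ1i τ2i) := fun t ht =>
    (hderiv2 t (lt_of_lt_of_le h1τ1i ht.1)).continuousAt.continuousWithinAt
  obtain ⟨c, hcmem, hpc⟩ := intermediate_value_Ioo' hτi.le contp' (Set.mem_Ioo.2 ⟨hK2i, hK1i⟩)
  obtain ⟨hc1, hc2⟩ := hcmem
  have h1c : 1 < c := h1τ1i.trans hc1
  have hxc : x ≤ c := by
    by_contra hcon
    push_neg at hcon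
    have := Sa ⟨hc1.le, hc2.le⟩ ⟨(hc1.trans hcon).le, hxτ2i.le⟩ hcon
    rw [hpc] at this
    linarith
  -- F strictly monotone on [x, c]
  have SMxc : StrictMonoOn (fun t => 2 * h t - K * t ^ 2) (Set.Icc x c) := by
    apply statement5_aux_mono (fun t ht => statement5_Fderiv hderivh K ht) hx1
    intro t ht
    have h1t : 1 < t := hx1.trans ht.1
    have hK : K < p' t := by
      rcases le_or_gt t τ1i with h1 | h1
      · have hxτ1i : x < τ1i := lt_of_lt_of_le ht.1 h1
        have : p' x < p' t := by
          have Sm1 : StrictMonoOn p' (Set.Icc x τ1i) :=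
            statement5_aux_mono hderiv2 hx1
              (fun u hu => hpp1 u ⟨hx1.trans hu.1, hu.2⟩)
          exact Sm1 ⟨le_refl x, hxτ1i.le⟩ ⟨ht.1.le, h1⟩ ht.1
        linarith
      · have := Sa ⟨h1.le, (ht.2.trans hc2).le⟩ ⟨hc1.le, hc2.le⟩ ht.2
        rw [hpc] at this
        linarith
    nlinarith
  -- F strictly antitone on [c, y]
  have SAcy : StrictAntiOn (fun t => 2 * h t - K * t ^ 2) (Set.Icc c y) := by
    apply statement5_aux_anti (fun t ht => statement5_Fderiv hderivh K ht) h1c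
    intro t ht
    have h1t : 1 < t := h1c.trans ht.1
    have hK : p' t < K := by
      rcases le_or_gt t τ2i with h1 | h1
      · have := Sa ⟨hc1.le, hc2.le⟩ ⟨(hc1.trans ht.1).le, h1⟩ ht.1
        rw [hpc] at this
        linarith
      · have := Sm2 ⟨h1.le, ht.2.le⟩ ⟨le_of_lt hyτ2i, le_refl y⟩ ht.2
        rw [hKy] at this
        linarith
    nlinarith
  intro b hb
  rcases le_or_gt b c with hbc | hbc
  · have hxltc : x < c := lt_of_lt_of_le hb.1 hbc
    have := SMxc ⟨le_refl x, hxltc.le⟩ ⟨hb.1.le, hbc⟩ hb.1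
    simp only at this
    linarith
  · have := SAcy ⟨hbc.le, hb.2.le⟩ ⟨(hc2.trans hyτ2i).le, le_refl y⟩ hb.2
    simp only at this
    linarith

set_option maxHeartbeats 1000000 in
theorem statement_5
    (p p' p'' h : ℝ → ℝ)
    (hderiv1 : ∀ τ : ℝ, 1 < τ → HasDerivAt p (p' τ) τ)
    (hderiv2 : ∀ τ : ℝ, 1 < τ → HasDerivAt p' (p'' τ) τ)
    (hcont : ContinuousOn p'' (Set.Ioi 1))
    (hderivh : ∀ τ : ℝ, 1 < τ → HasDerivAt h (τ * p' τ) τ)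
    (τ1i τ2i : ℝ) (hτ1i : 1 < τ1i) (hτi : τ1i < τ2i)
    (hp'neg : ∀ τ : ℝ, 1 < τ → p' τ < 0)
    (hpp1 : ∀ τ ∈ Set.Ioo 1 τ1i, 0 < p'' τ)
    (hpp2 : ∀ τ : ℝ, τ2i < τ → 0 < p'' τ)
    (hpp3 : ∀ τ ∈ Set.Ioo τ1i τ2i, p'' τ < 0)
    (τ1a τ2a : ℝ) (hτ1a : τ1a ∈ Set.Ioo 1 τ1i) (hτ2a : τ2i < τ2a)
    (hpa1 : p' τ1a = p' τ2i) (hpa2 : p' τ2a = p' τ1i)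
    (τ1e τ2e : ℝ) (hτ1e : τ1e ∈ Set.Ioo τ1a τ1i) (hτ2e : τ2e ∈ Set.Ioo τ2i τ2a)
    (he1 : p' τ1e = p' τ2e)
    (he2 : p' τ1e = (2 * h τ1e - 2 * h τ2e) / (τ1e ^ 2 - τ2e ^ 2))
    (spo : ℝ → ℝ)
    (hspo : ∀ τ ∈ Set.Ioo τ1e τ2i, τ < spo τ ∧
      p' (spo τ) = (2 * h (spo τ) - 2 * h τ) / ((spo τ) ^ 2 - τ ^ 2) ∧ p' (spo τ) < p' τ)
    (hspo_uniq : ∀ τ ∈ Set.Ioo τ1e τ2i, ∀ s : ℝ, τ < s →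
      p' s = (2 * h s - 2 * h τ) / (s ^ 2 - τ ^ 2) → p' s < p' τ → s = spo τ) :
    StrictAntiOn spo (Set.Ioo τ1e τ2i) ∧
      Filter.Tendsto spo (nhdsWithin τ2i (Set.Iio τ2i)) (nhds τ2i) ∧
      Filter.Tendsto spo (nhdsWithin τ1e (Set.Ioi τ1e)) (nhds τ2e) := by
  obtain ⟨hτ1a1, hτ1a2⟩ := hτ1a
  obtain ⟨hτ1e1, hτ1e2⟩ := hτ1e
  obtain ⟨hτ2e1, hτ2e2⟩ := hτ2e
  have h1τ1e : 1 < τ1e := hτ1a1.trans hτ1e1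
  have h1τ2i : 1 < τ2i := hτ1i.trans hτi
  have hτ1eτ2i : τ1e < τ2i := hτ1e2.trans hτi
  have h1τ2e : 1 < τ2e := h1τ2i.trans hτ2e1
  have hτ1eτ2e : τ1e < τ2e := hτ1eτ2i.trans hτ2e1
  have Sa : StrictAntiOn p' (Set.Icc τ1i τ2i) :=
    statement5_aux_anti hderiv2 hτ1i (fun t ht => hpp3 t ht)
  have Sm1 : ∀ x : ℝ, 1 < x → StrictMonoOn p' (Set.Icc x τ1i) := fun x hx =>
    statement5_aux_mono hderiv2 hx (fun t ht => hpp1 t ⟨hx.trans ht.1, ht.2⟩)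
  have Sm2 : ∀ y : ℝ, StrictMonoOn p' (Set.Icc τ2i y) := fun y =>
    statement5_aux_mono hderiv2 h1τ2i (fun t ht => hpp2 t ht.1)
  -- product form of the defining equation
  have heqm : ∀ τ ∈ Set.Ioo τ1e τ2i,
      p' (spo τ) * ((spo τ) ^ 2 - τ ^ 2) = 2 * h (spo τ) - 2 * h τ := by
    intro τ hτ
    obtain ⟨hlt, heq, -⟩ := hspo τ hτ
    have h1τ : 1 < τ := h1τ1e.trans hτ.1
    have hpos : (0:ℝ) < (spo τ) ^ 2 - τ ^ 2 := by nlinarith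
    rw [heq, div_mul_cancel₀ _ (ne_of_gt hpos)]
  -- product form of the (τ1e, τ2e) relation
  have he2c : p' τ1e * (τ1e ^ 2 - τ2e ^ 2) = 2 * h τ1e - 2 * h τ2e := by
    have hne : τ1e ^ 2 - τ2e ^ 2 ≠ 0 := by nlinarith
    have he2' := he2
    rw [eq_div_iff hne] at he2'
    exact he2'
  -- Step A : spo τ > τ2i
  have stepA : ∀ τ ∈ Set.Ioo τ1e τ2i, τ2i < spo τ := by
    intro τ hτ
    obtain ⟨hlt, -, hplt⟩ := hspo τ hτ
    by_contra hcon
    push_neg at hcon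
    have h1τ : 1 < τ := h1τ1e.trans hτ.1
    have heq' := heqm τ hτ
    have hFmono : StrictMonoOn (fun t => 2 * h t - p' (spo τ) * t ^ 2)
        (Set.Icc τ (spo τ)) := by
      apply statement5_aux_mono (fun t ht => statement5_Fderiv hderivh (p' (spo τ)) ht) h1τ
      intro t ht
      have h1t : 1 < t := h1τ.trans ht.1
      have hK : p' (spo τ) < p' t := by
        rcases le_or_gt t τ1i with h1 | h1
        · have hττ1i : τ < τ1i := lt_of_lt_of_le ht.1 h1
          have := Sm1 τ h1τ ⟨le_refl τ, hττ1i.le⟩ ⟨ht.1.le, h1⟩ ht.1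
          linarith
        · have := Sa ⟨h1.le, ht.2.le.trans hcon⟩ ⟨(h1.trans ht.2).le, hcon⟩ ht.2
          linarith
      nlinarith
    have := hFmono ⟨le_refl τ, hlt.le⟩ ⟨hlt.le, le_refl _⟩ hlt
    simp only at this
    nlinarith
  -- Step B : spo τ < τ2e
  have stepB : ∀ τ ∈ Set.Ioo τ1e τ2i, spo τ < τ2e := by
    intro b hb
    obtain ⟨hlt, -, hplt⟩ := hspo b hb
    have hsA := stepA b hb
    by_contra hcon
    push_neg at hcon
    have h1b : 1 < b := h1τ1e.trans hb.1
    have hbump := statement5_bump hderiv2 hderivh hτ1i hτi hpp1 hpp2 hpp3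
      (x := τ1e) (y := τ2e) (K := p' τ2e) h1τ1e hτ1eτ2i hτ2e1
      (le_of_eq he1.symm)
      (by have := Sm1 τ1e h1τ1e ⟨le_refl τ1e, hτ1e2.le⟩ ⟨hτ1e2.le, le_refl τ1i⟩ hτ1e2
          linarith [he1])
      (by have := Sm1 τ1a hτ1a1 ⟨le_refl τ1a, hτ1a2.le⟩ ⟨hτ1e1.le, hτ1e2.le⟩ hτ1e1
          linarith [he1, hpa1])
      rfl
      (by linear_combination (-1 : ℝ) * he2c + (τ1e ^ 2 - τ2e ^ 2) * he1)
    have hFb := hbump b ⟨hb.1, hb.2.trans hτ2e1⟩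
    -- G is strictly antitone on [τ2i, spo b]
    have GSA : StrictAntiOn (fun t => 2 * h t - 2 * h b - p' t * (t ^ 2 - b ^ 2))
        (Set.Icc τ2i (spo b)) := by
      apply statement5_aux_anti (fun t ht => statement5_Gderiv hderivh hderiv2 b ht) h1τ2i
      intro t ht
      have hpos2 : (0:ℝ) < t ^ 2 - b ^ 2 := by nlinarith [hb.2, ht.1]
      have := mul_pos (hpp2 t ht.1) hpos2
      linarith
    have hGs : 2 * h (spo b) - 2 * h b - p' (spo b) * ((spo b) ^ 2 - b ^ 2) = 0 := by
      linarith [heqm b hb]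
    have hGτ2e : 2 * h τ2e - 2 * h b - p' τ2e * (τ2e ^ 2 - b ^ 2) < 0 := by nlinarith [hFb]
    have := GSA.antitoneOn ⟨hτ2e1.le, hcon⟩ ⟨hsA.le, le_refl _⟩ hcon
    linarith
  -- Step C : strict antitonicity
  have stepC : StrictAntiOn spo (Set.Ioo τ1e τ2i) := by
    intro a ha b hb hab
    obtain ⟨hlta, -, hplta⟩ := hspo a ha
    obtain ⟨hltb, -, hpltb⟩ := hspo b hb
    have hsAa := stepA a ha
    have hsAb := stepA b hb
    have h1a : 1 < a := h1τ1e.trans ha.1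
    have hbump := statement5_bump hderiv2 hderivh hτ1i hτi hpp1 hpp2 hpp3
      (x := a) (y := spo a) (K := p' (spo a)) h1a ha.2 hsAa
      hplta.le
      (by have hpale : p' a ≤ p' τ1i := by
            rcases le_or_gt a τ1i with h1 | h1
            · exact (Sm1 a h1a).monotoneOn ⟨le_refl a, h1⟩ ⟨h1, le_refl τ1i⟩ h1
            · exact (Sa ⟨le_refl τ1i, hτi.le⟩ ⟨h1.le, ha.2.le⟩ h1).le
          linarith)
      (Sm2 (spo a) ⟨le_refl τ2i, hsAa.le⟩ ⟨hsAa.le, le_refl _⟩ hsAa)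
      rfl
      (by linear_combination heqm a ha)
    have hFb := hbump b ⟨hab, hb.2.trans hsAa⟩
    set Y := max (spo a) (spo b) with hY
    have GSA : StrictAntiOn (fun t => 2 * h t - 2 * h b - p' t * (t ^ 2 - b ^ 2))
        (Set.Icc τ2i Y) := by
      apply statement5_aux_anti (fun t ht => statement5_Gderiv hderivh hderiv2 b ht) h1τ2i
      intro t ht
      have h1b : 1 < b := h1τ1e.trans hb.1
      have hpos2 : (0:ℝ) < t ^ 2 - b ^ 2 := by nlinarith [hb.2, ht.1]
      have := mul_pos (hpp2 t ht.1) hpos2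
      linarith
    have hGsb : 2 * h (spo b) - 2 * h b - p' (spo b) * ((spo b) ^ 2 - b ^ 2) = 0 := by
      linarith [heqm b hb]
    have hGsa : 2 * h (spo a) - 2 * h b - p' (spo a) * ((spo a) ^ 2 - b ^ 2) < 0 := by
      nlinarith [hFb]
    by_contra hcon
    push_neg at hcon
    have := GSA.antitoneOn ⟨hsAa.le, le_max_left _ _⟩ ⟨hsAb.le, le_max_right _ _⟩ hcon
    linarith
  refine ⟨stepC, ?_, ?_⟩
  · -- limit at τ2i from the left
    have hnon : (Set.Ioo τ1e τ2i).Nonempty := ⟨(τ1e + τ2i)/2, by constructor <;> linarith⟩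
    have hbddB : BddBelow (spo '' Set.Ioo τ1e τ2i) := by
      refine ⟨τ2i, fun z hz => ?_⟩
      obtain ⟨t, ht, rfl⟩ := hz
      exact (stepA t ht).le
    have hlim1 := AntitoneOn.tendsto_nhdsWithin_Ioo_left hnon stepC.antitoneOn hbddB
    set L := sInf (spo '' Set.Ioo τ1e τ2i) with hLdef
    have hLge : τ2i ≤ L := by
      apply le_csInf (hnon.image spo)
      rintro z ⟨t, ht, rfl⟩
      exact (stepA t ht).le
    have hLeq : L = τ2i := by
      by_contra hne
      have hLgt : τ2i < L := lt_of_le_of_ne hLge (Ne.symm hne)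
      have h1L : 1 < L := h1τ2i.trans hLgt
      have hidt : Filter.Tendsto (fun τ : ℝ => τ) (nhdsWithin τ2i (Set.Iio τ2i)) (nhds τ2i) :=
        Filter.tendsto_id.mono_left nhdsWithin_le_nhds
      have hhL : Filter.Tendsto (fun τ => h (spo τ)) (nhdsWithin τ2i (Set.Iio τ2i)) (nhds (h L)) :=
        ((hderivh L h1L).continuousAt.tendsto).comp hlim1
      have hpL : Filter.Tendsto (fun τ => p' (spo τ)) (nhdsWithin τ2i (Set.Iio τ2i)) (nhds (p' L)) :=
        ((hderiv2 L h1L).continuousAt.tendsto).comp hlim1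
      have hhτ : Filter.Tendsto (fun τ => h τ) (nhdsWithin τ2i (Set.Iio τ2i)) (nhds (h τ2i)) :=
        ((hderivh τ2i h1τ2i).continuousAt.tendsto).comp hidt
      have hsq : Filter.Tendsto (fun τ => (spo τ) ^ 2 - τ ^ 2) (nhdsWithin τ2i (Set.Iio τ2i))
          (nhds (L ^ 2 - τ2i ^ 2)) := (hlim1.pow 2).sub (hidt.pow 2)
      have hΦ : Filter.Tendsto
          (fun τ => 2 * h (spo τ) - 2 * h τ - p' (spo τ) * ((spo τ) ^ 2 - τ ^ 2))
          (nhdsWithin τ2i (Set.Iio τ2i))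
          (nhds (2 * h L - 2 * h τ2i - p' L * (L ^ 2 - τ2i ^ 2))) :=
        ((hhL.const_mul 2).sub (hhτ.const_mul 2)).sub (hpL.mul hsq)
      have hΦ0 : Filter.Tendsto
          (fun τ => 2 * h (spo τ) - 2 * h τ - p' (spo τ) * ((spo τ) ^ 2 - τ ^ 2))
          (nhdsWithin τ2i (Set.Iio τ2i)) (nhds 0) := by
        apply Filter.Tendsto.congr' _ tendsto_const_nhds
        filter_upwards [Ioo_mem_nhdsLT hτ1eτ2i] with τ hτ
        linarith [heqm τ hτ]
      have h0 : 2 * h L - 2 * h τ2i - p' L * (L ^ 2 - τ2i ^ 2) = 0 :=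
        tendsto_nhds_unique hΦ hΦ0
      have GSA : StrictAntiOn (fun t => 2 * h t - 2 * h τ2i - p' t * (t ^ 2 - τ2i ^ 2))
          (Set.Icc τ2i L) := by
        apply statement5_aux_anti (fun t ht => statement5_Gderiv hderivh hderiv2 τ2i ht) h1τ2i
        intro t ht
        have hpos2 : (0:ℝ) < t ^ 2 - τ2i ^ 2 := by nlinarith [ht.1]
        have := mul_pos (hpp2 t ht.1) hpos2
        linarith
      have := GSA ⟨le_refl τ2i, hLge⟩ ⟨hLge, le_refl L⟩ hLgt
      simp only at this
      nlinarith
    rw [hLeq] at hlim1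
    exact hlim1
  · -- limit at τ1e from the right
    have hnon : (Set.Ioo τ1e τ2i).Nonempty := ⟨(τ1e + τ2i)/2, by constructor <;> linarith⟩
    have hbddA : BddAbove (spo '' Set.Ioo τ1e τ2i) := by
      refine ⟨τ2e, fun z hz => ?_⟩
      obtain ⟨t, ht, rfl⟩ := hz
      exact (stepB t ht).le
    have hlim2 := AntitoneOn.tendsto_nhdsWithin_Ioo_right hnon stepC.antitoneOn hbddA
    set M := sSup (spo '' Set.Ioo τ1e τ2i) with hMdef
    have hMle : M ≤ τ2e := by
      apply csSup_le (hnon.image spo)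
      rintro z ⟨t, ht, rfl⟩
      exact (stepB t ht).le
    have ht0 : (τ1e + τ2i)/2 ∈ Set.Ioo τ1e τ2i := by constructor <;> linarith
    have hMgt : τ2i < M :=
      lt_of_lt_of_le (stepA _ ht0) (le_csSup hbddA ⟨_, ht0, rfl⟩)
    have hMeq : M = τ2e := by
      by_contra hne
      have hMlt : M < τ2e := lt_of_le_of_ne hMle hne
      have h1M : 1 < M := h1τ2i.trans hMgt
      have hidt : Filter.Tendsto (fun τ : ℝ => τ) (nhdsWithin τ1e (Set.Ioi τ1e)) (nhds τ1e) :=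
        Filter.tendsto_id.mono_left nhdsWithin_le_nhds
      have hhM : Filter.Tendsto (fun τ => h (spo τ)) (nhdsWithin τ1e (Set.Ioi τ1e)) (nhds (h M)) :=
        ((hderivh M h1M).continuousAt.tendsto).comp hlim2
      have hpM : Filter.Tendsto (fun τ => p' (spo τ)) (nhdsWithin τ1e (Set.Ioi τ1e)) (nhds (p' M)) :=
        ((hderiv2 M h1M).continuousAt.tendsto).comp hlim2
      have hhτ : Filter.Tendsto (fun τ => h τ) (nhdsWithin τ1e (Set.Ioi τ1e)) (nhds (h τ1e)) :=
        ((hderivh τ1e h1τ1e).continuousAt.tendsto).comp hidt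
      have hsq : Filter.Tendsto (fun τ => (spo τ) ^ 2 - τ ^ 2) (nhdsWithin τ1e (Set.Ioi τ1e))
          (nhds (M ^ 2 - τ1e ^ 2)) := (hlim2.pow 2).sub (hidt.pow 2)
      have hΦ : Filter.Tendsto
          (fun τ => 2 * h (spo τ) - 2 * h τ - p' (spo τ) * ((spo τ) ^ 2 - τ ^ 2))
          (nhdsWithin τ1e (Set.Ioi τ1e))
          (nhds (2 * h M - 2 * h τ1e - p' M * (M ^ 2 - τ1e ^ 2))) :=
        ((hhM.const_mul 2).sub (hhτ.const_mul 2)).sub (hpM.mul hsq)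
      have hΦ0 : Filter.Tendsto
          (fun τ => 2 * h (spo τ) - 2 * h τ - p' (spo τ) * ((spo τ) ^ 2 - τ ^ 2))
          (nhdsWithin τ1e (Set.Ioi τ1e)) (nhds 0) := by
        apply Filter.Tendsto.congr' _ tendsto_const_nhds
        filter_upwards [Ioo_mem_nhdsGT hτ1eτ2i] with τ hτ
        linarith [heqm τ hτ]
      have h0 : 2 * h M - 2 * h τ1e - p' M * (M ^ 2 - τ1e ^ 2) = 0 :=
        tendsto_nhds_unique hΦ hΦ0
      have GSA : StrictAntiOn (fun t => 2 * h t - 2 * h τ1e - p' t * (t ^ 2 - τ1e ^ 2))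
          (Set.Icc τ2i τ2e) := by
        apply statement5_aux_anti (fun t ht => statement5_Gderiv hderivh hderiv2 τ1e ht) h1τ2i
        intro t ht
        have hpos2 : (0:ℝ) < t ^ 2 - τ1e ^ 2 := by nlinarith [ht.1]
        have := mul_pos (hpp2 t ht.1) hpos2
        linarith
      have hGτ2e : 2 * h τ2e - 2 * h τ1e - p' τ2e * (τ2e ^ 2 - τ1e ^ 2) = 0 := by
        linear_combination he2c + (τ2e ^ 2 - τ1e ^ 2) * he1
      have := GSA ⟨hMgt.le, hMle⟩ ⟨hτ2e1.le, le_refl τ2e⟩ hMlt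
      simp only at this
      nlinarith
    rw [hMeq] at hlim2
    exact hlim2
end

section
/- For every τ ∈ (τ₁ᵉ, τ₁ⁱ) and every s ∈ (τ, s_pr(τ)) one has the strict Liu entropy inequality −(2h(s_pr(τ)) − 2h(τ))/(s_pr(τ)² − τ²) > −(2h(s) − 2h(τ))/(s² − τ²) (Proposition 1.3, entropy inequality for pre-sonic shocks). -/
theorem statement_7
    (p p' p'' h : ℝ → ℝ)
    (hderiv1 : ∀ τ : ℝ, 1 < τ → HasDerivAt p (p' τ) τ)
    (hderiv2 : ∀ τ : ℝ, 1 < τ → HasDerivAt p' (p'' τ) τ)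
    (hcont : ContinuousOn p'' (Set.Ioi 1))
    (hderivh : ∀ τ : ℝ, 1 < τ → HasDerivAt h (τ * p' τ) τ)
    (τ1i τ2i : ℝ) (hτ1i : 1 < τ1i) (hτi : τ1i < τ2i)
    (hp'neg : ∀ τ : ℝ, 1 < τ → p' τ < 0)
    (hpp1 : ∀ τ ∈ Set.Ioo 1 τ1i, 0 < p'' τ)
    (hpp2 : ∀ τ : ℝ, τ2i < τ → 0 < p'' τ)
    (hpp3 : ∀ τ ∈ Set.Ioo τ1i τ2i, p'' τ < 0)
    (τ1a τ2a : ℝ) (hτ1a : τ1a ∈ Set.Ioo 1 τ1i) (hτ2a : τ2i < τ2a)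
    (hpa1 : p' τ1a = p' τ2i) (hpa2 : p' τ2a = p' τ1i)
    (τ1e τ2e : ℝ) (hτ1e : τ1e ∈ Set.Ioo τ1a τ1i) (hτ2e : τ2e ∈ Set.Ioo τ2i τ2a)
    (he1 : p' τ1e = p' τ2e)
    (he2 : p' τ1e = (2 * h τ1e - 2 * h τ2e) / (τ1e ^ 2 - τ2e ^ 2))
    (spr : ℝ → ℝ)
    (hspr : ∀ τ ∈ Set.Ioo τ1e τ1i, τ < spr τ ∧
      p' τ = (2 * h (spr τ) - 2 * h τ) / ((spr τ) ^ 2 - τ ^ 2) ∧ p' (spr τ) < p' τ)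
    (hspr_uniq : ∀ τ ∈ Set.Ioo τ1e τ1i, ∀ s : ℝ, τ < s →
      p' τ = (2 * h s - 2 * h τ) / (s ^ 2 - τ ^ 2) → p' s < p' τ → s = spr τ) :
    ∀ τ ∈ Set.Ioo τ1e τ1i, ∀ s ∈ Set.Ioo τ (spr τ),
      -(2 * h (spr τ) - 2 * h τ) / ((spr τ) ^ 2 - τ ^ 2) >
        -(2 * h s - 2 * h τ) / (s ^ 2 - τ ^ 2) := by
  intro τ hτ s hs
  obtain ⟨hτ1, hτ2⟩ := hτ
  obtain ⟨hs1, hs2⟩ := hs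
  obtain ⟨hsp1, hsp2, hsp3⟩ := hspr τ ⟨hτ1, hτ2⟩
  set S := spr τ with hS
  have h1τ : 1 < τ := lt_trans (lt_trans hτ1a.1 hτ1e.1) hτ1
  have hτ0 : 0 < τ := by linarith
  have hSτ2 : τ ^ 2 < S ^ 2 := by nlinarith
  have hsτ2 : τ ^ 2 < s ^ 2 := by nlinarith
  have contp' : ContinuousOn p' (Set.Ioi 1) := fun x hx =>
    (hderiv2 x hx).continuousAt.continuousWithinAt
  -- monotonicity of p'
  have mono1 : StrictMonoOn p' (Set.Icc τ τ1i) := by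
    apply strictMonoOn_of_deriv_pos (convex_Icc _ _)
    · exact contp'.mono (fun x hx => lt_of_lt_of_le h1τ hx.1)
    · intro x hx
      rw [interior_Icc] at hx
      rw [(hderiv2 x (by linarith [hx.1])).deriv]
      exact hpp1 x ⟨by linarith [hx.1], hx.2⟩
  have anti1 : StrictAntiOn p' (Set.Icc τ1i τ2i) := by
    apply strictAntiOn_of_deriv_neg (convex_Icc _ _)
    · exact contp'.mono (fun x hx => lt_of_lt_of_le hτ1i hx.1)
    · intro x hx
      rw [interior_Icc] at hx
      rw [(hderiv2 x (by linarith [hx.1])).deriv]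
      exact hpp3 x hx
  have mono2 : StrictMonoOn p' (Set.Icc τ2i S) := by
    apply strictMonoOn_of_deriv_pos (convex_Icc _ _)
    · exact contp'.mono (fun x hx => lt_of_lt_of_le (by linarith) hx.1)
    · intro x hx
      rw [interior_Icc] at hx
      rw [(hderiv2 x (by linarith [hx.1])).deriv]
      exact hpp2 x hx.1
  -- single sign change lemma
  have key : ∀ s1 s2 : ℝ, τ < s1 → s1 < s2 → s2 ≤ S → p' s1 ≤ p' τ → p' s2 < p' τ := by
    intro s1 s2 h1 h12 h2S hle
    have hs1i : τ1i < s1 := by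
      by_contra hc
      push_neg at hc
      have := mono1 ⟨le_refl τ, le_of_lt hτ2⟩ ⟨le_of_lt h1, hc⟩ h1
      linarith
    by_cases hc : s2 ≤ τ2i
    · have := anti1 ⟨le_of_lt hs1i, by linarith⟩ ⟨by linarith, hc⟩ h12
      linarith
    · push_neg at hc
      have h2 : p' s2 ≤ p' S := by
        rcases eq_or_lt_of_le h2S with he | hlt
        · rw [he]
        · exact le_of_lt (mono2 ⟨le_of_lt hc, h2S⟩ ⟨by linarith, le_refl _⟩ hlt)
      linarith
  -- the function F
  set F : ℝ → ℝ := fun x => 2 * h x - 2 * h τ - p' τ * (x ^ 2 - τ ^ 2) with hFdef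
  have hF : ∀ x : ℝ, 1 < x → HasDerivAt F (2 * x * (p' x - p' τ)) x := by
    intro x hx
    have h1 : HasDerivAt (fun y => 2 * h y) (2 * (x * p' x)) x :=
      (hderivh x hx).const_mul 2
    have h2 : HasDerivAt (fun y : ℝ => p' τ * (y ^ 2 - τ ^ 2)) (p' τ * (2 * x)) x := by
      have hsq : HasDerivAt (fun y : ℝ => y ^ 2 - τ ^ 2) (2 * x) x := by
        simpa using ((hasDerivAt_pow 2 x).sub_const (τ ^ 2))
      exact hsq.const_mul (p' τ)
    have := (h1.sub_const (2 * h τ)).sub h2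
    convert this using 1
    · rfl
    · rfl
    · rfl
    ring
  have hFτ : F τ = 0 := by
    show 2 * h τ - 2 * h τ - p' τ * (τ ^ 2 - τ ^ 2) = 0
    ring
  have hSne : S ^ 2 - τ ^ 2 ≠ 0 := (sub_pos.mpr hSτ2).ne'
  have hFS : F S = 0 := by
    have := (eq_div_iff hSne).mp hsp2
    show 2 * h S - 2 * h τ - p' τ * (S ^ 2 - τ ^ 2) = 0
    linarith
  -- F s > 0
  have hFs : 0 < F s := by
    by_cases hc : p' τ < p' s
    · have hmono : StrictMonoOn F (Set.Icc τ s) := by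
        apply strictMonoOn_of_deriv_pos (convex_Icc _ _)
        · exact fun x hx => (hF x (lt_of_lt_of_le h1τ hx.1)).continuousAt.continuousWithinAt
        · intro x hx
          rw [interior_Icc] at hx
          rw [(hF x (by linarith [hx.1])).deriv]
          have hx1 : p' τ < p' x := by
            by_contra hcc
            push_neg at hcc
            exact absurd (key x s hx.1 hx.2 (le_of_lt hs2) hcc) (not_lt.mpr (le_of_lt hc))
          have hx0 : 0 < x := by linarith [hx.1]
          nlinarith
      have := hmono ⟨le_refl τ, le_of_lt hs1⟩ ⟨le_of_lt hs1, le_refl s⟩ hs1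
      linarith
    · push_neg at hc
      have hanti : StrictAntiOn F (Set.Icc s S) := by
        apply strictAntiOn_of_deriv_neg (convex_Icc _ _)
        · exact fun x hx => (hF x (by linarith [hx.1])).continuousAt.continuousWithinAt
        · intro x hx
          rw [interior_Icc] at hx
          rw [(hF x (by linarith [hx.1])).deriv]
          have hx1 : p' x < p' τ := key s x hs1 hx.1 (le_of_lt hx.2) hc
          have hx0 : 0 < x := by linarith [hx.1]
          nlinarith
      have := hanti ⟨le_refl s, le_of_lt hs2⟩ ⟨le_of_lt hs2, le_refl S⟩ hs2
      linarith
  -- conclude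
  have hpos : 0 < s ^ 2 - τ ^ 2 := by linarith
  rw [neg_div, neg_div, ← hsp2]
  have : p' τ < (2 * h s - 2 * h τ) / (s ^ 2 - τ ^ 2) := by
    rw [lt_div_iff₀ hpos]
    have : F s = 2 * h s - 2 * h τ - p' τ * (s ^ 2 - τ ^ 2) := rfl
    linarith
  exact neg_lt_neg this
end

section
/- For every τ ∈ (τ₁ᵉ, τ₁ⁱ) one has s_pr(τ) < s_po(τ) (Proposition 1.4: the pre-sonic state lies strictly below the post-sonic state). -/
theorem statement_8
    (p p' p'' h : ℝ → ℝ)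
    (hderiv1 : ∀ τ : ℝ, 1 < τ → HasDerivAt p (p' τ) τ)
    (hderiv2 : ∀ τ : ℝ, 1 < τ → HasDerivAt p' (p'' τ) τ)
    (hcont : ContinuousOn p'' (Set.Ioi 1))
    (hderivh : ∀ τ : ℝ, 1 < τ → HasDerivAt h (τ * p' τ) τ)
    (τ1i τ2i : ℝ) (hτ1i : 1 < τ1i) (hτi : τ1i < τ2i)
    (hp'neg : ∀ τ : ℝ, 1 < τ → p' τ < 0)
    (hpp1 : ∀ τ ∈ Set.Ioo 1 τ1i, 0 < p'' τ)
    (hpp2 : ∀ τ : ℝ, τ2i < τ → 0 < p'' τ)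
    (hpp3 : ∀ τ ∈ Set.Ioo τ1i τ2i, p'' τ < 0)
    (τ1a τ2a : ℝ) (hτ1a : τ1a ∈ Set.Ioo 1 τ1i) (hτ2a : τ2i < τ2a)
    (hpa1 : p' τ1a = p' τ2i) (hpa2 : p' τ2a = p' τ1i)
    (τ1e τ2e : ℝ) (hτ1e : τ1e ∈ Set.Ioo τ1a τ1i) (hτ2e : τ2e ∈ Set.Ioo τ2i τ2a)
    (he1 : p' τ1e = p' τ2e)
    (he2 : p' τ1e = (2 * h τ1e - 2 * h τ2e) / (τ1e ^ 2 - τ2e ^ 2))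
    (spo : ℝ → ℝ)
    (hspo : ∀ τ ∈ Set.Ioo τ1e τ2i, τ < spo τ ∧
      p' (spo τ) = (2 * h (spo τ) - 2 * h τ) / ((spo τ) ^ 2 - τ ^ 2) ∧ p' (spo τ) < p' τ)
    (hspo_uniq : ∀ τ ∈ Set.Ioo τ1e τ2i, ∀ s : ℝ, τ < s →
      p' s = (2 * h s - 2 * h τ) / (s ^ 2 - τ ^ 2) → p' s < p' τ → s = spo τ)
    (spr : ℝ → ℝ)
    (hspr : ∀ τ ∈ Set.Ioo τ1e τ1i, τ < spr τ ∧
      p' τ = (2 * h (spr τ) - 2 * h τ) / ((spr τ) ^ 2 - τ ^ 2) ∧ p' (spr τ) < p' τ)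
    (hspr_uniq : ∀ τ ∈ Set.Ioo τ1e τ1i, ∀ s : ℝ, τ < s →
      p' τ = (2 * h s - 2 * h τ) / (s ^ 2 - τ ^ 2) → p' s < p' τ → s = spr τ) :
    ∀ τ ∈ Set.Ioo τ1e τ1i, spr τ < spo τ := by

  intro τ hτ
  obtain ⟨hτ1, hτ2⟩ := hτ
  have hτ1e1 : (1:ℝ) < τ1e := lt_trans hτ1a.1 hτ1e.1
  have hτgt1 : (1:ℝ) < τ := lt_trans hτ1e1 hτ1
  obtain ⟨hs2τ, hs2eq, hs2lt⟩ := hspo τ ⟨hτ1, lt_trans hτ2 hτi⟩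
  obtain ⟨hs1τ, hs1eq, hs1lt⟩ := hspr τ ⟨hτ1, hτ2⟩
  set s1 := spr τ with hs1def
  set s2 := spo τ with hs2def
  have hc' : ContinuousOn p' (Set.Ioi 1) := fun x hx =>
    ((hderiv2 x hx).differentiableAt.continuousAt).continuousWithinAt
  have hdp' : ∀ x : ℝ, 1 < x → deriv p' x = p'' x := fun x hx => (hderiv2 x hx).deriv
  by_contra hcon
  push_neg at hcon
  have hs1gt1 : 1 < s1 := lt_trans hτgt1 hs1τ
  have hs2gt1 : 1 < s2 := lt_trans hτgt1 hs2τ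
  have hne : s2 < s1 := by
    rcases lt_or_eq_of_le hcon with hlt | heq
    · exact hlt
    · exfalso
      rw [heq] at hs2eq hs2lt
      rw [← hs1eq] at hs2eq
      exact absurd hs2eq (ne_of_lt hs2lt)
  have hs2τ1i : τ1i < s2 := by
    by_contra hle
    push_neg at hle
    have hmono : StrictMonoOn p' (Set.Icc τ τ1i) := by
      apply strictMonoOn_of_deriv_pos (convex_Icc _ _)
      · exact hc'.mono (fun x hx => lt_of_lt_of_le hτgt1 hx.1)
      · intro x hx
        rw [interior_Icc] at hx
        rw [hdp' x (lt_trans hτgt1 hx.1)]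
        exact hpp1 x ⟨lt_trans hτgt1 hx.1, hx.2⟩
    have := hmono ⟨le_refl τ, le_of_lt hτ2⟩ ⟨le_of_lt hs2τ, hle⟩ hs2τ
    exact absurd hs2lt (not_lt.mpr this.le)
  have hkey : ∀ s ∈ Set.Ioo s2 s1, p' s < p' τ := by
    intro s hs
    have hsτ1i : τ1i < s := lt_trans hs2τ1i hs.1
    rcases le_or_gt s τ2i with hsle | hsgt
    · have hanti : StrictAntiOn p' (Set.Icc τ1i τ2i) := by
        apply strictAntiOn_of_deriv_neg (convex_Icc _ _)
        · exact hc'.mono (fun x hx => lt_of_lt_of_le hτ1i hx.1)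
        · intro x hx
          rw [interior_Icc] at hx
          rw [hdp' x (lt_trans hτ1i hx.1)]
          exact hpp3 x hx
      have h1 : p' s ≤ p' s2 :=
        hanti.antitoneOn ⟨hs2τ1i.le, le_trans hs.1.le hsle⟩ ⟨hsτ1i.le, hsle⟩ hs.1.le
      exact lt_of_le_of_lt h1 hs2lt
    · have hmono : StrictMonoOn p' (Set.Icc τ2i s1) := by
        apply strictMonoOn_of_deriv_pos (convex_Icc _ _)
        · exact hc'.mono (fun x hx => lt_of_lt_of_le (lt_trans hτ1i hτi) hx.1)
        · intro x hx
          rw [interior_Icc] at hx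
          rw [hdp' x (lt_trans (lt_trans hτ1i hτi) hx.1)]
          exact hpp2 x hx.1
      have h1 : p' s ≤ p' s1 :=
        hmono.monotoneOn ⟨hsgt.le, hs.2.le⟩ ⟨(lt_trans hsgt hs.2).le, le_refl s1⟩ hs.2.le
      exact lt_of_le_of_lt h1 hs1lt
  set F : ℝ → ℝ := fun s => 2 * h s - 2 * h τ - p' τ * (s ^ 2 - τ ^ 2) with hF
  have hFderiv : ∀ s : ℝ, 1 < s → HasDerivAt F (2 * (s * p' s) - p' τ * (2 * s)) s := by
    intro s hs
    have h1 := ((hderivh s hs).const_mul 2).sub_const (2 * h τ)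
    have h2 : HasDerivAt (fun s : ℝ => p' τ * (s ^ 2 - τ ^ 2)) (p' τ * (2 * s)) s := by
      have h3 : HasDerivAt (fun s : ℝ => s ^ 2 - τ ^ 2) (2 * s) s := by
        simpa using ((hasDerivAt_pow 2 s).sub_const (τ ^ 2))
      exact h3.const_mul (p' τ)
    exact h1.sub h2
  have hFanti : StrictAntiOn F (Set.Icc s2 s1) := by
    apply strictAntiOn_of_deriv_neg (convex_Icc _ _)
    · intro x hx
      have hx1 : 1 < x := lt_of_lt_of_le hs2gt1 hx.1
      exact (hFderiv x hx1).differentiableAt.continuousAt.continuousWithinAt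
    · intro x hx
      rw [interior_Icc] at hx
      have hx1 : 1 < x := lt_trans hs2gt1 hx.1
      rw [(hFderiv x hx1).deriv]
      have hplt : p' x < p' τ := hkey x hx
      nlinarith
  have hs1pos : 0 < s1 ^ 2 - τ ^ 2 := by nlinarith
  have hs2pos : 0 < s2 ^ 2 - τ ^ 2 := by nlinarith
  rw [eq_div_iff (ne_of_gt hs1pos)] at hs1eq
  rw [eq_div_iff (ne_of_gt hs2pos)] at hs2eq
  have hFs1 : F s1 = 0 := by simp only [hF]; linarith
  have hFs2 : F s2 < 0 := by
    have heq2 : F s2 = (p' s2 - p' τ) * (s2 ^ 2 - τ ^ 2) := by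
      simp only [hF]; rw [← hs2eq]; ring
    rw [heq2]
    exact mul_neg_of_neg_of_pos (by linarith) hs2pos
  have := hFanti ⟨le_refl s2, hne.le⟩ ⟨hne.le, le_refl s1⟩ hne
  linarith
end

section
/- Let τ_f ∈ (τ₁ᵉ, τ₁ⁱ) and let τ_b ∈ (1, ∞) with τ_b ≠ τ_f. Then the double inequality p'(τ_b) < (2h(τ_b) − 2h(τ_f))/(τ_b² − τ_f²) < p'(τ_f) holds if and only if τ_b ∈ (1, τ_f) ∪ (s_pr(τ_f), s_po(τ_f)) (Proposition 1.5, characterization of transonic shocks). -/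
private lemma myMono {f f' : ℝ → ℝ} {x y : ℝ} (hx : 1 < x) (hxy : x < y)
    (hd : ∀ s : ℝ, 1 < s → HasDerivAt f (f' s) s)
    (hpos : ∀ s ∈ Set.Ioo x y, 0 < f' s) : f x < f y := by
  have H : StrictMonoOn f (Set.Icc x y) := by
    apply strictMonoOn_of_deriv_pos (convex_Icc x y)
    · intro s hs
      exact (hd s (lt_of_lt_of_le hx hs.1)).differentiableAt.continuousAt.continuousWithinAt
    · intro s hs
      rw [interior_Icc] at hs
      rw [(hd s (hx.trans hs.1)).deriv]
      exact hpos s hs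
  exact H (Set.left_mem_Icc.2 hxy.le) (Set.right_mem_Icc.2 hxy.le) hxy

private lemma myAnti {f f' : ℝ → ℝ} {x y : ℝ} (hx : 1 < x) (hxy : x < y)
    (hd : ∀ s : ℝ, 1 < s → HasDerivAt f (f' s) s)
    (hneg : ∀ s ∈ Set.Ioo x y, f' s < 0) : f y < f x := by
  have H : StrictAntiOn f (Set.Icc x y) := by
    apply strictAntiOn_of_deriv_neg (convex_Icc x y)
    · intro s hs
      exact (hd s (lt_of_lt_of_le hx hs.1)).differentiableAt.continuousAt.continuousWithinAt
    · intro s hs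
      rw [interior_Icc] at hs
      rw [(hd s (hx.trans hs.1)).deriv]
      exact hneg s hs
  exact H (Set.left_mem_Icc.2 hxy.le) (Set.right_mem_Icc.2 hxy.le) hxy

set_option maxHeartbeats 1000000 in
theorem statement_9
    (p p' p'' h : ℝ → ℝ)
    (hderiv1 : ∀ τ : ℝ, 1 < τ → HasDerivAt p (p' τ) τ)
    (hderiv2 : ∀ τ : ℝ, 1 < τ → HasDerivAt p' (p'' τ) τ)
    (hcont : ContinuousOn p'' (Set.Ioi 1))
    (hderivh : ∀ τ : ℝ, 1 < τ → HasDerivAt h (τ * p' τ) τ)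
    (τ1i τ2i : ℝ) (hτ1i : 1 < τ1i) (hτi : τ1i < τ2i)
    (hp'neg : ∀ τ : ℝ, 1 < τ → p' τ < 0)
    (hpp1 : ∀ τ ∈ Set.Ioo 1 τ1i, 0 < p'' τ)
    (hpp2 : ∀ τ : ℝ, τ2i < τ → 0 < p'' τ)
    (hpp3 : ∀ τ ∈ Set.Ioo τ1i τ2i, p'' τ < 0)
    (τ1a τ2a : ℝ) (hτ1a : τ1a ∈ Set.Ioo 1 τ1i) (hτ2a : τ2i < τ2a)
    (hpa1 : p' τ1a = p' τ2i) (hpa2 : p' τ2a = p' τ1i)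
    (τ1e τ2e : ℝ) (hτ1e : τ1e ∈ Set.Ioo τ1a τ1i) (hτ2e : τ2e ∈ Set.Ioo τ2i τ2a)
    (he1 : p' τ1e = p' τ2e)
    (he2 : p' τ1e = (2 * h τ1e - 2 * h τ2e) / (τ1e ^ 2 - τ2e ^ 2))
    (spo : ℝ → ℝ)
    (hspo : ∀ τ ∈ Set.Ioo τ1e τ2i, τ < spo τ ∧
      p' (spo τ) = (2 * h (spo τ) - 2 * h τ) / ((spo τ) ^ 2 - τ ^ 2) ∧ p' (spo τ) < p' τ)
    (hspo_uniq : ∀ τ ∈ Set.Ioo τ1e τ2i, ∀ s : ℝ, τ < s →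
      p' s = (2 * h s - 2 * h τ) / (s ^ 2 - τ ^ 2) → p' s < p' τ → s = spo τ)
    (spr : ℝ → ℝ)
    (hspr : ∀ τ ∈ Set.Ioo τ1e τ1i, τ < spr τ ∧
      p' τ = (2 * h (spr τ) - 2 * h τ) / ((spr τ) ^ 2 - τ ^ 2) ∧ p' (spr τ) < p' τ)
    (hspr_uniq : ∀ τ ∈ Set.Ioo τ1e τ1i, ∀ s : ℝ, τ < s →
      p' τ = (2 * h s - 2 * h τ) / (s ^ 2 - τ ^ 2) → p' s < p' τ → s = spr τ) :
    ∀ τf ∈ Set.Ioo τ1e τ1i, ∀ τb : ℝ, 1 < τb → τb ≠ τf →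
      ((p' τb < (2 * h τb - 2 * h τf) / (τb ^ 2 - τf ^ 2) ∧
        (2 * h τb - 2 * h τf) / (τb ^ 2 - τf ^ 2) < p' τf) ↔
        τb ∈ Set.Ioo 1 τf ∪ Set.Ioo (spr τf) (spo τf)) := by
  intro τf hτf τb hτb1 hτbne
  obtain ⟨hτfe, hτf1i⟩ := hτf
  have h1e : 1 < τ1e := lt_trans hτ1a.1 hτ1e.1
  have h1f : 1 < τf := lt_trans h1e hτfe
  have h0f : (0:ℝ) < τf := by linarith
  have h1i2 : (1:ℝ) < τ2i := hτ1i.trans hτi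
  -- monotonicity of p'
  have hmono1 : ∀ x y : ℝ, 1 < x → x < y → y ≤ τ1i → p' x < p' y := by
    intro x y hx hxy hy
    exact myMono hx hxy (fun s hs => hderiv2 s hs)
      (fun s hs => hpp1 s ⟨hx.trans hs.1, lt_of_lt_of_le hs.2 hy⟩)
  have hanti2 : ∀ x y : ℝ, τ1i ≤ x → x < y → y ≤ τ2i → p' y < p' x := by
    intro x y hx hxy hy
    exact myAnti (lt_of_lt_of_le hτ1i hx) hxy (fun s hs => hderiv2 s hs)
      (fun s hs => hpp3 s ⟨lt_of_le_of_lt hx hs.1, lt_of_lt_of_le hs.2 hy⟩)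
  have hmono3 : ∀ x y : ℝ, τ2i ≤ x → x < y → p' x < p' y := by
    intro x y hx hxy
    exact myMono (lt_of_lt_of_le h1i2 hx) hxy (fun s hs => hderiv2 s hs)
      (fun s hs => hpp2 s (lt_of_le_of_lt hx hs.1))
  -- F and G
  set F : ℝ → ℝ := fun s => 2 * h s - 2 * h τf - p' τf * (s ^ 2 - τf ^ 2) with hFdef
  set G : ℝ → ℝ := fun s => 2 * h s - 2 * h τf - p' s * (s ^ 2 - τf ^ 2) with hGdef
  have hsq : ∀ s : ℝ, HasDerivAt (fun t : ℝ => t ^ 2 - τf ^ 2) (2 * s) s := by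
    intro s
    simpa using (hasDerivAt_pow 2 s).sub_const (τf ^ 2)
  have hF : ∀ s : ℝ, 1 < s → HasDerivAt F (2 * s * (p' s - p' τf)) s := by
    intro s hs
    have h1 := ((hderivh s hs).const_mul 2).sub_const (2 * h τf)
    have h2 := (hsq s).const_mul (p' τf)
    have := h1.sub h2
    exact this.congr_deriv (by ring)
  have hG : ∀ s : ℝ, 1 < s → HasDerivAt G (-(p'' s) * (s ^ 2 - τf ^ 2)) s := by
    intro s hs
    have h1 := ((hderivh s hs).const_mul 2).sub_const (2 * h τf)
    have h2 := (hderiv2 s hs).mul (hsq s)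
    have := h1.sub h2
    exact this.congr_deriv (by ring)
  have hFτf : F τf = 0 := by simp [hFdef]
  have hGτf : G τf = 0 := by simp [hGdef]
  have hFG : ∀ s : ℝ, F s - G s = (p' s - p' τf) * (s ^ 2 - τf ^ 2) := by
    intro s; simp only [hFdef, hGdef]; ring
  -- IVT points σ σ'
  have hcontIcc : ∀ x y : ℝ, 1 < x → ContinuousOn p' (Set.Icc x y) := by
    intro x y hx s hs
    exact ((hderiv2 s (lt_of_lt_of_le hx hs.1)).differentiableAt.continuousAt).continuousWithinAt
  have hp2i_lt : p' τ2i < p' τf := by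
    rw [← hpa1]
    exact hmono1 τ1a τf hτ1a.1 (lt_trans hτ1e.1 hτfe) hτf1i.le
  have hlt_p1i : p' τf < p' τ1i := hmono1 τf τ1i h1f hτf1i le_rfl
  obtain ⟨σ, hσmem, hσeq⟩ :=
    intermediate_value_Ioo' hτi.le (hcontIcc τ1i τ2i hτ1i) ⟨hp2i_lt, hlt_p1i⟩
  obtain ⟨σ', hσ'mem, hσ'eq⟩ :=
    intermediate_value_Ioo hτ2a.le (hcontIcc τ2i τ2a h1i2)
      ⟨hp2i_lt, by rw [hpa2]; exact hlt_p1i⟩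
  have hfσ : τf < σ := hτf1i.trans hσmem.1
  have h1σ : (1:ℝ) < σ := h1f.trans hfσ
  -- sign of p' - p' τf
  have hφpos : ∀ s : ℝ, τf < s → s < σ → p' τf < p' s := by
    intro s hfs hsσ
    rcases le_or_gt s τ1i with hc | hc
    · exact hmono1 τf s h1f hfs hc
    · rw [← hσeq]
      exact hanti2 s σ hc.le hsσ hσmem.2.le
  have hφneg : ∀ s : ℝ, σ < s → s < σ' → p' s < p' τf := by
    intro s hσs hsσ'
    rcases le_or_gt s τ2i with hc | hc
    · rw [← hσeq]; exact hanti2 σ s hσmem.1.le hσs hc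
    · rw [← hσ'eq]; exact hmono3 s σ' hc.le hsσ'
  have hloc : ∀ s : ℝ, τf < s → p' s < p' τf → σ < s ∧ s < σ' := by
    intro s hfs hps
    constructor
    · by_contra hle
      push_neg at hle
      rcases eq_or_lt_of_le hle with he | he
      · rw [he, hσeq] at hps; exact lt_irrefl _ hps
      · exact absurd (hφpos s hfs he) (by linarith)
    · by_contra hle
      push_neg at hle
      rcases eq_or_lt_of_le hle with he | he
      · rw [← he, hσ'eq] at hps; exact lt_irrefl _ hps
      · have := hmono3 σ' s hσ'mem.1.le he
        rw [hσ'eq] at this; linarith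
  -- F monotone facts
  have Fmono : ∀ x y : ℝ, τf ≤ x → x < y → y ≤ σ → F x < F y := by
    intro x y hx hxy hy
    refine myMono (lt_of_lt_of_le h1f hx) hxy hF (fun s hs => ?_)
    have h1 : p' τf < p' s := hφpos s (lt_of_le_of_lt hx hs.1) (lt_of_lt_of_le hs.2 hy)
    have h2 : (0:ℝ) < s := by
      have := lt_of_le_of_lt hx hs.1; linarith
    have hh := mul_pos h2 (sub_pos.2 h1)
    linarith
  have Fanti : ∀ x y : ℝ, σ ≤ x → x < y → y ≤ σ' → F y < F x := by
    intro x y hx hxy hy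
    refine myAnti (lt_of_lt_of_le h1σ hx) hxy hF (fun s hs => ?_)
    have h1 : p' s < p' τf := hφneg s (lt_of_le_of_lt hx hs.1) (lt_of_lt_of_le hs.2 hy)
    have h2 : (0:ℝ) < s := by
      have := lt_of_le_of_lt hx hs.1; linarith
    have hh := mul_pos h2 (sub_pos.2 h1)
    linarith
  have Fleft : ∀ x : ℝ, 1 < x → x < τf → F τf < F x := by
    intro x hx hxf
    refine myAnti hx hxf hF (fun s hs => ?_)
    have h1 : p' s < p' τf := hmono1 s τf (hx.trans hs.1) hs.2 hτf1i.le
    have h2 : (0:ℝ) < s := by linarith [hx.trans hs.1]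
    have hh := mul_pos h2 (sub_pos.2 h1)
    linarith
  -- G monotone facts
  have Gmono2 : ∀ x y : ℝ, σ ≤ x → x < y → y ≤ τ2i → G x < G y := by
    intro x y hx hxy hy
    refine myMono (lt_of_lt_of_le h1σ hx) hxy hG (fun s hs => ?_)
    have hs1 : τ1i < s := hσmem.1.trans (lt_of_le_of_lt hx hs.1)
    have h1 : p'' s < 0 := hpp3 s ⟨hs1, lt_of_lt_of_le hs.2 hy⟩
    have h2 : τf ^ 2 < s ^ 2 := by
      have hfs : τf < s := by linarith [lt_of_le_of_lt hx hs.1, hfσ]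
      exact pow_lt_pow_left₀ hfs h0f.le two_ne_zero
    exact mul_pos (by linarith) (by linarith)
  have Ganti3 : ∀ x y : ℝ, τ2i ≤ x → x < y → y ≤ σ' → G y < G x := by
    intro x y hx hxy hy
    refine myAnti (lt_of_lt_of_le h1i2 hx) hxy hG (fun s hs => ?_)
    have h1 : 0 < p'' s := hpp2 s (lt_of_le_of_lt hx hs.1)
    have h2 : τf ^ 2 < s ^ 2 := by
      have hfs : τf < s := by linarith [lt_of_le_of_lt hx hs.1, hτf1i.trans hτi]
      exact pow_lt_pow_left₀ hfs h0f.le two_ne_zero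
    have hh := mul_pos h1 (sub_pos.2 h2)
    linarith
  have Gleft : ∀ x : ℝ, 1 < x → x < τf → G x < G τf := by
    intro x hx hxf
    refine myMono hx hxf hG (fun s hs => ?_)
    have h1 : 0 < p'' s := hpp1 s ⟨hx.trans hs.1, hs.2.trans hτf1i⟩
    have h2 : s ^ 2 < τf ^ 2 := by
      have h0s : (0:ℝ) < s := by linarith [hx.trans hs.1]
      exact pow_lt_pow_left₀ hs.2 h0s.le two_ne_zero
    have hh := mul_pos h1 (sub_pos.2 h2)
    linarith
  -- special points
  obtain ⟨hr1, hr2, hr3⟩ := hspr τf ⟨hτfe, hτf1i⟩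
  obtain ⟨ho1, ho2, ho3⟩ := hspo τf ⟨hτfe, hτf1i.trans hτi⟩
  set r := spr τf
  set o := spo τf
  have hrne : r ^ 2 - τf ^ 2 ≠ 0 :=
    ne_of_gt (sub_pos.2 (pow_lt_pow_left₀ hr1 h0f.le two_ne_zero))
  have hone : o ^ 2 - τf ^ 2 ≠ 0 :=
    ne_of_gt (sub_pos.2 (pow_lt_pow_left₀ ho1 h0f.le two_ne_zero))
  have hFr : F r = 0 := by
    field_simp [hrne] at hr2
    simp only [hFdef]
    linarith
  have hGo : G o = 0 := by
    field_simp [hone] at ho2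
    simp only [hGdef]
    linarith
  have hrloc := hloc r hr1 hr3
  have holoc := hloc o ho1 ho3
  have hFσpos : 0 < F σ := by
    have := Fmono τf σ le_rfl hfσ le_rfl
    linarith
  have hGσ : G σ = F σ := by
    have := hFG σ
    rw [hσeq] at this
    linarith [this]
  have ho2i : τ2i < o := by
    by_contra hle
    push_neg at hle
    have := Gmono2 σ o le_rfl holoc.1 hle
    linarith [hGσ, hFσpos, hGo]
  -- main case split
  rcases lt_trichotomy τb τf with hbf | hbf | hbf
  · -- τb < τf : both inequalities always hold
    have hd : τb ^ 2 - τf ^ 2 < 0 := by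
      have := pow_lt_pow_left₀ hbf (by linarith : (0:ℝ) ≤ τb) (two_ne_zero)
      linarith
    have hFb : 0 < F τb := by linarith [Fleft τb hτb1 hbf]
    have hGb : G τb < 0 := by linarith [Gleft τb hτb1 hbf]
    refine iff_of_true ⟨?_, ?_⟩ (Or.inl ⟨hτb1, hbf⟩)
    · rw [lt_div_iff_of_neg hd]
      simp only [hGdef] at hGb
      linarith
    · rw [div_lt_iff_of_neg hd]
      simp only [hFdef] at hFb
      linarith
  · exact absurd hbf hτbne
  · -- τf < τb
    have hd : 0 < τb ^ 2 - τf ^ 2 :=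
      sub_pos.2 (pow_lt_pow_left₀ hbf h0f.le two_ne_zero)
    constructor
    · rintro ⟨L1, L2⟩
      rw [lt_div_iff₀ hd] at L1
      rw [div_lt_iff₀ hd] at L2
      have hGb : 0 < G τb := by simp only [hGdef]; linarith
      have hFb : F τb < 0 := by simp only [hFdef]; linarith
      have hσb : σ < τb := by
        by_contra hle
        push_neg at hle
        have := Fmono τf τb le_rfl hbf hle
        linarith
      have hbσ' : τb < σ' := by
        by_contra hle
        push_neg at hle
        have hge : p' τf ≤ p' τb := by
          rcases eq_or_lt_of_le hle with he | he
          · rw [← he, hσ'eq]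
          · linarith [hmono3 σ' τb hσ'mem.1.le he, hσ'eq]
        have hid := hFG τb
        have hprod : 0 ≤ (p' τb - p' τf) * (τb ^ 2 - τf ^ 2) :=
          mul_nonneg (sub_nonneg.2 hge) hd.le
        linarith
      refine Or.inr ⟨?_, ?_⟩
      · -- r < τb
        by_contra hle
        push_neg at hle
        rcases eq_or_lt_of_le hle with he | he
        · rw [← he] at hFr; linarith
        · have := Fanti τb r hσb.le he hrloc.2.le
          linarith
      · -- τb < o
        rcases le_or_gt τb τ2i with hc | hc
        · linarith
        · by_contra hle
          push_neg at hle
          rcases eq_or_lt_of_le hle with he | he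
          · rw [he] at hGo; linarith
          · have := Ganti3 o τb ho2i.le he hbσ'.le
            linarith
    · rintro (⟨_, hlt⟩ | ⟨hrb, hbo⟩)
      · linarith
      · have hσr := hrloc.1
        have hoσ' := holoc.2
        have hFb : F τb < 0 := by
          have := Fanti r τb hσr.le hrb (by linarith)
          linarith
        have hGb : 0 < G τb := by
          rcases le_or_gt τb τ2i with hc | hc
          · have := Gmono2 σ τb le_rfl (hσr.trans hrb) hc
            linarith [hGσ]
          · have := Ganti3 τb o hc.le hbo hoσ'.le
            linarith
        constructor
        · rw [lt_div_iff₀ hd]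
          simp only [hGdef] at hGb
          linarith
        · rw [div_lt_iff₀ hd]
          simp only [hFdef] at hFb
          linarith
end

section
/- Let τ_f ∈ (τ₁ᵉ, τ₁ⁱ) and let τ_b ∈ (1, τ_f) ∪ (s_pr(τ_f), s_po(τ_f)). Then for every s strictly between τ_f and τ_b (i.e., s ∈ (min{τ_f, τ_b}, max{τ_f, τ_b})) one has the strict Liu entropy inequality −(2h(τ_b) − 2h(τ_f))/(τ_b² − τ_f²) > −(2h(s) − 2h(τ_f))/(s² − τ_f²) (Proposition 1.5, entropy inequality for transonic shocks). -/
open Set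

/-- If `p''>0` on `(x,y)` then `p' x < p' y`. -/
private lemma mono_aux (p' p'' : ℝ → ℝ)
    (hderiv2 : ∀ τ : ℝ, 1 < τ → HasDerivAt p' (p'' τ) τ)
    (x y : ℝ) (hx : 1 < x) (hxy : x < y)
    (hpos : ∀ t ∈ Set.Ioo x y, 0 < p'' t) : p' x < p' y := by
  have hcont : ContinuousOn p' (Set.Icc x y) := fun t ht =>
    ((hderiv2 t (lt_of_lt_of_le hx ht.1)).continuousAt).continuousWithinAt
  have := strictMonoOn_of_deriv_pos (convex_Icc x y) hcont (fun t ht => by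
    rw [interior_Icc] at ht
    rw [(hderiv2 t (lt_trans hx ht.1)).deriv]
    exact hpos t ht)
  exact this (Set.left_mem_Icc.2 hxy.le) (Set.right_mem_Icc.2 hxy.le) hxy

/-- If `p''<0` on `(x,y)` then `p' y < p' x`. -/
private lemma anti_aux (p' p'' : ℝ → ℝ)
    (hderiv2 : ∀ τ : ℝ, 1 < τ → HasDerivAt p' (p'' τ) τ)
    (x y : ℝ) (hx : 1 < x) (hxy : x < y)
    (hneg : ∀ t ∈ Set.Ioo x y, p'' t < 0) : p' y < p' x := by
  have hcont : ContinuousOn p' (Set.Icc x y) := fun t ht =>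
    ((hderiv2 t (lt_of_lt_of_le hx ht.1)).continuousAt).continuousWithinAt
  have := strictAntiOn_of_deriv_neg (convex_Icc x y) hcont (fun t ht => by
    rw [interior_Icc] at ht
    rw [(hderiv2 t (lt_trans hx ht.1)).deriv]
    exact hneg t ht)
  exact this (Set.left_mem_Icc.2 hxy.le) (Set.right_mem_Icc.2 hxy.le) hxy

set_option maxHeartbeats 1000000 in
theorem statement_10
    (p p' p'' h : ℝ → ℝ)
    (hderiv1 : ∀ τ : ℝ, 1 < τ → HasDerivAt p (p' τ) τ)
    (hderiv2 : ∀ τ : ℝ, 1 < τ → HasDerivAt p' (p'' τ) τ)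
    (hcont : ContinuousOn p'' (Set.Ioi 1))
    (hderivh : ∀ τ : ℝ, 1 < τ → HasDerivAt h (τ * p' τ) τ)
    (τ1i τ2i : ℝ) (hτ1i : 1 < τ1i) (hτi : τ1i < τ2i)
    (hp'neg : ∀ τ : ℝ, 1 < τ → p' τ < 0)
    (hpp1 : ∀ τ ∈ Set.Ioo 1 τ1i, 0 < p'' τ)
    (hpp2 : ∀ τ : ℝ, τ2i < τ → 0 < p'' τ)
    (hpp3 : ∀ τ ∈ Set.Ioo τ1i τ2i, p'' τ < 0)
    (τ1a τ2a : ℝ) (hτ1a : τ1a ∈ Set.Ioo 1 τ1i) (hτ2a : τ2i < τ2a)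
    (hpa1 : p' τ1a = p' τ2i) (hpa2 : p' τ2a = p' τ1i)
    (τ1e τ2e : ℝ) (hτ1e : τ1e ∈ Set.Ioo τ1a τ1i) (hτ2e : τ2e ∈ Set.Ioo τ2i τ2a)
    (he1 : p' τ1e = p' τ2e)
    (he2 : p' τ1e = (2 * h τ1e - 2 * h τ2e) / (τ1e ^ 2 - τ2e ^ 2))
    (spo : ℝ → ℝ)
    (hspo : ∀ τ ∈ Set.Ioo τ1e τ2i, τ < spo τ ∧
      p' (spo τ) = (2 * h (spo τ) - 2 * h τ) / ((spo τ) ^ 2 - τ ^ 2) ∧ p' (spo τ) < p' τ)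
    (hspo_uniq : ∀ τ ∈ Set.Ioo τ1e τ2i, ∀ s : ℝ, τ < s →
      p' s = (2 * h s - 2 * h τ) / (s ^ 2 - τ ^ 2) → p' s < p' τ → s = spo τ)
    (spr : ℝ → ℝ)
    (hspr : ∀ τ ∈ Set.Ioo τ1e τ1i, τ < spr τ ∧
      p' τ = (2 * h (spr τ) - 2 * h τ) / ((spr τ) ^ 2 - τ ^ 2) ∧ p' (spr τ) < p' τ)
    (hspr_uniq : ∀ τ ∈ Set.Ioo τ1e τ1i, ∀ s : ℝ, τ < s →
      p' τ = (2 * h s - 2 * h τ) / (s ^ 2 - τ ^ 2) → p' s < p' τ → s = spr τ) :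
    ∀ τf ∈ Set.Ioo τ1e τ1i, ∀ τb ∈ Set.Ioo 1 τf ∪ Set.Ioo (spr τf) (spo τf),
      ∀ s ∈ Set.Ioo (min τf τb) (max τf τb),
        -(2 * h τb - 2 * h τf) / (τb ^ 2 - τf ^ 2) >
          -(2 * h s - 2 * h τf) / (s ^ 2 - τf ^ 2) := by
  intro τf hτf τb hτb s hs
  have h1τ1a : 1 < τ1a := hτ1a.1
  have h1τ1e : 1 < τ1e := lt_trans h1τ1a hτ1e.1
  have h1τf : 1 < τf := lt_trans h1τ1e hτf.1
  have hτfτ1i : τf < τ1i := hτf.2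
  have h0τf : (0:ℝ) < τf := lt_trans zero_lt_one h1τf
  set P := p' τf with hP
  -- reduce the goal
  suffices key : (2 * h τb - 2 * h τf) / (τb ^ 2 - τf ^ 2) <
      (2 * h s - 2 * h τf) / (s ^ 2 - τf ^ 2) by
    rw [gt_iff_lt, neg_div, neg_div, neg_lt_neg_iff]
    exact key
  rcases hτb with hτb | hτb
  · -- Case 1 : 1 < τb < τf
    have hτb1 : 1 < τb := hτb.1
    have hτbτf : τb < τf := hτb.2
    have hminmax : Set.Ioo (min τf τb) (max τf τb) = Set.Ioo τb τf := by
      rw [min_eq_right hτbτf.le, max_eq_left hτbτf.le]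
    rw [hminmax] at hs
    have hsq : τb ^ 2 < τf ^ 2 := by nlinarith
    have hden : τb ^ 2 - τf ^ 2 < 0 := by linarith
    set B := (2 * h τb - 2 * h τf) / (τb ^ 2 - τf ^ 2) with hB
    have hψB : B * (τb ^ 2 - τf ^ 2) = 2 * h τb - 2 * h τf :=
      div_mul_cancel₀ _ (ne_of_lt hden)
    set ψ := fun x : ℝ => 2 * h x - 2 * h τf - B * (x ^ 2 - τf ^ 2) with hψ
    have dψ : ∀ x : ℝ, 1 < x → HasDerivAt ψ (2 * x * (p' x - B)) x := by
      intro x hx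
      have h1 : HasDerivAt (fun y : ℝ => 2 * h y - 2 * h τf) (2 * (x * p' x)) x :=
        ((hderivh x hx).const_mul 2).sub_const _
      have h2 : HasDerivAt (fun y : ℝ => y ^ 2 - τf ^ 2) (2 * x) x := by
        simpa using (hasDerivAt_pow 2 x).sub_const (τf ^ 2)
      have h3 := h1.sub (h2.const_mul B)
      have heq : 2 * x * (p' x - B) = 2 * (x * p' x) - B * (2 * x) := by ring
      rw [heq]; exact h3
    have contψ : ∀ a b : ℝ, 1 < a → ContinuousOn ψ (Set.Icc a b) := fun a b ha t ht =>
      ((dψ t (lt_of_lt_of_le ha ht.1)).continuousAt).continuousWithinAt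
    have hψτb : ψ τb = 0 := by simp only [hψ]; rw [hψB]; ring
    have hψτf : ψ τf = 0 := by simp only [hψ]; ring
    obtain ⟨ξ, hξmem, hξ0⟩ := exists_hasDerivAt_eq_zero hτbτf (contψ _ _ hτb1)
      (hψτb.trans hψτf.symm) (fun x hx => dψ x (lt_trans hτb1 hx.1))
    have h1ξ : 1 < ξ := lt_trans hτb1 hξmem.1
    have hpξ : p' ξ = B := by
      rcases mul_eq_zero.1 hξ0 with h | h
      · nlinarith
      · linarith [sub_eq_zero.1 h]
    -- p' < B on (τb, ξ), p' > B on (ξ, τf)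
    have hlt : ∀ x ∈ Set.Ioo τb ξ, p' x < B := by
      intro x hx
      rw [← hpξ]
      exact mono_aux p' p'' hderiv2 x ξ (lt_trans hτb1 hx.1) hx.2 (fun t ht =>
        hpp1 t ⟨lt_trans (lt_trans hτb1 hx.1) ht.1,
          lt_trans (lt_trans ht.2 hξmem.2) hτfτ1i⟩)
    have hgt : ∀ x ∈ Set.Ioo ξ τf, B < p' x := by
      intro x hx
      rw [← hpξ]
      exact mono_aux p' p'' hderiv2 ξ x h1ξ hx.1 (fun t ht =>
        hpp1 t ⟨lt_trans h1ξ ht.1, lt_trans (lt_trans ht.2 hx.2) hτfτ1i⟩)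
    have hanti : StrictAntiOn ψ (Set.Icc τb ξ) := by
      apply strictAntiOn_of_deriv_neg (convex_Icc _ _) (contψ _ _ hτb1)
      intro x hx
      rw [interior_Icc] at hx
      rw [(dψ x (lt_trans hτb1 hx.1)).deriv]
      have := hlt x hx
      nlinarith [lt_trans hτb1 hx.1]
    have hmono : StrictMonoOn ψ (Set.Icc ξ τf) := by
      apply strictMonoOn_of_deriv_pos (convex_Icc _ _) (contψ _ _ h1ξ)
      intro x hx
      rw [interior_Icc] at hx
      rw [(dψ x (lt_trans h1ξ hx.1)).deriv]
      have := hgt x hx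
      nlinarith [lt_trans h1ξ hx.1]
    have hψs : ψ s < 0 := by
      rcases le_or_gt s ξ with hsξ | hsξ
      · have := hanti (Set.left_mem_Icc.2 hξmem.1.le) ⟨hs.1.le, hsξ⟩ hs.1
        rw [hψτb] at this; exact this
      · have := hmono ⟨hsξ.le, hs.2.le⟩ (Set.right_mem_Icc.2 hξmem.2.le) hs.2
        rw [hψτf] at this; exact this
    have hsden : s ^ 2 - τf ^ 2 < 0 := by
      have h1s : 1 < s := lt_trans hτb1 hs.1
      have : s ^ 2 < τf ^ 2 := by nlinarith [mul_pos (sub_pos.2 hs.2) (show (0:ℝ) < τf + s by linarith)]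
      linarith
    rw [lt_div_iff_of_neg hsden]
    simp only [hψ] at hψs
    linarith
  · -- Case 2 : spr τf < τb < spo τf
    have hτfmem1 : τf ∈ Set.Ioo τ1e τ1i := hτf
    have hτfmem2 : τf ∈ Set.Ioo τ1e τ2i := ⟨hτf.1, lt_trans hτf.2 hτi⟩
    obtain ⟨hrτf, hrG, hrp⟩ := hspr τf hτfmem1
    obtain ⟨hoτf, hoG, hop⟩ := hspo τf hτfmem2
    set r := spr τf with hrdef
    set o := spo τf with hodef
    have h1r : 1 < r := lt_trans h1τf hrτf
    have hτbr : r < τb := hτb.1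
    have hτbo : τb < o := hτb.2
    have hτfτb : τf < τb := lt_trans hrτf hτbr
    have hminmax : Set.Ioo (min τf τb) (max τf τb) = Set.Ioo τf τb := by
      rw [min_eq_left hτfτb.le, max_eq_right hτfτb.le]
    rw [hminmax] at hs
    -- comparison values for p' at τf
    have hPlt1i : P < p' τ1i :=
      mono_aux p' p'' hderiv2 τf τ1i h1τf hτfτ1i (fun t ht =>
        hpp1 t ⟨lt_trans h1τf ht.1, ht.2⟩)
    have h1alt : p' τ1a < P :=
      mono_aux p' p'' hderiv2 τ1a τf h1τ1a (lt_trans hτ1e.1 hτf.1) (fun t ht =>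
        hpp1 t ⟨lt_trans h1τ1a ht.1, lt_trans ht.2 hτfτ1i⟩)
    have h2ilt : p' τ2i < P := hpa1 ▸ h1alt
    have hcontp' : ∀ a b : ℝ, 1 < a → ContinuousOn p' (Set.Icc a b) := fun a b ha t ht =>
      ((hderiv2 t (lt_of_lt_of_le ha ht.1)).continuousAt).continuousWithinAt
    -- c₁ ∈ (τ1i, τ2i) with p' c₁ = P
    obtain ⟨c₁, hc₁mem, hc₁⟩ : ∃ c ∈ Set.Ioo τ1i τ2i, p' c = P := by
      have := intermediate_value_Ioo' hτi.le (hcontp' τ1i τ2i hτ1i)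
      obtain ⟨c, hc, hcv⟩ := this ⟨h2ilt, hPlt1i⟩
      exact ⟨c, hc, hcv⟩
    -- c₂ ∈ (τ2i, τ2a) with p' c₂ = P
    obtain ⟨c₂, hc₂mem, hc₂⟩ : ∃ c ∈ Set.Ioo τ2i τ2a, p' c = P := by
      have := intermediate_value_Ioo hτ2a.le (hcontp' τ2i τ2a (lt_trans hτ1i hτi))
      obtain ⟨c, hc, hcv⟩ := this ⟨h2ilt, hpa2 ▸ hPlt1i⟩
      exact ⟨c, hc, hcv⟩
    have h1c₁ : 1 < c₁ := lt_trans hτ1i hc₁mem.1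
    have hτfc₁ : τf < c₁ := lt_trans hτfτ1i hc₁mem.1
    -- inside (c₁, c₂) we have p' < P
    have L_in : ∀ x ∈ Set.Ioo c₁ c₂, p' x < P := by
      intro x hx
      rcases le_or_gt x τ2i with hx2 | hx2
      · have := anti_aux p' p'' hderiv2 c₁ x h1c₁ hx.1 (fun t ht =>
          hpp3 t ⟨lt_trans hc₁mem.1 ht.1, lt_of_lt_of_le ht.2 hx2⟩)
        rw [hc₁] at this; exact this
      · have := mono_aux p' p'' hderiv2 x c₂ (lt_trans (lt_trans hτ1i hτi) hx2) hx.2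
          (fun t ht => hpp2 t (lt_trans hx2 ht.1))
        rw [hc₂] at this; exact this
    -- outside (c₁, c₂) (and right of τf) we have p' ≥ P
    have L_out : ∀ x : ℝ, τf < x → p' x < P → x ∈ Set.Ioo c₁ c₂ := by
      intro x hτfx hpx
      by_contra hmem
      rw [Set.mem_Ioo] at hmem
      push_neg at hmem
      rcases le_or_gt x c₁ with hxc₁ | hxc₁
      · rcases lt_trichotomy x τ1i with hx1 | hx1 | hx1
        · have := mono_aux p' p'' hderiv2 τf x h1τf hτfx (fun t ht =>
            hpp1 t ⟨lt_trans h1τf ht.1, lt_trans ht.2 hx1⟩)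
          linarith
        · rw [hx1] at hpx; linarith
        · rcases eq_or_lt_of_le hxc₁ with hxe | hxe
          · rw [hxe, hc₁] at hpx; linarith
          · have := anti_aux p' p'' hderiv2 x c₁ (lt_trans hτ1i hx1) hxe (fun t ht =>
              hpp3 t ⟨lt_trans hx1 ht.1, lt_trans ht.2 hc₁mem.2⟩)
            rw [hc₁] at this; linarith
      · have hxc₂ := hmem hxc₁
        rcases eq_or_lt_of_le hxc₂ with hxe | hxe
        · rw [← hxe, hc₂] at hpx; linarith
        · have := mono_aux p' p'' hderiv2 c₂ x (lt_trans (lt_trans hτ1i hτi) hc₂mem.1)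
            hxe (fun t ht => hpp2 t (lt_trans hc₂mem.1 ht.1))
          rw [hc₂] at this; linarith
    have hrmem : r ∈ Set.Ioo c₁ c₂ := L_out r hrτf hrp
    have homem : o ∈ Set.Ioo c₁ c₂ := L_out o hoτf hop
    -- the functions φ, η, G
    set φ := fun x : ℝ => 2 * h x - 2 * h τf - P * (x ^ 2 - τf ^ 2) with hφdef
    set η := fun x : ℝ => p' x * (x ^ 2 - τf ^ 2) - (2 * h x - 2 * h τf) with hηdef
    set G := fun x : ℝ => (2 * h x - 2 * h τf) / (x ^ 2 - τf ^ 2) with hGdef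
    have hsqpos : ∀ x : ℝ, τf < x → 0 < x ^ 2 - τf ^ 2 := by
      intro x hx; nlinarith
    have dφ : ∀ x : ℝ, 1 < x → HasDerivAt φ (2 * x * (p' x - P)) x := by
      intro x hx
      have h1 : HasDerivAt (fun y : ℝ => 2 * h y - 2 * h τf) (2 * (x * p' x)) x :=
        ((hderivh x hx).const_mul 2).sub_const _
      have h2 : HasDerivAt (fun y : ℝ => y ^ 2 - τf ^ 2) (2 * x) x := by
        simpa using (hasDerivAt_pow 2 x).sub_const (τf ^ 2)
      have h3 := h1.sub (h2.const_mul P)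
      have heq : 2 * x * (p' x - P) = 2 * (x * p' x) - P * (2 * x) := by ring
      rw [heq]; exact h3
    have contφ : ∀ a b : ℝ, 1 < a → ContinuousOn φ (Set.Icc a b) := fun a b ha t ht =>
      ((dφ t (lt_of_lt_of_le ha ht.1)).continuousAt).continuousWithinAt
    have contη : ∀ a b : ℝ, 1 < a → ContinuousOn η (Set.Icc a b) := by
      intro a b ha
      apply ContinuousOn.sub
      · apply ContinuousOn.mul
        · exact fun t ht =>
            ((hderiv2 t (lt_of_lt_of_le ha ht.1)).continuousAt).continuousWithinAt
        · fun_prop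
      · apply ContinuousOn.sub
        · apply ContinuousOn.mul continuousOn_const
          exact fun t ht =>
            ((hderivh t (lt_of_lt_of_le ha ht.1)).continuousAt).continuousWithinAt
        · fun_prop
    -- G r = P
    have hGr : 2 * h r - 2 * h τf = P * (r ^ 2 - τf ^ 2) := by
      have hne : r ^ 2 - τf ^ 2 ≠ 0 := ne_of_gt (hsqpos r hrτf)
      field_simp at hrG
      linarith [hrG]
    -- φ > 0 on (τf, r)
    have hφτf : φ τf = 0 := by simp only [hφdef]; ring
    have hφmono : StrictMonoOn φ (Set.Icc τf c₁) := by
      apply strictMonoOn_of_deriv_pos (convex_Icc _ _) (contφ _ _ h1τf)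
      intro x hx
      rw [interior_Icc] at hx
      have h1x : 1 < x := lt_trans h1τf hx.1
      rw [(dφ x h1x).deriv]
      have hppos : P < p' x := by
        rcases lt_trichotomy x τ1i with hx1 | hx1 | hx1
        · exact mono_aux p' p'' hderiv2 τf x h1τf hx.1 (fun t ht =>
            hpp1 t ⟨lt_trans h1τf ht.1, lt_trans ht.2 hx1⟩)
        · rw [hx1]; exact hPlt1i
        · have := anti_aux p' p'' hderiv2 x c₁ (lt_trans hτ1i hx1) hx.2 (fun t ht =>
            hpp3 t ⟨lt_trans hx1 ht.1, lt_trans ht.2 hc₁mem.2⟩)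
          rw [hc₁] at this; exact this
      nlinarith
    have hφpos : ∀ x ∈ Set.Ioo τf r, 0 < φ x := by
      intro x hx
      rcases le_or_gt x c₁ with hxc₁ | hxc₁
      · have := hφmono (Set.left_mem_Icc.2 hτfc₁.le) ⟨hx.1.le, hxc₁⟩ hx.1
        rw [hφτf] at this; exact this
      · by_contra hle
        push_neg at hle
        have hφc₁ : 0 < φ c₁ := by
          have := hφmono (Set.left_mem_Icc.2 hτfc₁.le)
            (Set.right_mem_Icc.2 hτfc₁.le) hτfc₁
          rw [hφτf] at this; exact this
        obtain ⟨z, hzmem, hz0⟩ : ∃ z ∈ Set.Icc c₁ x, φ z = 0 := by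
          have := intermediate_value_Icc' hxc₁.le (contφ _ _ h1c₁)
          obtain ⟨z, hz, hzv⟩ := this ⟨hle, hφc₁.le⟩
          exact ⟨z, hz, hzv⟩
        have hzc₁ : c₁ < z := lt_of_le_of_ne hzmem.1 (by
          rintro rfl; exact absurd hz0 (ne_of_gt hφc₁))
        have hτfz : τf < z := lt_trans hτfc₁ hzc₁
        have hzc₂ : z < c₂ := lt_trans (lt_of_le_of_lt hzmem.2 hx.2) hrmem.2
        have hpz : p' z < P := L_in z ⟨hzc₁, hzc₂⟩
        have hGz : p' τf = (2 * h z - 2 * h τf) / (z ^ 2 - τf ^ 2) := by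
          rw [eq_div_iff (ne_of_gt (hsqpos z hτfz))]
          simp only [hφdef] at hz0
          linarith
        have hzr : z = r := by
          have := hspr_uniq τf hτfmem1 z hτfz hGz hpz
          rw [← hrdef] at this; exact this
        have hzltr : z < r := lt_of_le_of_lt hzmem.2 hx.2
        rw [hzr] at hzltr
        exact lt_irrefl r hzltr
    -- η r < 0
    have hηr : η r < 0 := by
      simp only [hηdef]
      have hA : 0 < r ^ 2 - τf ^ 2 := hsqpos r hrτf
      nlinarith [hrp]
    -- η < 0 on (r, o)
    have hηneg : ∀ x ∈ Set.Ioo r o, η x < 0 := by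
      intro x hx
      by_contra hge
      push_neg at hge
      obtain ⟨z, hzmem, hz0⟩ : ∃ z ∈ Set.Icc r x, η z = 0 := by
        have := intermediate_value_Icc hx.1.le (contη _ _ h1r)
        obtain ⟨z, hz, hzv⟩ := this ⟨hηr.le, hge⟩
        exact ⟨z, hz, hzv⟩
      have hzr : r < z := lt_of_le_of_ne hzmem.1 (by
        rintro rfl; exact absurd hz0 (ne_of_lt hηr))
      have hτfz : τf < z := lt_trans hrτf hzr
      have hzlto : z < o := lt_of_le_of_lt hzmem.2 hx.2
      have hpz : p' z < P := L_in z ⟨lt_trans hrmem.1 hzr, lt_trans hzlto homem.2⟩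
      have hGz : p' z = (2 * h z - 2 * h τf) / (z ^ 2 - τf ^ 2) := by
        rw [eq_div_iff (ne_of_gt (hsqpos z hτfz))]
        simp only [hηdef] at hz0
        linarith
      have hzo : z = o := by
        have := hspo_uniq τf hτfmem2 z hτfz hGz hpz
        rw [← hodef] at this; exact this
      rw [hzo] at hzlto
      exact lt_irrefl o hzlto
    -- derivative of G
    have dG : ∀ x : ℝ, τf < x → HasDerivAt G
        ((2 * (x * p' x) * (x ^ 2 - τf ^ 2) - (2 * h x - 2 * h τf) * (2 * x)) /
          (x ^ 2 - τf ^ 2) ^ 2) x := by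
      intro x hx
      have h1x : 1 < x := lt_trans h1τf hx
      have h1 : HasDerivAt (fun y : ℝ => 2 * h y - 2 * h τf) (2 * (x * p' x)) x :=
        ((hderivh x h1x).const_mul 2).sub_const _
      have h2 : HasDerivAt (fun y : ℝ => y ^ 2 - τf ^ 2) (2 * x) x := by
        simpa using (hasDerivAt_pow 2 x).sub_const (τf ^ 2)
      exact h1.div h2 (ne_of_gt (hsqpos x hx))
    -- G strictly decreasing on [r, τb]
    have hGanti : StrictAntiOn G (Set.Icc r τb) := by
      apply strictAntiOn_of_deriv_neg (convex_Icc _ _) (fun t ht =>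
        ((dG t (lt_of_lt_of_le hrτf ht.1)).continuousAt).continuousWithinAt)
      intro x hx
      rw [interior_Icc] at hx
      have hτfx : τf < x := lt_trans hrτf hx.1
      rw [(dG x hτfx).deriv]
      apply div_neg_of_neg_of_pos
      · have hηx : η x < 0 := hηneg x ⟨hx.1, lt_trans hx.2 hτbo⟩
        simp only [hηdef] at hηx
        have heq : 2 * (x * p' x) * (x ^ 2 - τf ^ 2) - (2 * h x - 2 * h τf) * (2 * x) =
            2 * x * (p' x * (x ^ 2 - τf ^ 2) - (2 * h x - 2 * h τf)) := by ring
        rw [heq]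
        apply mul_neg_of_pos_of_neg
        · have : (0:ℝ) < x := lt_trans zero_lt_one (lt_trans h1τf hτfx)
          linarith
        · exact hηx
      · exact pow_pos (hsqpos x hτfx) 2
    -- final assembly
    have hGrP : G r = P := hrG.symm
    show G τb < G s
    have hGτbr : G τb < G r :=
      hGanti (Set.left_mem_Icc.2 hτbr.le) (Set.right_mem_Icc.2 hτbr.le) hτbr
    rcases lt_trichotomy s r with hsr | hsr | hsr
    · have hφs : 0 < φ s := hφpos s ⟨hs.1, hsr⟩
      have hGsP : P < G s := by
        simp only [hGdef]
        rw [lt_div_iff₀ (hsqpos s hs.1)]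
        simp only [hφdef] at hφs
        linarith
      calc G τb < G r := hGτbr
        _ = P := hGrP
        _ < G s := hGsP
    · rw [hsr]
      exact hGτbr
    · exact hGanti ⟨hsr.le, hs.2.le⟩ ⟨hτbr.le, le_refl _⟩ hs.2
end

section
/- If S > s₀(γ) := γ^γ (2−γ)^{2−γ}/4, then p_{S,γ}(τ) > 0 for all τ > 1 (positivity of the van der Waals pressure above the critical entropy level s₀). -/
theorem statement_11 (S γ : ℝ) (hγ1 : 1 < γ) (hγ2 : γ < 2) (hS0 : 0 < S)
    (hS : γ ^ γ * (2 - γ) ^ (2 - γ) / 4 < S) :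
    ∀ τ : ℝ, 1 < τ → 0 < S / (τ - 1) ^ γ - 1 / τ ^ 2 := by
  intro τ hτ
  have hx : 0 < τ - 1 := by linarith
  have hτ0 : 0 < τ := by linarith
  have hg0 : 0 < γ := by linarith
  have hg2 : 0 < 2 - γ := by linarith
  have hA : 0 < γ ^ γ * (2 - γ) ^ (2 - γ) := by positivity
  -- AM-GM
  have key : (2 * (τ - 1) / γ) ^ (γ / 2) * (2 / (2 - γ)) ^ ((2 - γ) / 2) ≤ τ := by
    have h := Real.geom_mean_le_arith_mean2_weighted
      (by positivity : (0:ℝ) ≤ γ / 2) (by positivity : (0:ℝ) ≤ (2 - γ) / 2)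
      (by positivity : (0:ℝ) ≤ 2 * (τ - 1) / γ) (by positivity : (0:ℝ) ≤ 2 / (2 - γ))
      (by ring)
    have e : γ / 2 * (2 * (τ - 1) / γ) + (2 - γ) / 2 * (2 / (2 - γ)) = τ := by
      field_simp
      ring
    linarith [h, e.le, e.ge]
  have sq : (2 * (τ - 1) / γ) ^ γ * (2 / (2 - γ)) ^ (2 - γ) ≤ τ ^ 2 := by
    have h1 : 0 ≤ (2 * (τ - 1) / γ) ^ (γ / 2) * (2 / (2 - γ)) ^ ((2 - γ) / 2) := by positivity
    have h2 := mul_self_le_mul_self h1 key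
    calc (2 * (τ - 1) / γ) ^ γ * (2 / (2 - γ)) ^ (2 - γ)
        = ((2 * (τ - 1) / γ) ^ (γ / 2) * (2 / (2 - γ)) ^ ((2 - γ) / 2)) *
          ((2 * (τ - 1) / γ) ^ (γ / 2) * (2 / (2 - γ)) ^ ((2 - γ) / 2)) := by
          rw [mul_mul_mul_comm, ← Real.rpow_add (by positivity), ← Real.rpow_add (by positivity)]
          ring_nf
      _ ≤ τ * τ := h2
      _ = τ ^ 2 := (sq τ).symm
  have e1 : (2 * (τ - 1) / γ) ^ γ = 2 ^ γ * (τ - 1) ^ γ / γ ^ γ := by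
    rw [Real.div_rpow (by positivity) hg0.le, Real.mul_rpow (by norm_num) hx.le]
  have e2 : ((2 : ℝ) / (2 - γ)) ^ (2 - γ) = 2 ^ (2 - γ) / (2 - γ) ^ (2 - γ) := by
    rw [Real.div_rpow (by norm_num) hg2.le]
  have e3 : (2 : ℝ) ^ γ * 2 ^ (2 - γ) = 4 := by
    rw [← Real.rpow_add (by norm_num : (0:ℝ) < 2)]
    norm_num
  have sq' : 4 * (τ - 1) ^ γ ≤ τ ^ 2 * (γ ^ γ * (2 - γ) ^ (2 - γ)) := by
    have := sq
    rw [e1, e2] at this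
    rw [div_mul_div_comm, div_le_iff₀ (by positivity)] at this
    calc 4 * (τ - 1) ^ γ = 2 ^ γ * (τ - 1) ^ γ * 2 ^ (2 - γ) := by
          rw [mul_right_comm]
          linear_combination -(τ - 1) ^ γ * e3
      _ ≤ τ ^ 2 * (γ ^ γ * (2 - γ) ^ (2 - γ)) := this
  rw [sub_pos, div_lt_div_iff₀ (by positivity) (by positivity)]
  have hτ2 : 0 < τ ^ 2 := by positivity
  nlinarith [mul_pos hτ2 (by linarith : 0 < 4 * S - γ ^ γ * (2 - γ) ^ (2 - γ))]
end

section
/- If S > s₁(γ) := 2(1+γ)^{1+γ}(2−γ)^{2−γ}/(27γ), then p_{S,γ}'(τ) < 0 for all τ > 1; here p_{S,γ}'(τ) = (−γSτ³ + 2(τ−1)^{γ+1})/(τ³(τ−1)^{γ+1}) (strict monotonicity of the van der Waals pressure above the critical entropy level s₁). -/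
lemma amgm_key (γ : ℝ) (hγ1 : 1 < γ) (hγ2 : γ < 2) (τ : ℝ) (hτ : 1 < τ) :
    27 * (τ - 1) ^ (γ + 1) ≤ (1 + γ) ^ (1 + γ) * (2 - γ) ^ (2 - γ) * τ ^ 3 := by
  have hx : 0 < τ - 1 := by linarith
  have h1γ : (0:ℝ) < 1 + γ := by linarith
  have h2γ : (0:ℝ) < 2 - γ := by linarith
  set x := τ - 1 with hxdef
  have key := Real.geom_mean_le_arith_mean2_weighted
    (by positivity : (0:ℝ) ≤ (1+γ)/3) (by positivity : (0:ℝ) ≤ (2-γ)/3)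
    (by positivity : (0:ℝ) ≤ 3*x/(1+γ)) (by positivity : (0:ℝ) ≤ 3/(2-γ))
    (by ring : (1+γ)/3 + (2-γ)/3 = 1)
  have hrhs : (1+γ)/3 * (3*x/(1+γ)) + (2-γ)/3 * (3/(2-γ)) = τ := by
    rw [hxdef]; field_simp; ring
  rw [hrhs] at key
  have key3 : ((3*x/(1+γ)) ^ ((1+γ)/3) * (3/(2-γ)) ^ ((2-γ)/3)) ^ (3:ℝ) ≤ τ ^ (3:ℝ) :=
    Real.rpow_le_rpow (by positivity) key (by norm_num)
  have hexp : ((3*x/(1+γ)) ^ ((1+γ)/3) * (3/(2-γ)) ^ ((2-γ)/3)) ^ (3:ℝ)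
      = 27 * x ^ (γ+1) / ((1+γ) ^ (1+γ) * (2-γ) ^ (2-γ)) := by
    rw [Real.mul_rpow (by positivity) (by positivity),
        ← Real.rpow_mul (by positivity), ← Real.rpow_mul (by positivity),
        (by ring : (1+γ)/3*3 = 1+γ), (by ring : (2-γ)/3*3 = 2-γ),
        Real.div_rpow (by positivity) (by positivity),
        Real.div_rpow (by positivity) (by positivity),
        Real.mul_rpow (by positivity) (by positivity)]
    have h27 : (3:ℝ) ^ (1+γ) * (3:ℝ) ^ (2-γ) = 27 := by
      rw [← Real.rpow_add (by norm_num : (0:ℝ) < 3), (by ring : 1+γ+(2-γ) = (3:ℝ))]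
      rw [show (3:ℝ) = ((3:ℕ):ℝ) by norm_num, Real.rpow_natCast]
      norm_num
    rw [add_comm γ 1]
    field_simp
    linear_combination h27
  rw [hexp] at key3
  have hτ3 : τ ^ (3:ℝ) = τ ^ 3 := by
    rw [show (3:ℝ) = ((3:ℕ):ℝ) by norm_num, Real.rpow_natCast]
  rw [hτ3, div_le_iff₀ (by positivity)] at key3
  nlinarith [key3]

theorem statement_12 (S γ : ℝ) (hγ1 : 1 < γ) (hγ2 : γ < 2) (hS0 : 0 < S)
    (hS : 2 * (1 + γ) ^ (1 + γ) * (2 - γ) ^ (2 - γ) / (27 * γ) < S) :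
    ∀ τ : ℝ, 1 < τ →
      deriv (fun t : ℝ => S / (t - 1) ^ γ - 1 / t ^ 2) τ =
        (-(γ * S * τ ^ 3) + 2 * (τ - 1) ^ (γ + 1)) / (τ ^ 3 * (τ - 1) ^ (γ + 1)) ∧
      deriv (fun t : ℝ => S / (t - 1) ^ γ - 1 / t ^ 2) τ < 0 := by
  intro τ hτ
  have hx : (0:ℝ) < τ - 1 := by linarith
  have hτ0 : (0:ℝ) < τ := by linarith
  have hg : HasDerivAt (fun t : ℝ => (t - 1) ^ γ) (1 * γ * (τ - 1) ^ (γ - 1)) τ :=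
    ((hasDerivAt_id τ).sub_const 1).rpow_const (Or.inl (ne_of_gt hx))
  have h1 : HasDerivAt (fun t : ℝ => S / (t - 1) ^ γ)
      ((0 * (τ-1)^γ - S * (1 * γ * (τ - 1) ^ (γ - 1))) / ((τ-1)^γ)^2) τ :=
    (hasDerivAt_const τ S).div hg (by positivity)
  have h2 : HasDerivAt (fun t : ℝ => 1 / t ^ 2)
      ((0 * τ^2 - 1 * (2 * τ ^ 1)) / (τ^2)^2) τ :=
    (hasDerivAt_const τ (1:ℝ)).div (hasDerivAt_pow 2 τ) (by positivity)
  have hd := (h1.sub h2).deriv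
  have hformula : deriv (fun t : ℝ => S / (t - 1) ^ γ - 1 / t ^ 2) τ =
      (-(γ * S * τ ^ 3) + 2 * (τ - 1) ^ (γ + 1)) / (τ ^ 3 * (τ - 1) ^ (γ + 1)) := by
    rw [show (fun t : ℝ => S / (t - 1) ^ γ - 1 / t ^ 2) = ((fun t : ℝ => S / (t - 1) ^ γ) - fun t => 1 / t ^ 2) from rfl, hd]
    have e1 : (τ - 1) ^ (γ + 1) * (τ - 1) ^ (γ - 1) = ((τ - 1) ^ γ) ^ 2 := by
      rw [← Real.rpow_add hx, sq, ← Real.rpow_add hx]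
      ring_nf
    have p1 : (0:ℝ) < (τ-1)^γ := Real.rpow_pos_of_pos hx γ
    have p2 : (0:ℝ) < (τ-1)^(γ+1) := Real.rpow_pos_of_pos hx (γ+1)
    have p3 : (0:ℝ) < (τ-1)^(γ-1) := Real.rpow_pos_of_pos hx (γ-1)
    field_simp
    linear_combination (-(S*γ*τ^3)) * e1
  refine ⟨hformula, ?_⟩
  rw [hformula]
  have p2 : (0:ℝ) < (τ-1)^(γ+1) := Real.rpow_pos_of_pos hx (γ+1)
  apply div_neg_of_neg_of_pos _ (by positivity)
  have key := amgm_key γ hγ1 hγ2 τ hτ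
  have h1γ : (0:ℝ) < 1 + γ := by linarith
  have h2γ : (0:ℝ) < 2 - γ := by linarith
  have hA : (0:ℝ) < (1 + γ) ^ (1 + γ) := Real.rpow_pos_of_pos h1γ _
  have hB : (0:ℝ) < (2 - γ) ^ (2 - γ) := Real.rpow_pos_of_pos h2γ _
  have hγ0 : (0:ℝ) < γ := by linarith
  have hS' : 2 * (1 + γ) ^ (1 + γ) * (2 - γ) ^ (2 - γ) < 27 * γ * S := by
    rw [div_lt_iff₀ (by positivity)] at hS
    linarith
  nlinarith [mul_lt_mul_of_pos_right hS' (pow_pos hτ0 3),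
    mul_le_mul_of_nonneg_left key (le_of_lt hγ0), pow_pos hτ0 3]
end

section
/- If S > s₂(γ) := 6(2+γ)^{2+γ}(2−γ)^{2−γ}/(256γ(γ+1)), then p_{S,γ}''(τ) > 0 for all τ > 1; here p_{S,γ}''(τ) = (γ(γ+1)Sτ⁴ − 6(τ−1)^{γ+2})/(τ⁴(τ−1)^{γ+2}) (strict convexity of the van der Waals pressure above the critical entropy level s₂). -/
open Real

private lemma deriv1 (S γ : ℝ) {t : ℝ} (ht : 1 < t) :
    HasDerivAt (fun t : ℝ => S / (t - 1) ^ γ - 1 / t ^ 2)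
      (-(γ * S) / (t - 1) ^ (γ + 1) + 2 / t ^ 3) t := by
  have h0 : (0:ℝ) < t - 1 := by linarith
  have ht0 : (0:ℝ) < t := by linarith
  have h2 : HasDerivAt (fun t : ℝ => (t - 1) ^ γ) (1 * γ * (t - 1) ^ (γ - 1)) t :=
    ((hasDerivAt_id t).sub_const 1).rpow_const (Or.inl h0.ne')
  have h3 : HasDerivAt (fun t : ℝ => S / (t - 1) ^ γ)
      ((0 * (t - 1) ^ γ - S * (1 * γ * (t - 1) ^ (γ - 1))) / ((t - 1) ^ γ) ^ 2) t :=
    (hasDerivAt_const t S).div h2 (Real.rpow_pos_of_pos h0 γ).ne'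
  have h4 : HasDerivAt (fun t : ℝ => 1 / t ^ 2)
      ((0 * t ^ 2 - 1 * ((2:ℕ) * t ^ (2 - 1))) / (t ^ 2) ^ 2) t :=
    (hasDerivAt_const t 1).div (hasDerivAt_pow 2 t) (pow_ne_zero 2 ht0.ne')
  refine (h3.sub h4).congr_deriv ?_
  have e1 : ((t - 1) ^ γ) ^ 2 = (t - 1) ^ (γ + 1) * (t - 1) ^ (γ - 1) := by
    rw [← Real.rpow_add h0, ← Real.rpow_natCast ((t - 1) ^ γ) 2, ← Real.rpow_mul h0.le]
    norm_num
    ring_nf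
  have p1 : (0:ℝ) < (t - 1) ^ (γ + 1) := Real.rpow_pos_of_pos h0 _
  have p2 : (0:ℝ) < (t - 1) ^ (γ - 1) := Real.rpow_pos_of_pos h0 _
  rw [e1]
  field_simp
  ring

private lemma deriv2 (S γ : ℝ) {t : ℝ} (ht : 1 < t) :
    HasDerivAt (fun t : ℝ => -(γ * S) / (t - 1) ^ (γ + 1) + 2 / t ^ 3)
      (γ * (γ + 1) * S / (t - 1) ^ (γ + 2) - 6 / t ^ 4) t := by
  have h0 : (0:ℝ) < t - 1 := by linarith
  have ht0 : (0:ℝ) < t := by linarith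
  have h2 : HasDerivAt (fun t : ℝ => (t - 1) ^ (γ + 1)) (1 * (γ + 1) * (t - 1) ^ (γ + 1 - 1)) t :=
    ((hasDerivAt_id t).sub_const 1).rpow_const (Or.inl h0.ne')
  have h3 : HasDerivAt (fun t : ℝ => -(γ * S) / (t - 1) ^ (γ + 1))
      ((0 * (t - 1) ^ (γ + 1) - -(γ * S) * (1 * (γ + 1) * (t - 1) ^ (γ + 1 - 1))) /
        ((t - 1) ^ (γ + 1)) ^ 2) t :=
    (hasDerivAt_const t _).div h2 (Real.rpow_pos_of_pos h0 _).ne'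
  have h4 : HasDerivAt (fun t : ℝ => 2 / t ^ 3)
      ((0 * t ^ 3 - 2 * ((3:ℕ) * t ^ (3 - 1))) / (t ^ 3) ^ 2) t :=
    (hasDerivAt_const t 2).div (hasDerivAt_pow 3 t) (pow_ne_zero 3 ht0.ne')
  refine (h3.add h4).congr_deriv ?_
  have e1 : ((t - 1) ^ (γ + 1)) ^ 2 = (t - 1) ^ (γ + 2) * (t - 1) ^ (γ + 1 - 1) := by
    rw [← Real.rpow_add h0, ← Real.rpow_natCast ((t - 1) ^ (γ + 1)) 2, ← Real.rpow_mul h0.le]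
    norm_num
    ring_nf
  have p1 : (0:ℝ) < (t - 1) ^ (γ + 2) := Real.rpow_pos_of_pos h0 _
  have p2 : (0:ℝ) < (t - 1) ^ (γ + 1 - 1) := Real.rpow_pos_of_pos h0 _
  rw [e1]
  field_simp
  ring

private lemma keybound (γ : ℝ) (hγ1 : 1 < γ) (hγ2 : γ < 2) {τ : ℝ} (hτ : 1 < τ) :
    (τ - 1) ^ (γ + 2) ≤ (2 + γ) ^ (2 + γ) * (2 - γ) ^ (2 - γ) / 256 * τ ^ 4 := by
  set w₁ : ℝ := (2 + γ) / 4 with hw₁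
  set w₂ : ℝ := (2 - γ) / 4 with hw₂
  have hw₁0 : 0 < w₁ := by rw [hw₁]; linarith
  have hw₂0 : 0 < w₂ := by rw [hw₂]; linarith
  have hsum : w₁ + w₂ = 1 := by rw [hw₁, hw₂]; ring
  have hx : (0:ℝ) < τ - 1 := by linarith
  have hτ0 : (0:ℝ) < τ := by linarith
  have amgm := Real.geom_mean_le_arith_mean2_weighted hw₁0.le hw₂0.le
    (div_nonneg hx.le hw₁0.le) (by positivity : (0:ℝ) ≤ 1 / w₂) hsum
  have hrhs : w₁ * ((τ - 1) / w₁) + w₂ * (1 / w₂) = τ := by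
    field_simp
    ring
  rw [hrhs, Real.div_rpow hx.le hw₁0.le, Real.div_rpow (by norm_num) hw₂0.le,
    Real.one_rpow] at amgm
  -- amgm : (τ-1)^w₁ / w₁^w₁ * (1 / w₂^w₂) ≤ τ
  have hkey : (τ - 1) ^ w₁ ≤ τ * (w₁ ^ w₁ * w₂ ^ w₂) := by
    have p1 : (0:ℝ) < w₁ ^ w₁ := Real.rpow_pos_of_pos hw₁0 _
    have p2 : (0:ℝ) < w₂ ^ w₂ := Real.rpow_pos_of_pos hw₂0 _
    rw [div_mul_eq_mul_div, mul_one_div, div_div, div_le_iff₀ (by positivity)] at amgm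
    linarith [amgm]
  have hpow : ((τ - 1) ^ w₁) ^ 4 ≤ (τ * (w₁ ^ w₁ * w₂ ^ w₂)) ^ 4 := by
    apply pow_le_pow_left₀ (Real.rpow_nonneg hx.le _) hkey
  have e1 : ((τ - 1) ^ w₁) ^ 4 = (τ - 1) ^ (γ + 2) := by
    rw [← Real.rpow_natCast ((τ - 1) ^ w₁) 4, ← Real.rpow_mul hx.le]
    congr 1
    rw [hw₁]; push_cast; ring
  have e2 : (w₁ ^ w₁) ^ 4 = (2 + γ) ^ (2 + γ) / 4 ^ (2 + γ) := by
    rw [← Real.rpow_natCast (w₁ ^ w₁) 4, ← Real.rpow_mul hw₁0.le]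
    have : w₁ * (4:ℕ) = 2 + γ := by rw [hw₁]; push_cast; ring
    rw [this, hw₁, Real.div_rpow (by linarith) (by norm_num)]
  have e3 : (w₂ ^ w₂) ^ 4 = (2 - γ) ^ (2 - γ) / 4 ^ (2 - γ) := by
    rw [← Real.rpow_natCast (w₂ ^ w₂) 4, ← Real.rpow_mul hw₂0.le]
    have : w₂ * (4:ℕ) = 2 - γ := by rw [hw₂]; push_cast; ring
    rw [this, hw₂, Real.div_rpow (by linarith) (by norm_num)]
  have e4 : (4:ℝ) ^ (2 + γ) * 4 ^ (2 - γ) = 256 := by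
    rw [← Real.rpow_add (by norm_num : (0:ℝ) < 4), show (2:ℝ) + γ + (2 - γ) = 4 by ring]
    rw [show (4:ℝ) = ((4:ℕ):ℝ) by norm_num, Real.rpow_natCast]
    norm_num
  calc (τ - 1) ^ (γ + 2) = ((τ - 1) ^ w₁) ^ 4 := e1.symm
    _ ≤ (τ * (w₁ ^ w₁ * w₂ ^ w₂)) ^ 4 := hpow
    _ = τ ^ 4 * ((w₁ ^ w₁) ^ 4 * (w₂ ^ w₂) ^ 4) := by ring
    _ = (2 + γ) ^ (2 + γ) * (2 - γ) ^ (2 - γ) / 256 * τ ^ 4 := by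
        rw [e2, e3]
        rw [div_mul_div_comm, e4]
        ring

theorem statement_13 (S γ : ℝ) (hγ1 : 1 < γ) (hγ2 : γ < 2) (hS0 : 0 < S)
    (hS : 6 * ( 2 + γ) ^ (2 + γ) * (2 - γ) ^ (2 - γ) / (256 * γ * (γ + 1)) < S) :
    ∀ τ : ℝ, 1 < τ →
      deriv (deriv (fun t : ℝ => S / (t - 1) ^ γ - 1 / t ^ 2)) τ =
        (γ * (γ + 1) * S * τ ^ 4 - 6 * (τ - 1) ^ (γ + 2)) / (τ ^ 4 * (τ - 1) ^ (γ + 2)) ∧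
      0 < deriv (deriv (fun t : ℝ => S / (t - 1) ^ γ - 1 / t ^ 2)) τ := by
  intro τ hτ
  have hx : (0:ℝ) < τ - 1 := by linarith
  have hτ0 : (0:ℝ) < τ := by linarith
  have hEq : deriv (fun t : ℝ => S / (t - 1) ^ γ - 1 / t ^ 2) =ᶠ[nhds τ]
      (fun t : ℝ => -(γ * S) / (t - 1) ^ (γ + 1) + 2 / t ^ 3) := by
    filter_upwards [Ioi_mem_nhds hτ] with t ht
    exact (deriv1 S γ ht).deriv
  have hD : deriv (deriv (fun t : ℝ => S / (t - 1) ^ γ - 1 / t ^ 2)) τ =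
      γ * (γ + 1) * S / (τ - 1) ^ (γ + 2) - 6 / τ ^ 4 := by
    rw [hEq.deriv_eq]
    exact (deriv2 S γ hτ).deriv
  have hpos2 : (0:ℝ) < (τ - 1) ^ (γ + 2) := Real.rpow_pos_of_pos hx _
  have hfrac : γ * (γ + 1) * S / (τ - 1) ^ (γ + 2) - 6 / τ ^ 4 =
      (γ * (γ + 1) * S * τ ^ 4 - 6 * (τ - 1) ^ (γ + 2)) / (τ ^ 4 * (τ - 1) ^ (γ + 2)) := by
    field_simp
  have hnum : 0 < γ * (γ + 1) * S * τ ^ 4 - 6 * (τ - 1) ^ (γ + 2) := by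
    have hkb := keybound γ hγ1 hγ2 hτ
    have hγpos : 0 < γ * (γ + 1) := by nlinarith
    have hC : (0:ℝ) < (2 + γ) ^ (2 + γ) * (2 - γ) ^ (2 - γ) := by
      have := Real.rpow_pos_of_pos (by linarith : (0:ℝ) < 2 + γ) (2 + γ)
      have := Real.rpow_pos_of_pos (by linarith : (0:ℝ) < 2 - γ) (2 - γ)
      positivity
    have hS' : 6 * ((2 + γ) ^ (2 + γ) * (2 - γ) ^ (2 - γ)) / 256 < γ * (γ + 1) * S := by
      rw [div_lt_iff₀ (by positivity : (0:ℝ) < 256 * γ * (γ + 1))] at hS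
      rw [div_lt_iff₀ (by norm_num : (0:ℝ) < 256)]
      nlinarith [hS]
    have h6 : 6 * (τ - 1) ^ (γ + 2) ≤
        6 * ((2 + γ) ^ (2 + γ) * (2 - γ) ^ (2 - γ)) / 256 * τ ^ 4 := by
      calc 6 * (τ - 1) ^ (γ + 2)
          ≤ 6 * ((2 + γ) ^ (2 + γ) * (2 - γ) ^ (2 - γ) / 256 * τ ^ 4) := by linarith
        _ = 6 * ((2 + γ) ^ (2 + γ) * (2 - γ) ^ (2 - γ)) / 256 * τ ^ 4 := by ring
    have hτ4 : (0:ℝ) < τ ^ 4 := by positivity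
    nlinarith [mul_lt_mul_of_pos_right hS' hτ4]
  constructor
  · rw [hD]; exact hfrac
  · rw [hD, hfrac]
    exact div_pos hnum (by positivity)
end

section
/- If s₁(γ) < S < s₂(γ), where s₁(γ) = 2(1+γ)^{1+γ}(2−γ)^{2−γ}/(27γ) and s₂(γ) = 6(2+γ)^{2+γ}(2−γ)^{2−γ}/(256γ(γ+1)), then the isentrope p_{S,γ} has exactly two inflection points: there exist unique τ₁ⁱ and τ₂ⁱ with 1 < τ₁ⁱ < 4/(2−γ) < τ₂ⁱ such that p_{S,γ}''(τ₁ⁱ) = p_{S,γ}''(τ₂ⁱ) = 0, p_{S,γ}''(τ) > 0 for τ ∈ (1, τ₁ⁱ) ∪ (τ₂ⁱ, ∞), and p_{S,γ}''(τ) < 0 for τ ∈ (τ₁ⁱ, τ₂ⁱ). -/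
open Real Set

private lemma hasDerivAt_rpow_shift (a : ℝ) {x : ℝ} (hx : 1 < x) :
    HasDerivAt (fun t : ℝ => (t - 1) ^ a) (a * (x - 1) ^ (a - 1)) x := by
  have h1 : HasDerivAt (fun t : ℝ => t - 1) 1 x := (hasDerivAt_id x).sub_const 1
  have h2 := (Real.hasDerivAt_rpow_const (p := a) (x := x - 1)
    (Or.inl (by intro h; nlinarith [sub_ne_zero.mpr (ne_of_gt hx)] )))
  have h3 := h2.comp x h1
  simp only [mul_one] at h3
  exact h3

private lemma hasDerivAt_p' (S γ : ℝ) {x : ℝ} (hx : 1 < x) :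
    HasDerivAt (fun t : ℝ => S / (t - 1) ^ γ - 1 / t ^ 2)
      (-(S * γ) / (x - 1) ^ (γ + 1) + 2 / x ^ 3) x := by
  have hb : (0:ℝ) < x - 1 := by linarith
  have hx0 : x ≠ 0 := by positivity
  have h1 := hasDerivAt_rpow_shift γ hx
  have hne : (x - 1) ^ γ ≠ 0 := (Real.rpow_pos_of_pos hb γ).ne'
  have h2 : HasDerivAt (fun t : ℝ => S / (t - 1) ^ γ)
      ((0 * (x-1)^γ - S * (γ * (x - 1) ^ (γ - 1))) / ((x-1)^γ)^2) x :=
    (hasDerivAt_const x S).div h1 hne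
  have h3 : HasDerivAt (fun t : ℝ => 1 / t ^ 2)
      ((0 * x^2 - 1 * (2 * x ^ 1)) / (x^2)^2) x :=
    (hasDerivAt_const x 1).div (by simpa using hasDerivAt_pow 2 x) (pow_ne_zero 2 hx0)
  have h4 := h2.sub h3
  refine h4.congr_deriv ?_
  symm
  have e1 : ((x-1)^γ)^2 = (x-1)^(γ-1) * (x-1)^(γ+1) := by
    rw [← Real.rpow_natCast ((x-1)^γ) 2, ← Real.rpow_mul hb.le, ← Real.rpow_add hb]
    norm_num
    ring_nf
  have p1 : (0:ℝ) < (x-1)^(γ-1) := Real.rpow_pos_of_pos hb _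
  have p2 : (0:ℝ) < (x-1)^(γ+1) := Real.rpow_pos_of_pos hb _
  rw [e1]
  field_simp
  ring

private lemma hasDerivAt_d1 (S γ : ℝ) {x : ℝ} (hx : 1 < x) :
    HasDerivAt (fun t : ℝ => -(S * γ) / (t - 1) ^ (γ + 1) + 2 / t ^ 3)
      (S * γ * (γ + 1) / (x - 1) ^ (γ + 2) - 6 / x ^ 4) x := by
  have hb : (0:ℝ) < x - 1 := by linarith
  have hx0 : x ≠ 0 := by positivity
  have h1 := hasDerivAt_rpow_shift (γ + 1) hx
  have hne : (x - 1) ^ (γ+1) ≠ 0 := (Real.rpow_pos_of_pos hb _).ne'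
  have h2 : HasDerivAt (fun t : ℝ => -(S * γ) / (t - 1) ^ (γ+1))
      ((0 * (x-1)^(γ+1) - (-(S*γ)) * ((γ+1) * (x - 1) ^ (γ+1-1))) / ((x-1)^(γ+1))^2) x :=
    (hasDerivAt_const x (-(S*γ))).div h1 hne
  have h3 : HasDerivAt (fun t : ℝ => 2 / t ^ 3)
      ((0 * x^3 - 2 * (3 * x ^ 2)) / (x^3)^2) x :=
    (hasDerivAt_const x 2).div (by simpa using hasDerivAt_pow 3 x) (pow_ne_zero 3 hx0)
  have h4 := h2.add h3
  refine h4.congr_deriv ?_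
  symm
  have e1 : ((x-1)^(γ+1))^2 = (x-1)^γ * (x-1)^(γ+2) := by
    rw [← Real.rpow_natCast ((x-1)^(γ+1)) 2, ← Real.rpow_mul hb.le, ← Real.rpow_add hb]
    norm_num
    ring_nf
  have e2 : (x-1)^(γ+1-1) = (x-1)^γ := by norm_num
  have p1 : (0:ℝ) < (x-1)^γ := Real.rpow_pos_of_pos hb _
  have p2 : (0:ℝ) < (x-1)^(γ+2) := Real.rpow_pos_of_pos hb _
  rw [e1, e2]
  field_simp
  ring

private lemma deriv2_eq (S γ : ℝ) {t : ℝ} (ht : 1 < t) :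
    deriv (deriv (fun t : ℝ => S / (t - 1) ^ γ - 1 / t ^ 2)) t
      = S * γ * (γ + 1) / (t - 1) ^ (γ + 2) - 6 / t ^ 4 := by
  have hev : deriv (fun t : ℝ => S / (t - 1) ^ γ - 1 / t ^ 2)
      =ᶠ[nhds t] fun x => -(S * γ) / (x - 1) ^ (γ + 1) + 2 / x ^ 3 := by
    filter_upwards [isOpen_Ioi.mem_nhds (show t ∈ Ioi (1:ℝ) from ht)] with x hx
    exact (hasDerivAt_p' S γ hx).deriv
  rw [hev.deriv_eq]
  exact (hasDerivAt_d1 S γ ht).deriv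

private lemma hasDerivAt_f (γ : ℝ) {x : ℝ} (hx : 1 < x) :
    HasDerivAt (fun t : ℝ => (t - 1) ^ (γ + 2) / t ^ 4)
      ((x - 1) ^ (γ + 1) * (4 - (2 - γ) * x) / x ^ 5) x := by
  have hb : (0:ℝ) < x - 1 := by linarith
  have hx0 : x ≠ 0 := by positivity
  have h1 := hasDerivAt_rpow_shift (γ + 2) hx
  have h2 : HasDerivAt (fun t : ℝ => (t - 1) ^ (γ + 2) / t ^ 4)
      (((γ+2) * (x-1)^(γ+2-1) * x^4 - (x-1)^(γ+2) * (4 * x^3)) / (x^4)^2) x :=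
    h1.div (by simpa using hasDerivAt_pow 4 x) (pow_ne_zero 4 hx0)
  convert h2 using 1
  have e1 : (x-1)^(γ+2) = (x-1)^(γ+1) * (x-1) := by
    rw [show γ + 2 = (γ+1)+1 by ring, Real.rpow_add hb, Real.rpow_one]
  have e2 : (x-1)^(γ+2-1) = (x-1)^(γ+1) := by rw [show γ+2-1 = γ+1 by ring]
  rw [e1, e2]
  field_simp
  ring

private lemma continuousOn_f (γ : ℝ) (hγ : 0 < γ) :
    ContinuousOn (fun t : ℝ => (t - 1) ^ (γ + 2) / t ^ 4) (Ici 1) := by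
  intro x hx
  have hx1 : (1:ℝ) ≤ x := hx
  have hx0 : x ≠ 0 := by intro h; rw [h] at hx1; linarith
  apply ContinuousWithinAt.div
  · exact (ContinuousAt.rpow_const (by fun_prop) (Or.inr (by linarith))).continuousWithinAt
  · exact (continuous_pow 4).continuousWithinAt
  · exact pow_ne_zero 4 hx0

private lemma strictMonoOn_f (γ : ℝ) (hγ1 : 1 < γ) (hγ2 : γ < 2) :
    StrictMonoOn (fun t : ℝ => (t - 1) ^ (γ + 2) / t ^ 4) (Icc 1 (4 / (2 - γ))) := by
  have h2γ : (0:ℝ) < 2 - γ := by linarith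
  apply strictMonoOn_of_deriv_pos (convex_Icc _ _)
    ((continuousOn_f γ (by linarith)).mono (fun x hx => hx.1))
  intro x hx
  rw [interior_Icc] at hx
  rw [(hasDerivAt_f γ hx.1).deriv]
  have hb : (0:ℝ) < x - 1 := by linarith [hx.1]
  have h4 : (2 - γ) * x < 4 := by
    have := hx.2
    rw [lt_div_iff₀ h2γ] at this
    linarith
  have hx0 : (0:ℝ) < x := by linarith [hx.1]
  exact div_pos (mul_pos (Real.rpow_pos_of_pos hb _) (by linarith)) (by positivity)

private lemma strictAntiOn_f (γ : ℝ) (hγ1 : 1 < γ) (hγ2 : γ < 2) :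
    StrictAntiOn (fun t : ℝ => (t - 1) ^ (γ + 2) / t ^ 4) (Ici (4 / (2 - γ))) := by
  have h2γ : (0:ℝ) < 2 - γ := by linarith
  have hτ : (1:ℝ) < 4 / (2 - γ) := by
    rw [lt_div_iff₀ h2γ]; linarith
  apply strictAntiOn_of_deriv_neg (convex_Ici _)
    ((continuousOn_f γ (by linarith)).mono (fun x hx => le_trans hτ.le hx))
  intro x hx
  rw [interior_Ici] at hx
  have hx1 : 1 < x := lt_trans hτ hx
  rw [(hasDerivAt_f γ hx1).deriv]
  have hb : (0:ℝ) < x - 1 := by linarith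
  have h4 : 4 < (2 - γ) * x := by
    have hxx := mem_Ioi.mp hx
    rw [div_lt_iff₀ h2γ] at hxx
    linarith
  have hx0 : (0:ℝ) < x := by linarith
  have hp1 : (0:ℝ) < (x - 1) ^ (γ + 1) := Real.rpow_pos_of_pos hb _
  have hp2 : (0:ℝ) < x ^ 5 := by positivity
  apply div_neg_of_neg_of_pos _ hp2
  exact mul_neg_of_pos_of_neg hp1 (by linarith)

private lemma f_max (γ : ℝ) (hγ1 : 1 < γ) (hγ2 : γ < 2) :
    (4 / (2 - γ) - 1) ^ (γ + 2) / (4 / (2 - γ)) ^ 4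
      = (2 + γ) ^ (2 + γ) * (2 - γ) ^ (2 - γ) / 256 := by
  have h2γ : (0:ℝ) < 2 - γ := by linarith
  have e0 : 4 / (2 - γ) - 1 = (2 + γ) / (2 - γ) := by field_simp; ring
  rw [e0, Real.div_rpow (by linarith) h2γ.le, div_pow, show γ + 2 = 2 + γ by ring]
  have key' : (2 - γ) ^ (2 - γ) * (2 - γ) ^ (2 + γ) = (2 - γ) ^ (4:ℕ) := by
    rw [← Real.rpow_natCast (2 - γ) 4, ← Real.rpow_add h2γ]
    norm_num
  have h1 : (0:ℝ) < (2 - γ) ^ (2 + γ) := Real.rpow_pos_of_pos h2γ _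
  have h2 : (0:ℝ) < (2 - γ) ^ (4:ℕ) := by positivity
  field_simp
  nlinarith [key', Real.rpow_pos_of_pos (show (0:ℝ) < 2 + γ by linarith) (2 + γ)]

theorem statement_14 (S γ : ℝ) (hγ1 : 1 < γ) (hγ2 : γ < 2) (hS0 : 0 < S)
    (hl : 2 * (1 + γ) ^ (1 + γ) * (2 - γ) ^ (2 - γ) / (27 * γ) < S)
    (hu : S < 6 * (2 + γ) ^ (2 + γ) * (2 - γ) ^ (2 - γ) / (256 * γ * (γ + 1))) :
    ∃ τ1 τ2 : ℝ,
      (1 < τ1 ∧ τ1 < 4 / (2 - γ) ∧ 4 / (2 - γ) < τ2 ∧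
        deriv (deriv (fun t : ℝ => S / (t - 1) ^ γ - 1 / t ^ 2)) τ1 = 0 ∧
        deriv (deriv (fun t : ℝ => S / (t - 1) ^ γ - 1 / t ^ 2)) τ2 = 0 ∧
        (∀ τ ∈ Set.Ioo 1 τ1, 0 < deriv (deriv (fun t : ℝ => S / (t - 1) ^ γ - 1 / t ^ 2)) τ) ∧
        (∀ τ : ℝ, τ2 < τ → 0 < deriv (deriv (fun t : ℝ => S / (t - 1) ^ γ - 1 / t ^ 2)) τ) ∧
        (∀ τ ∈ Set.Ioo τ1 τ2, deriv (deriv (fun t : ℝ => S / (t - 1) ^ γ - 1 / t ^ 2)) τ < 0)) ∧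
      (∀ σ1 σ2 : ℝ,
        (1 < σ1 ∧ σ1 < 4 / (2 - γ) ∧ 4 / (2 - γ) < σ2 ∧
          deriv (deriv (fun t : ℝ => S / (t - 1) ^ γ - 1 / t ^ 2)) σ1 = 0 ∧
          deriv (deriv (fun t : ℝ => S / (t - 1) ^ γ - 1 / t ^ 2)) σ2 = 0 ∧
          (∀ τ ∈ Set.Ioo 1 σ1, 0 < deriv (deriv (fun t : ℝ => S / (t - 1) ^ γ - 1 / t ^ 2)) τ) ∧
          (∀ τ : ℝ, σ2 < τ → 0 < deriv (deriv (fun t : ℝ => S / (t - 1) ^ γ - 1 / t ^ 2)) τ) ∧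
          (∀ τ ∈ Set.Ioo σ1 σ2, deriv (deriv (fun t : ℝ => S / (t - 1) ^ γ - 1 / t ^ 2)) τ < 0)) →
        σ1 = τ1 ∧ σ2 = τ2) := by
  have h2γ : (0:ℝ) < 2 - γ := by linarith
  set τs : ℝ := 4 / (2 - γ) with hτs
  set f : ℝ → ℝ := fun t => (t - 1) ^ (γ + 2) / t ^ 4 with hf
  set c : ℝ := S * γ * (γ + 1) / 6 with hc
  have hcpos : 0 < c := by
    have : (0:ℝ) < γ * (γ + 1) := by nlinarith
    rw [hc]; positivity
  have hτs4 : (4:ℝ) < τs := by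
    rw [hτs, lt_div_iff₀ h2γ]; nlinarith
  have hτs1 : (1:ℝ) < τs := by linarith
  -- value of f at τs
  have hfτs : f τs = (2 + γ) ^ (2 + γ) * (2 - γ) ^ (2 - γ) / 256 := f_max γ hγ1 hγ2
  -- c < f τs
  have hcM : c < f τs := by
    rw [hfτs]
    have hgg : (0:ℝ) < γ * (γ + 1) := by nlinarith
    have h6 : (0:ℝ) < γ * (γ + 1) / 6 := by positivity
    have := mul_lt_mul_of_pos_right hu h6
    calc c = S * (γ * (γ + 1) / 6) := by rw [hc]; ring
    _ < 6 * (2 + γ) ^ (2 + γ) * (2 - γ) ^ (2 - γ) / (256 * γ * (γ + 1)) * (γ * (γ + 1) / 6) := this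
    _ = (2 + γ) ^ (2 + γ) * (2 - γ) ^ (2 - γ) / 256 := by
        field_simp
  -- sign identity for the second derivative
  have hsign : ∀ t : ℝ, 1 < t →
      deriv (deriv (fun t : ℝ => S / (t - 1) ^ γ - 1 / t ^ 2)) t
        = 6 / (t - 1) ^ (γ + 2) * (c - f t) := by
    intro t ht
    rw [deriv2_eq S γ ht]
    have hb : (0:ℝ) < t - 1 := by linarith
    have hp : (0:ℝ) < (t - 1) ^ (γ + 2) := Real.rpow_pos_of_pos hb _
    have ht0 : t ≠ 0 := by positivity
    rw [hc, hf]
    field_simp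
  have hfac : ∀ t : ℝ, 1 < t → 0 < 6 / (t - 1) ^ (γ + 2) := by
    intro t ht
    have hb : (0:ℝ) < t - 1 := by linarith
    have := Real.rpow_pos_of_pos hb (γ + 2)
    positivity
  have hpos : ∀ t : ℝ, 1 < t → f t < c →
      0 < deriv (deriv (fun t : ℝ => S / (t - 1) ^ γ - 1 / t ^ 2)) t := by
    intro t ht hlt
    rw [hsign t ht]
    exact mul_pos (hfac t ht) (by linarith)
  have hneg : ∀ t : ℝ, 1 < t → c < f t →
      deriv (deriv (fun t : ℝ => S / (t - 1) ^ γ - 1 / t ^ 2)) t < 0 := by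
    intro t ht hlt
    rw [hsign t ht]
    exact mul_neg_of_pos_of_neg (hfac t ht) (by linarith)
  have hzero : ∀ t : ℝ, 1 < t →
      deriv (deriv (fun t : ℝ => S / (t - 1) ^ γ - 1 / t ^ 2)) t = 0 → f t = c := by
    intro t ht h0
    rw [hsign t ht] at h0
    rcases mul_eq_zero.mp h0 with h | h
    · exact absurd h (ne_of_gt (hfac t ht))
    · linarith
  -- small point with f < c
  set δ : ℝ := min (1/2) (Real.sqrt c / 2) with hδ
  have hδ0 : 0 < δ := lt_min (by norm_num) (half_pos (Real.sqrt_pos.mpr hcpos))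
  have hδhalf : δ ≤ 1/2 := min_le_left _ _
  set t1 : ℝ := 1 + δ with ht1def
  have ht1gt : 1 < t1 := by rw [ht1def]; linarith
  have ht1τ : t1 < τs := by rw [ht1def]; linarith
  have hft1 : f t1 < c := by
    have e : t1 - 1 = δ := by rw [ht1def]; ring
    have a1 : δ ^ (γ + 2) ≤ δ ^ (2:ℝ) :=
      Real.rpow_le_rpow_of_exponent_ge hδ0 (by linarith) (by linarith)
    have a2 : δ ^ (2:ℝ) = δ ^ (2:ℕ) := by
      rw [← Real.rpow_natCast δ 2]; norm_num
    have a3 : δ ^ (2:ℕ) ≤ (Real.sqrt c / 2) ^ (2:ℕ) :=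
      pow_le_pow_left₀ hδ0.le (min_le_right _ _) 2
    have a4 : (Real.sqrt c / 2) ^ (2:ℕ) = c / 4 := by
      rw [div_pow, Real.sq_sqrt hcpos.le]; norm_num
    have a5 : f t1 ≤ δ ^ (γ + 2) := by
      rw [hf]
      simp only [e]
      apply div_le_self (Real.rpow_nonneg hδ0.le _)
      have : (1:ℝ) ≤ t1 := ht1gt.le
      calc (1:ℝ) = 1 ^ 4 := by norm_num
      _ ≤ t1 ^ 4 := pow_le_pow_left₀ (by norm_num) this 4
    calc f t1 ≤ δ ^ (γ + 2) := a5
    _ ≤ δ ^ (2:ℝ) := a1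
    _ = δ ^ (2:ℕ) := a2
    _ ≤ c / 4 := by rw [← a4]; exact a3
    _ < c := by linarith
  -- large point with f < c
  set B : ℝ := (1/c) ^ ((1:ℝ)/(2-γ)) with hB
  have hBnn : 0 ≤ B := Real.rpow_nonneg (by positivity) _
  set t2 : ℝ := max (τs + 1) (B + 1) with ht2def
  have ht2τ : τs < t2 := lt_of_lt_of_le (by linarith) (le_max_left _ _)
  have ht2gt : 1 < t2 := by linarith
  have ht2B : B < t2 := lt_of_lt_of_le (by linarith) (le_max_right _ _)
  have hft2 : f t2 < c := by
    have ht2pos : (0:ℝ) < t2 := by linarith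
    have b1 : f t2 ≤ t2 ^ (γ + 2) / t2 ^ 4 := by
      rw [hf]
      apply div_le_div_of_nonneg_right ?_ (by positivity)
      exact Real.rpow_le_rpow (by linarith) (by linarith) (by linarith)
    have b2 : t2 ^ (γ + 2) / t2 ^ (4:ℕ) = t2 ^ (γ - 2) := by
      rw [← Real.rpow_natCast t2 4, ← Real.rpow_sub ht2pos]
      norm_num
      ring_nf
    have b3 : B ^ (2 - γ) = 1 / c := by
      rw [hB, ← Real.rpow_mul (by positivity : (0:ℝ) ≤ 1/c),
        one_div_mul_cancel (show (2:ℝ) - γ ≠ 0 by linarith), Real.rpow_one]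
    have b4 : B ^ (2 - γ) < t2 ^ (2 - γ) := Real.rpow_lt_rpow hBnn ht2B (by linarith)
    have b5 : 1 / c < t2 ^ (2 - γ) := b3 ▸ b4
    have hX : (0:ℝ) < t2 ^ (2 - γ) := Real.rpow_pos_of_pos ht2pos _
    have b6 : t2 ^ (γ - 2) < c := by
      rw [show γ - 2 = -(2 - γ) by ring, Real.rpow_neg ht2pos.le, ← one_div,
        div_lt_iff₀ hX]
      have hcc : c * (1/c) = 1 := mul_one_div_cancel hcpos.ne'
      nlinarith [mul_lt_mul_of_pos_left b5 hcpos]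
    calc f t2 ≤ t2 ^ (γ + 2) / t2 ^ 4 := b1
    _ = t2 ^ (γ - 2) := b2
    _ < c := b6
  -- intermediate value theorem: the two inflection points
  have hcont : ContinuousOn f (Ici 1) := by
    rw [hf]; exact continuousOn_f γ (by linarith)
  have hIccsub : Icc t1 τs ⊆ Ici (1:ℝ) := fun x hx => le_trans ht1gt.le hx.1
  obtain ⟨τ1, hτ1mem, hfτ1⟩ :=
    intermediate_value_Ioo ht1τ.le (hcont.mono hIccsub) ⟨hft1, hcM⟩
  have hIccsub2 : Icc τs t2 ⊆ Ici (1:ℝ) := fun x hx => le_trans hτs1.le hx.1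
  obtain ⟨τ2, hτ2mem, hfτ2⟩ :=
    intermediate_value_Ioo' ht2τ.le (hcont.mono hIccsub2) ⟨hft2, hcM⟩
  have hτ1gt : 1 < τ1 := lt_trans ht1gt hτ1mem.1
  have hτ1lt : τ1 < τs := hτ1mem.2
  have hτ2gt : τs < τ2 := hτ2mem.1
  have hτ2gt1 : 1 < τ2 := lt_trans hτs1 hτ2gt
  have hM : StrictMonoOn f (Icc 1 τs) := by
    rw [hf, hτs]; exact strictMonoOn_f γ hγ1 hγ2
  have hA : StrictAntiOn f (Ici τs) := by
    rw [hf, hτs]; exact strictAntiOn_f γ hγ1 hγ2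
  have hτ1Icc : τ1 ∈ Icc (1:ℝ) τs := ⟨hτ1gt.le, hτ1lt.le⟩
  have hτ2Ici : τ2 ∈ Ici τs := hτ2gt.le
  refine ⟨τ1, τ2, ⟨hτ1gt, hτ1lt, hτ2gt, ?_, ?_, ?_, ?_, ?_⟩, ?_⟩
  · rw [hsign τ1 hτ1gt, hfτ1, sub_self, mul_zero]
  · rw [hsign τ2 hτ2gt1, hfτ2, sub_self, mul_zero]
  · intro τ hτ
    apply hpos τ hτ.1
    have : f τ < f τ1 := hM ⟨hτ.1.le, by linarith [hτ.2]⟩ hτ1Icc hτ.2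
    linarith [hfτ1]
  · intro τ hτ
    have hτ1' : 1 < τ := by linarith
    apply hpos τ hτ1'
    have : f τ < f τ2 := hA hτ2Ici (show τ ∈ Ici τs from le_of_lt (lt_trans hτ2gt hτ)) hτ
    linarith [hfτ2]
  · intro τ hτ
    have hτgt1 : 1 < τ := lt_trans hτ1gt hτ.1
    apply hneg τ hτgt1
    rcases le_or_gt τ τs with hle | hlt
    · have : f τ1 < f τ := hM hτ1Icc ⟨hτgt1.le, hle⟩ hτ.1
      linarith [hfτ1]
    · have : f τ2 < f τ := hA (le_of_lt hlt) hτ2Ici hτ.2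
      linarith [hfτ2]
  · rintro σ1 σ2 ⟨h1, h2, h3, h4, h5, -, -, -⟩
    have hσ2gt1 : 1 < σ2 := lt_trans hτs1 h3
    have e1 : f σ1 = c := hzero σ1 h1 h4
    have e2 : f σ2 = c := hzero σ2 hσ2gt1 h5
    constructor
    · exact hM.injOn ⟨h1.le, h2.le⟩ hτ1Icc (by rw [e1, ← hfτ1])
    · exact hA.injOn h3.le hτ2Ici (by rw [e2, ← hfτ2])
end

section
/- If 1 ≤ γ < 1 + 10/37 and S > 4^{γ−2}, then for all τ > 4 one has γSτ³((3−γ)τ − 4) − 2(τ−1)^{γ+2} > 0 (positivity of the numerator ϑ₁(γ, S, τ) of ϖ for the van der Waals gas, used in the appendix to show ϖ(τ) > 0 beyond the second inflection point). -/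
theorem statement_15 (S γ : ℝ) (hγ1 : 1 ≤ γ) (hγ2 : γ < 1 + 10 / 37) (hS0 : 0 < S)
    (hS : 1 / (4 : ℝ) ^ (2 - γ) < S) :
    ∀ τ : ℝ, 4 < τ →
      0 < γ * S * τ ^ 3 * ((3 - γ) * τ - 4) - 2 * (τ - 1) ^ (γ + 2) := by
  intro τ hτ
  have hτ0 : (0:ℝ) < τ := by linarith
  have h1 : (0:ℝ) < τ - 1 := by linarith
  -- τ ^ (γ - 2) < S
  have h4pos : (0:ℝ) < (4:ℝ) ^ (2 - γ) := Real.rpow_pos_of_pos (by norm_num) _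
  have hτp : (0:ℝ) < τ ^ (2 - γ) := Real.rpow_pos_of_pos hτ0 _
  have e1 : (4:ℝ) ^ (2 - γ) < τ ^ (2 - γ) :=
    Real.rpow_lt_rpow (by norm_num) hτ (by linarith)
  have e2 : τ ^ (γ - 2) = (τ ^ (2 - γ))⁻¹ := by
    rw [← Real.rpow_neg hτ0.le]; ring_nf
  have hSτ : τ ^ (γ - 2) < S := by
    rw [e2]
    calc (τ ^ (2 - γ))⁻¹ < ((4:ℝ) ^ (2 - γ))⁻¹ := by
          exact inv_strictAnti₀ h4pos e1
      _ = 1 / (4:ℝ) ^ (2 - γ) := by rw [one_div]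
      _ < S := hS
  -- (τ-1)^(γ+2) < S * τ * (τ-1)^3
  have key1 : (τ - 1) ^ (γ + 2) = (τ - 1) ^ (γ - 1) * (τ - 1) ^ (3:ℕ) := by
    rw [← Real.rpow_natCast (τ - 1) 3, ← Real.rpow_add h1]
    norm_num
    ring_nf
  have h2 : (τ - 1) ^ (γ - 1) ≤ τ ^ (γ - 1) :=
    Real.rpow_le_rpow h1.le (by linarith) (by linarith)
  have h3 : τ ^ (γ - 1) = τ ^ (γ - 2) * τ := by
    have h := Real.rpow_add hτ0 (γ - 2) 1
    rw [Real.rpow_one] at h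
    rw [← h]; ring_nf
  have h5 : τ ^ (γ - 1) < S * τ := by
    rw [h3]; exact mul_lt_mul_of_pos_right hSτ hτ0
  have hcube : (0:ℝ) < (τ - 1) ^ (3:ℕ) := by positivity
  have h6 : (τ - 1) ^ (γ + 2) < S * τ * (τ - 1) ^ (3:ℕ) := by
    rw [key1]
    exact mul_lt_mul_of_pos_right (lt_of_le_of_lt h2 h5) hcube
  -- polynomial inequality: γ * τ^3 * ((3-γ)*τ - 4) ≥ 2 * τ * (τ-1)^3
  have hpoly : 2 * τ * (τ - 1) ^ (3:ℕ) ≤ γ * τ ^ 3 * ((3 - γ) * τ - 4) := by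
    nlinarith [sq_nonneg (τ - 4), sq_nonneg τ, mul_pos hτ0 hτ0,
      mul_nonneg (mul_nonneg (sub_nonneg.mpr hγ1) (by linarith : (0:ℝ) ≤ 1 + 10/37 - γ)) (by positivity : (0:ℝ) ≤ τ^3),
      mul_nonneg (sub_nonneg.mpr hγ1) (mul_nonneg (by positivity) (by linarith) : (0:ℝ) ≤ τ^2 * (τ - 4)),
      mul_nonneg (mul_nonneg (sub_nonneg.mpr hγ1) (by linarith : (0:ℝ) ≤ 1 + 10/37 - γ)) (mul_nonneg (by positivity) (by linarith) : (0:ℝ) ≤ τ^2 * (τ-4))]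
  have : 2 * (τ - 1) ^ (γ + 2) < S * (γ * τ ^ 3 * ((3 - γ) * τ - 4)) := by
    calc 2 * (τ - 1) ^ (γ + 2) < 2 * (S * τ * (τ - 1) ^ (3:ℕ)) := by linarith
      _ = S * (2 * τ * (τ - 1) ^ (3:ℕ)) := by ring
      _ ≤ S * (γ * τ ^ 3 * ((3 - γ) * τ - 4)) := by
          exact mul_le_mul_of_nonneg_left hpoly hS0.le
  nlinarith [this]
end
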